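/- arXiv:2102.05698 — 10 statements merged into one kernel-verified Lean document; each statement's English description precedes it below -/
import Mathlib

section
/- Let {u_k} and {c_k} be sequences of positive reals such that there exist constants A, A' > 0 with c_k ≤ A·c_l and u_k ≤ A'·u_l for all k ≥ l. If the series ∑_k c_k·u_k converges, then c_k·k·u_k → 0 as k → ∞. -/
theorem stmt0 (c u : ℕ → ℝ) (A A' : ℝ) (hA : 0 < A) (hA' : 0 < A')
    (hc : ∀ k, 0 < c k) (hu : ∀ k, 0 < u k)
    (hcm : ∀ k l, l ≤ k → c k ≤ A * c l)
    (hum : ∀ k l, l ≤ k → u k ≤ A' * u l)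
    (hsum : Summable (fun k => c k * u k)) :
    Filter.Tendsto (fun k => c k * (k : ℝ) * u k) Filter.atTop (nhds 0) := by
  set f : ℕ → ℝ := fun k => c k * u k with hf
  obtain ⟨L, hL⟩ := hsum
  have hS : Filter.Tendsto (fun n => ∑ l ∈ Finset.range n, f l) Filter.atTop (nhds L) :=
    hL.tendsto_sum_nat
  have hhalf : Filter.Tendsto (fun n : ℕ => n / 2) Filter.atTop Filter.atTop :=
    Filter.tendsto_atTop_atTop.2 fun b => ⟨2 * b, fun a ha => by omega⟩
  have hdiff : Filter.Tendsto
      (fun n => 2 * A * A' *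
        ((∑ l ∈ Finset.range n, f l) - ∑ l ∈ Finset.range (n / 2), f l))
      Filter.atTop (nhds 0) := by
    have := (hS.sub (hS.comp hhalf)).const_mul (2 * A * A')
    simpa using this
  apply squeeze_zero
    (fun n => mul_nonneg (mul_nonneg (hc n).le (Nat.cast_nonneg n)) (hu n).le) _ hdiff
  intro n
  have key : ∀ l ∈ Finset.Ico (n / 2) n, f n ≤ A * A' * f l := by
    intro l hl
    simp only [Finset.mem_Ico] at hl
    have h1 := hcm n l (le_of_lt hl.2)
    have h2 := hum n l (le_of_lt hl.2)
    have hmul : c n * u n ≤ (A * c l) * (A' * u l) :=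
      mul_le_mul h1 h2 (hu n).le (mul_pos hA (hc l)).le
    calc f n = c n * u n := rfl
      _ ≤ (A * c l) * (A' * u l) := hmul
      _ = A * A' * f l := by simp only [hf]; ring
  have hsumIco : (↑(n - n / 2) : ℝ) * f n ≤ A * A' * ∑ l ∈ Finset.Ico (n / 2) n, f l := by
    calc (↑(n - n / 2) : ℝ) * f n = ∑ _l ∈ Finset.Ico (n / 2) n, f n := by
          rw [Finset.sum_const, Nat.card_Ico, nsmul_eq_mul]
      _ ≤ ∑ l ∈ Finset.Ico (n / 2) n, A * A' * f l := Finset.sum_le_sum key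
      _ = A * A' * ∑ l ∈ Finset.Ico (n / 2) n, f l := by rw [Finset.mul_sum]
  have hIco : ∑ l ∈ Finset.Ico (n / 2) n, f l
      = (∑ l ∈ Finset.range n, f l) - ∑ l ∈ Finset.range (n / 2), f l := by
    rw [Finset.sum_Ico_eq_sub _ (Nat.div_le_self n 2)]
  have hn2 : (n : ℝ) ≤ 2 * (↑(n - n / 2) : ℝ) := by
    have : n ≤ 2 * (n - n / 2) := by omega
    exact_mod_cast this
  have hfn : 0 < f n := mul_pos (hc n) (hu n)
  calc c n * (n : ℝ) * u n = (n : ℝ) * f n := by simp only [hf]; ring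
    _ ≤ 2 * (↑(n - n / 2) : ℝ) * f n := mul_le_mul_of_nonneg_right hn2 hfn.le
    _ = 2 * ((↑(n - n / 2) : ℝ) * f n) := by ring
    _ ≤ 2 * (A * A' * ∑ l ∈ Finset.Ico (n / 2) n, f l) :=
        mul_le_mul_of_nonneg_left hsumIco (by norm_num)
    _ = 2 * A * A' *
        ((∑ l ∈ Finset.range n, f l) - ∑ l ∈ Finset.range (n / 2), f l) := by
        rw [hIco]; ring
end

section
/- Let {c_k} be a sequence of positive reals satisfying c_k ≤ A·c_l for k ≥ l and ∑_{k=l}^{2l-1} |c_k − c_{k+1}| ≤ B·c_l for all l, with absolute constants A, B > 0. Then for any real γ and integers L > l ≥ 1, ∑_{k=l}^{L} |c_k − c_{k+1}|·k^γ ≤ C(γ, A, B)·(c_l·l^γ + ∑_{k=l}^{L} c_k·k^{γ−1}) for some constant C depending only on γ, A, B. -/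
lemma aux_up (δ : ℝ) (l k : ℕ) (hl : 1 ≤ l) (hlk : l ≤ k) (hk : k ≤ 2 * l) :
    (k : ℝ) ^ δ ≤ max 1 (2 ^ δ) * (l : ℝ) ^ δ := by
  have hl0 : (0:ℝ) < (l:ℝ) := by exact_mod_cast hl
  have hk0 : (0:ℝ) < (k:ℝ) := lt_of_lt_of_le hl0 (by exact_mod_cast hlk)
  rcases le_or_gt 0 δ with hδ | hδ
  · have h1 : (k:ℝ) ^ δ ≤ (2 * (l:ℝ)) ^ δ := by
      apply Real.rpow_le_rpow hk0.le _ hδ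
      exact_mod_cast hk
    have h2 : (2 * (l:ℝ)) ^ δ = 2 ^ δ * (l:ℝ) ^ δ :=
      Real.mul_rpow (by norm_num) hl0.le
    calc (k:ℝ) ^ δ ≤ 2 ^ δ * (l:ℝ) ^ δ := by rw [← h2]; exact h1
    _ ≤ max 1 (2 ^ δ) * (l:ℝ) ^ δ := by
        apply mul_le_mul_of_nonneg_right (le_max_right _ _) (Real.rpow_nonneg hl0.le δ)
  · have h1 : (k:ℝ) ^ δ ≤ (l:ℝ) ^ δ :=
      Real.rpow_le_rpow_of_nonpos hl0 (by exact_mod_cast hlk) hδ.le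
    calc (k:ℝ) ^ δ ≤ (l:ℝ) ^ δ := h1
    _ ≤ max 1 (2 ^ δ) * (l:ℝ) ^ δ := by
        nth_rewrite 1 [← one_mul ((l:ℝ) ^ δ)]
        exact mul_le_mul_of_nonneg_right (le_max_left _ _) (Real.rpow_nonneg hl0.le δ)

lemma aux_low (δ : ℝ) (l k : ℕ) (hl : 1 ≤ l) (hlk : l ≤ k) (hk : k ≤ 2 * l) :
    min 1 (2 ^ δ) * (l : ℝ) ^ δ ≤ (k : ℝ) ^ δ := by
  have hl0 : (0:ℝ) < (l:ℝ) := by exact_mod_cast hl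
  have hk0 : (0:ℝ) < (k:ℝ) := lt_of_lt_of_le hl0 (by exact_mod_cast hlk)
  rcases le_or_gt 0 δ with hδ | hδ
  · calc min 1 (2 ^ δ) * (l:ℝ) ^ δ ≤ 1 * (l:ℝ) ^ δ :=
        mul_le_mul_of_nonneg_right (min_le_left _ _) (Real.rpow_nonneg hl0.le δ)
    _ = (l:ℝ) ^ δ := one_mul _
    _ ≤ (k:ℝ) ^ δ := Real.rpow_le_rpow hl0.le (by exact_mod_cast hlk) hδ
  · have h2 : (2 * (l:ℝ)) ^ δ = 2 ^ δ * (l:ℝ) ^ δ :=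
      Real.mul_rpow (by norm_num) hl0.le
    calc min 1 (2 ^ δ) * (l:ℝ) ^ δ ≤ 2 ^ δ * (l:ℝ) ^ δ :=
        mul_le_mul_of_nonneg_right (min_le_right _ _) (Real.rpow_nonneg hl0.le δ)
    _ = (2 * (l:ℝ)) ^ δ := h2.symm
    _ ≤ (k:ℝ) ^ δ := Real.rpow_le_rpow_of_nonpos hk0 (by exact_mod_cast hk) hδ.le

theorem stmt1 (γ A B : ℝ) (hA : 0 < A) (hB : 0 < B) :
    ∃ C > 0, ∀ c : ℕ → ℝ,
      (∀ k, 0 < c k) →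
      (∀ k l, l ≤ k → c k ≤ A * c l) →
      (∀ l : ℕ, 1 ≤ l → ∑ k ∈ Finset.Icc l (2 * l - 1), |c k - c (k + 1)| ≤ B * c l) →
      ∀ l L : ℕ, 1 ≤ l → l < L →
        ∑ k ∈ Finset.Icc l L, |c k - c (k + 1)| * (k : ℝ) ^ γ ≤
          C * (c l * (l : ℝ) ^ γ + ∑ k ∈ Finset.Icc l L, c k * (k : ℝ) ^ (γ - 1)) := by
  set M : ℝ := max 1 (2 ^ γ) with hM
  set m : ℝ := min 1 (2 ^ (γ - 1)) with hm
  have hM0 : 0 < M := lt_of_lt_of_le one_pos (le_max_left _ _)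
  have hm0 : 0 < m := lt_min one_pos (Real.rpow_pos_of_pos two_pos _)
  set K : ℝ := 2 ^ γ * A / m with hK
  have hK0 : 0 < K := div_pos (mul_pos (Real.rpow_pos_of_pos two_pos _) hA) hm0
  set C1 : ℝ := M * B with hC1
  have hC10 : 0 < C1 := mul_pos hM0 hB
  set C2 : ℝ := max C1 (C1 * K) with hC2
  have hC20 : 0 < C2 := lt_of_lt_of_le hC10 (le_max_left _ _)
  refine ⟨C2, hC20, ?_⟩
  intro c hc hmon hGM
  have hT : ∀ (s : Finset ℕ), 0 ≤ ∑ k ∈ s, c k * (k : ℝ) ^ (γ - 1) := by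
    intro s
    apply Finset.sum_nonneg
    intro k _
    exact mul_nonneg (hc k).le (Real.rpow_nonneg (Nat.cast_nonneg k) _)
  -- base estimate: if L ≤ 2l - 1
  have base : ∀ l L : ℕ, 1 ≤ l → L ≤ 2 * l - 1 →
      ∑ k ∈ Finset.Icc l L, |c k - c (k + 1)| * (k : ℝ) ^ γ ≤ C1 * (c l * (l : ℝ) ^ γ) := by
    intro l L hl hL
    have hlγ : 0 ≤ (l : ℝ) ^ γ := Real.rpow_nonneg (Nat.cast_nonneg l) _
    have step1 : ∑ k ∈ Finset.Icc l L, |c k - c (k + 1)| * (k : ℝ) ^ γ ≤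
        ∑ k ∈ Finset.Icc l L, |c k - c (k + 1)| * (M * (l : ℝ) ^ γ) := by
      apply Finset.sum_le_sum
      intro k hk
      rw [Finset.mem_Icc] at hk
      exact mul_le_mul_of_nonneg_left (aux_up γ l k hl hk.1 (by omega)) (abs_nonneg _)
    have step2 : ∑ k ∈ Finset.Icc l L, |c k - c (k + 1)| ≤
        ∑ k ∈ Finset.Icc l (2 * l - 1), |c k - c (k + 1)| := by
      apply Finset.sum_le_sum_of_subset_of_nonneg
      · exact Finset.Icc_subset_Icc_right hL
      · intro k _ _; exact abs_nonneg _
    calc ∑ k ∈ Finset.Icc l L, |c k - c (k + 1)| * (k : ℝ) ^ γ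
        ≤ ∑ k ∈ Finset.Icc l L, |c k - c (k + 1)| * (M * (l : ℝ) ^ γ) := step1
      _ = (∑ k ∈ Finset.Icc l L, |c k - c (k + 1)|) * (M * (l : ℝ) ^ γ) := by
          rw [Finset.sum_mul]
      _ ≤ (∑ k ∈ Finset.Icc l (2 * l - 1), |c k - c (k + 1)|) * (M * (l : ℝ) ^ γ) :=
          mul_le_mul_of_nonneg_right step2 (mul_nonneg hM0.le hlγ)
      _ ≤ (B * c l) * (M * (l : ℝ) ^ γ) :=
          mul_le_mul_of_nonneg_right (hGM l hl) (mul_nonneg hM0.le hlγ)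
      _ = C1 * (c l * (l : ℝ) ^ γ) := by rw [hC1]; ring
  -- key estimate: c (2l) * (2l)^γ ≤ K * T(l, 2l-1)
  have key2 : ∀ l : ℕ, 1 ≤ l →
      c (2 * l) * ((2 * l : ℕ) : ℝ) ^ γ ≤
        K * ∑ k ∈ Finset.Icc l (2 * l - 1), c k * (k : ℝ) ^ (γ - 1) := by
    intro l hl
    have hl0 : (0:ℝ) < (l:ℝ) := by exact_mod_cast hl
    have hlγ1 : 0 ≤ (l : ℝ) ^ (γ - 1) := Real.rpow_nonneg hl0.le _
    have hlow : ∀ k ∈ Finset.Icc l (2 * l - 1),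
        (c (2 * l) / A) * (m * (l : ℝ) ^ (γ - 1)) ≤ c k * (k : ℝ) ^ (γ - 1) := by
      intro k hk
      rw [Finset.mem_Icc] at hk
      have h1 : c (2 * l) / A ≤ c k := by
        rw [div_le_iff₀ hA]
        calc c (2 * l) ≤ A * c k := hmon (2 * l) k (by omega)
        _ = c k * A := mul_comm _ _
      have h2 : m * (l : ℝ) ^ (γ - 1) ≤ (k : ℝ) ^ (γ - 1) :=
        aux_low (γ - 1) l k hl hk.1 (by omega)
      exact mul_le_mul h1 h2 (mul_nonneg hm0.le hlγ1) (hc k).le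
    have hcard : (Finset.Icc l (2 * l - 1)).card = l := by
      rw [Nat.card_Icc]; omega
    have hsum : (l : ℝ) * ((c (2 * l) / A) * (m * (l : ℝ) ^ (γ - 1))) ≤
        ∑ k ∈ Finset.Icc l (2 * l - 1), c k * (k : ℝ) ^ (γ - 1) := by
      calc (l : ℝ) * ((c (2 * l) / A) * (m * (l : ℝ) ^ (γ - 1)))
          = ∑ _k ∈ Finset.Icc l (2 * l - 1), (c (2 * l) / A) * (m * (l : ℝ) ^ (γ - 1)) := by
            rw [Finset.sum_const, hcard, nsmul_eq_mul]
        _ ≤ _ := Finset.sum_le_sum hlow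
    have hlsplit : (l : ℝ) ^ γ = (l : ℝ) * (l : ℝ) ^ (γ - 1) := by
      have h := Real.rpow_add hl0 1 (γ - 1)
      rw [Real.rpow_one, show (1:ℝ) + (γ - 1) = γ by ring] at h
      exact h
    have heq : c (2 * l) * ((2 * l : ℕ) : ℝ) ^ γ =
        K * ((l : ℝ) * ((c (2 * l) / A) * (m * (l : ℝ) ^ (γ - 1)))) := by
      have h2l : ((2 * l : ℕ) : ℝ) ^ γ = 2 ^ γ * (l : ℝ) ^ γ := by
        have : ((2 * l : ℕ) : ℝ) = 2 * (l : ℝ) := by push_cast; ring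
        rw [this]
        exact Real.mul_rpow (by norm_num) hl0.le
      rw [h2l, hlsplit, hK]
      field_simp
    rw [heq]
    exact mul_le_mul_of_nonneg_left hsum hK0.le
  -- main induction
  have key : ∀ n : ℕ, ∀ l L : ℕ, 1 ≤ l → l ≤ L → L - l ≤ n →
      ∑ k ∈ Finset.Icc l L, |c k - c (k + 1)| * (k : ℝ) ^ γ ≤
        C1 * (c l * (l : ℝ) ^ γ) + C2 * ∑ k ∈ Finset.Icc l L, c k * (k : ℝ) ^ (γ - 1) := by
    intro n
    induction n with
    | zero =>
      intro l L hl hlL hn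
      have hEq : l = L := by omega
      subst hEq
      calc ∑ k ∈ Finset.Icc l l, |c k - c (k + 1)| * (k : ℝ) ^ γ
          ≤ C1 * (c l * (l : ℝ) ^ γ) := base l l hl (by omega)
        _ ≤ _ := le_add_of_nonneg_right (mul_nonneg hC20.le (hT _))
    | succ n ih =>
      intro l L hl hlL hn
      by_cases hcase : L ≤ 2 * l - 1
      · calc ∑ k ∈ Finset.Icc l L, |c k - c (k + 1)| * (k : ℝ) ^ γ
            ≤ C1 * (c l * (l : ℝ) ^ γ) := base l L hl hcase
          _ ≤ _ := le_add_of_nonneg_right (mul_nonneg hC20.le (hT _))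
      · have h2l : 2 * l ≤ L := by omega
        have hsplit : ∀ f : ℕ → ℝ,
            ∑ k ∈ Finset.Icc l L, f k =
              ∑ k ∈ Finset.Icc l (2 * l - 1), f k + ∑ k ∈ Finset.Icc (2 * l) L, f k := by
          intro f
          rw [← Finset.sum_union]
          · congr 1
            ext k
            simp only [Finset.mem_union, Finset.mem_Icc]
            omega
          · rw [Finset.disjoint_left]
            intro k hk hk'
            rw [Finset.mem_Icc] at hk hk'
            omega
        have hih := ih (2 * l) L (by omega) h2l (by omega)
        have hstep2 : c (2 * l) * ((2 * l : ℕ) : ℝ) ^ γ ≤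
            K * ∑ k ∈ Finset.Icc l (2 * l - 1), c k * (k : ℝ) ^ (γ - 1) := key2 l hl
        have hC1K : C1 * K ≤ C2 := le_max_right _ _
        calc ∑ k ∈ Finset.Icc l L, |c k - c (k + 1)| * (k : ℝ) ^ γ
            = ∑ k ∈ Finset.Icc l (2 * l - 1), |c k - c (k + 1)| * (k : ℝ) ^ γ
              + ∑ k ∈ Finset.Icc (2 * l) L, |c k - c (k + 1)| * (k : ℝ) ^ γ := hsplit _
          _ ≤ C1 * (c l * (l : ℝ) ^ γ)
              + (C1 * (c (2 * l) * ((2 * l : ℕ) : ℝ) ^ γ)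
                 + C2 * ∑ k ∈ Finset.Icc (2 * l) L, c k * (k : ℝ) ^ (γ - 1)) :=
            add_le_add (base l (2 * l - 1) hl le_rfl) hih
          _ ≤ C1 * (c l * (l : ℝ) ^ γ)
              + ((C1 * K) * ∑ k ∈ Finset.Icc l (2 * l - 1), c k * (k : ℝ) ^ (γ - 1)
                 + C2 * ∑ k ∈ Finset.Icc (2 * l) L, c k * (k : ℝ) ^ (γ - 1)) := by
            apply add_le_add_right
            apply add_le_add_left
            calc C1 * (c (2 * l) * ((2 * l : ℕ) : ℝ) ^ γ)
                ≤ C1 * (K * ∑ k ∈ Finset.Icc l (2 * l - 1), c k * (k : ℝ) ^ (γ - 1)) :=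
                  mul_le_mul_of_nonneg_left hstep2 hC10.le
              _ = (C1 * K) * ∑ k ∈ Finset.Icc l (2 * l - 1), c k * (k : ℝ) ^ (γ - 1) := by
                  ring
          _ ≤ C1 * (c l * (l : ℝ) ^ γ)
              + (C2 * ∑ k ∈ Finset.Icc l (2 * l - 1), c k * (k : ℝ) ^ (γ - 1)
                 + C2 * ∑ k ∈ Finset.Icc (2 * l) L, c k * (k : ℝ) ^ (γ - 1)) := by
            apply add_le_add_right
            apply add_le_add_left
            exact mul_le_mul_of_nonneg_right hC1K (hT _)
          _ = C1 * (c l * (l : ℝ) ^ γ) + C2 * ∑ k ∈ Finset.Icc l L, c k * (k : ℝ) ^ (γ - 1) := by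
            rw [hsplit (fun k => c k * (k : ℝ) ^ (γ - 1))]
            ring
  intro l L hl hlL
  have h := key (L - l) l L hl hlL.le le_rfl
  have hX : 0 ≤ c l * (l : ℝ) ^ γ :=
    mul_nonneg (hc l).le (Real.rpow_nonneg (Nat.cast_nonneg l) _)
  calc ∑ k ∈ Finset.Icc l L, |c k - c (k + 1)| * (k : ℝ) ^ γ
      ≤ C1 * (c l * (l : ℝ) ^ γ) + C2 * ∑ k ∈ Finset.Icc l L, c k * (k : ℝ) ^ (γ - 1) := h
    _ ≤ C2 * (c l * (l : ℝ) ^ γ) + C2 * ∑ k ∈ Finset.Icc l L, c k * (k : ℝ) ^ (γ - 1) :=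
        add_le_add_left (mul_le_mul_of_nonneg_right (le_max_left _ _) hX) _
    _ = C2 * (c l * (l : ℝ) ^ γ + ∑ k ∈ Finset.Icc l L, c k * (k : ℝ) ^ (γ - 1)) := by ring
end

section
/- For any real a > 0 and any u > 0, the absolute value of the integral ∫_0^u t^a·sin t dt is at most 2·u^a. -/
open intervalIntegral Set Real

theorem stmt2 (a u : ℝ) (ha : 0 < a) (hu : 0 < u) :
    |∫ t in (0:ℝ)..u, t ^ a * Real.sin t| ≤ 2 * u ^ a := by
  have hcont_rpow : Continuous fun t : ℝ => t ^ a :=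
    continuous_iff_continuousAt.mpr fun x => Real.continuousAt_rpow_const x a (Or.inr ha.le)
  have h1 : IntervalIntegrable (fun t => t ^ a * Real.sin t) MeasureTheory.volume 0 u :=
    (hcont_rpow.mul Real.continuous_sin).intervalIntegrable 0 u
  have h2 : IntervalIntegrable (fun t => t ^ (a - 1) * Real.cos t) MeasureTheory.volume 0 u :=
    (intervalIntegral.intervalIntegrable_rpow' (by linarith : (-1:ℝ) < a - 1)).mul_continuousOn
      Real.continuous_cos.continuousOn
  -- FTC for F t = -(t^a * cos t)
  have key : ∫ t in (0:ℝ)..u,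
      (t ^ a * Real.sin t - a * (t ^ (a - 1) * Real.cos t)) = -(u ^ a * Real.cos u) := by
    have hF : ∀ x ∈ Ioo (0:ℝ) u,
        HasDerivAt (fun t : ℝ => -(t ^ a * Real.cos t))
          (x ^ a * Real.sin x - a * (x ^ (a - 1) * Real.cos x)) x := by
      intro x hx
      have hd : HasDerivAt (fun t : ℝ => t ^ a * Real.cos t)
          (a * x ^ (a - 1) * Real.cos x + x ^ a * (-Real.sin x)) x :=
        (Real.hasDerivAt_rpow_const (Or.inl hx.1.ne')).mul (Real.hasDerivAt_cos x)
      have : HasDerivAt (fun t : ℝ => -(t ^ a * Real.cos t)) _ x := hd.neg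
      convert this using 1
      ring
    have hcont : ContinuousOn (fun t : ℝ => -(t ^ a * Real.cos t)) (Icc 0 u) :=
      ((hcont_rpow.mul Real.continuous_cos).neg).continuousOn
    have hint : IntervalIntegrable
        (fun t => t ^ a * Real.sin t - a * (t ^ (a - 1) * Real.cos t))
        MeasureTheory.volume 0 u := h1.sub (h2.const_mul a)
    have := intervalIntegral.integral_eq_sub_of_hasDerivAt_of_le hu.le hcont hF hint
    rw [this, Real.zero_rpow ha.ne']
    ring
  have hsplit : ∫ t in (0:ℝ)..u,
      (t ^ a * Real.sin t - a * (t ^ (a - 1) * Real.cos t))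
      = (∫ t in (0:ℝ)..u, t ^ a * Real.sin t)
        - a * ∫ t in (0:ℝ)..u, t ^ (a - 1) * Real.cos t := by
    rw [intervalIntegral.integral_sub h1 (h2.const_mul a),
      intervalIntegral.integral_const_mul]
  have heq : (∫ t in (0:ℝ)..u, t ^ a * Real.sin t)
      = -(u ^ a * Real.cos u) + a * ∫ t in (0:ℝ)..u, t ^ (a - 1) * Real.cos t := by
    rw [hsplit] at key; linarith
  -- bound the cos integral
  have hbnd : |∫ t in (0:ℝ)..u, t ^ (a - 1) * Real.cos t| ≤ u ^ a / a := by
    have h3 : IntervalIntegrable (fun t => |t ^ (a - 1) * Real.cos t|)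
        MeasureTheory.volume 0 u := h2.abs
    have h4 : IntervalIntegrable (fun t : ℝ => t ^ (a - 1)) MeasureTheory.volume 0 u :=
      intervalIntegral.intervalIntegrable_rpow' (by linarith)
    have hmono : ∫ t in (0:ℝ)..u, |t ^ (a - 1) * Real.cos t|
        ≤ ∫ t in (0:ℝ)..u, t ^ (a - 1) := by
      apply intervalIntegral.integral_mono_on hu.le h3 h4
      intro x hx
      rw [abs_mul, abs_of_nonneg (Real.rpow_nonneg hx.1 _)]
      calc x ^ (a - 1) * |Real.cos x| ≤ x ^ (a - 1) * 1 :=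
            mul_le_mul_of_nonneg_left (Real.abs_cos_le_one x) (Real.rpow_nonneg hx.1 _)
        _ = x ^ (a - 1) := mul_one _
    have hval : ∫ t in (0:ℝ)..u, t ^ (a - 1) = u ^ a / a := by
      rw [integral_rpow (Or.inl (by linarith))]
      rw [sub_add_cancel, Real.zero_rpow ha.ne']
      ring_nf
    calc |∫ t in (0:ℝ)..u, t ^ (a - 1) * Real.cos t|
        ≤ ∫ t in (0:ℝ)..u, |t ^ (a - 1) * Real.cos t| :=
          intervalIntegral.abs_integral_le_integral_abs hu.le
      _ ≤ u ^ a / a := hval ▸ hmono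
  rw [heq]
  have h5 : |(-(u ^ a * Real.cos u))| ≤ u ^ a := by
    rw [abs_neg, abs_mul, abs_of_nonneg (Real.rpow_nonneg hu.le _)]
    calc u ^ a * |Real.cos u| ≤ u ^ a * 1 :=
          mul_le_mul_of_nonneg_left (Real.abs_cos_le_one u) (Real.rpow_nonneg hu.le _)
      _ = u ^ a := mul_one _
  calc |(-(u ^ a * Real.cos u)) + a * ∫ t in (0:ℝ)..u, t ^ (a - 1) * Real.cos t|
      ≤ |(-(u ^ a * Real.cos u))| + |a * ∫ t in (0:ℝ)..u, t ^ (a - 1) * Real.cos t| :=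
        abs_add_le _ _
    _ ≤ u ^ a + a * (u ^ a / a) := by
        refine add_le_add h5 ?_
        rw [abs_mul, abs_of_nonneg ha.le]
        exact mul_le_mul_of_nonneg_left hbnd ha.le
    _ = 2 * u ^ a := by field_simp; ring
end

section
/- Let α ∈ (0,1) and x ∈ (0, 1/10). Then there is a constant C depending only on α such that for every k ≥ 1, |∑_{n=1}^{k} sin(n^α · x)| ≤ C · k^{1−α} · x^{−1}. -/
open Finset

private lemma aux_rpow_anti (α : ℝ) (hα1 : α < 1) {a b : ℝ} (ha : 0 < a) (hab : a ≤ b) :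
    b ^ (α - 1) ≤ a ^ (α - 1) := by
  have hb : 0 < b := lt_of_lt_of_le ha hab
  rw [show α - 1 = -(1 - α) by ring, Real.rpow_neg ha.le, Real.rpow_neg hb.le]
  exact inv_anti₀ (Real.rpow_pos_of_pos ha _)
    (Real.rpow_le_rpow ha.le hab (by linarith))

private lemma aux_diff (α : ℝ) (hα0 : 0 < α) (hα1 : α < 1) (n : ℕ) (hn : 1 ≤ n) :
    α * ((n : ℝ) + 1) ^ (α - 1) ≤ ((n : ℝ) + 1) ^ α - (n : ℝ) ^ α ∧
      ((n : ℝ) + 1) ^ α - (n : ℝ) ^ α ≤ α := by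
  have hn1 : (1 : ℝ) ≤ (n : ℝ) := by exact_mod_cast hn
  obtain ⟨c, hc, hceq⟩ := exists_hasDerivAt_eq_slope (fun t => t ^ α) (fun t => α * t ^ (α - 1))
    (show (n : ℝ) < (n : ℝ) + 1 by linarith)
    (fun t ht => (Real.continuousAt_rpow_const t α
      (Or.inl (by rintro rfl; simp at ht; linarith [ht.1]))).continuousWithinAt)
    (fun t ht => Real.hasDerivAt_rpow_const (Or.inl (by rintro rfl; simp at ht; linarith [ht.1])))
  rw [show ((n : ℝ) + 1) - n = 1 by ring, div_one] at hceq
  have hc1 : (1 : ℝ) ≤ c := by linarith [hc.1]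
  have hc0 : (0 : ℝ) < c := by linarith
  constructor
  · rw [← hceq]
    have := aux_rpow_anti α hα1 hc0 (le_of_lt hc.2)
    nlinarith
  · rw [← hceq]
    have : c ^ (α - 1) ≤ 1 := Real.rpow_le_one_of_one_le_of_nonpos hc1 (by linarith)
    nlinarith

private lemma aux_anti (α : ℝ) (hα0 : 0 < α) (hα1 : α < 1) (n : ℕ) :
    ((n : ℝ) + 2) ^ α - ((n : ℝ) + 1) ^ α ≤ ((n : ℝ) + 1) ^ α - (n : ℝ) ^ α := by
  have h := (Real.concaveOn_rpow hα0.le hα1.le).2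
    (Set.mem_Ici.mpr (Nat.cast_nonneg n))
    (Set.mem_Ici.mpr (show (0:ℝ) ≤ (n : ℝ) + 2 by positivity))
    (show (0:ℝ) ≤ 1/2 by norm_num) (show (0:ℝ) ≤ 1/2 by norm_num)
    (show (1/2 : ℝ) + 1/2 = 1 by norm_num)
  simp only [smul_eq_mul] at h
  rw [show (1/2 : ℝ) * (n : ℝ) + (1/2) * ((n : ℝ) + 2) = (n : ℝ) + 1 by ring] at h
  linarith

private lemma aux_tele (g : ℕ → ℝ) (m : ℕ) :
    ∑ n ∈ Finset.Icc 1 m, (g (n + 1) - g n) = g (m + 1) - g 1 := by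
  induction m with
  | zero => simp
  | succ m ih => rw [Finset.sum_Icc_succ_top (by omega), ih]; ring

private lemma aux_abel (c E : ℕ → ℂ) (m : ℕ) :
    ∑ n ∈ Finset.Icc 1 (m + 1), c n * (E (n + 1) - E n)
      = c (m + 1) * E (m + 2) - c 1 * E 1
        - ∑ n ∈ Finset.Icc 1 m, (c (n + 1) - c n) * E (n + 1) := by
  induction m with
  | zero => simp [Finset.Icc_self]; ring
  | succ m ih =>
      rw [Finset.sum_Icc_succ_top (by omega), ih, Finset.sum_Icc_succ_top (by omega)]
      ring

private lemma aux_key (δ : ℝ) (hδ0 : 0 < δ) (hδ1 : δ < 1) :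
    (-(1/2 : ℂ) - (↑(Real.cos (δ/2) / Real.sin (δ/2)) * Complex.I) / 2)
        * (Complex.exp (↑δ * Complex.I) - 1) = 1 := by
  have hs : 0 < Real.sin (δ/2) :=
    Real.sin_pos_of_pos_of_lt_pi (by linarith) (by linarith [Real.pi_gt_three])
  have h1 := Real.cos_two_mul (δ/2)
  rw [show 2 * (δ/2) = δ by ring] at h1
  have h2 := Real.sin_two_mul (δ/2)
  rw [show 2 * (δ/2) = δ by ring] at h2
  rw [Complex.exp_mul_I, ← Complex.ofReal_cos, ← Complex.ofReal_sin, h1, h2]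
  have hpy : (Real.sin (δ/2) : ℂ) ^ 2 + (Real.cos (δ/2) : ℂ) ^ 2 = 1 := by
    exact_mod_cast congrArg (Complex.ofReal) (Real.sin_sq_add_cos_sq (δ/2))
  have hs' : (Real.sin (δ/2) : ℂ) ≠ 0 := by exact_mod_cast ne_of_gt hs
  generalize (Real.sin (δ/2) : ℝ) = S at *
  generalize (Real.cos (δ/2) : ℝ) = C at *
  push_cast
  field_simp
  linear_combination (-2*(C:ℂ)*Complex.I) * hpy + (-2*(S:ℂ)*(C:ℂ)^2) * Complex.I_sq

theorem stmt4 (α : ℝ) (hα : α ∈ Set.Ioo (0:ℝ) 1) :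
    ∃ C > 0, ∀ x ∈ Set.Ioo (0:ℝ) (1/10), ∀ k : ℕ, 1 ≤ k →
      |∑ n ∈ Finset.Icc 1 k, Real.sin ((n : ℝ) ^ α * x)| ≤ C * (k : ℝ) ^ (1 - α) * x⁻¹ := by
  obtain ⟨hα0, hα1⟩ := hα
  refine ⟨1 + 4/α, by positivity, ?_⟩
  rintro x ⟨hx0, hx1⟩ k hk
  have hx10 : (10 : ℝ) ≤ x⁻¹ := by
    rw [show (10:ℝ) = (1/10 : ℝ)⁻¹ by norm_num]
    exact inv_anti₀ hx0 hx1.le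
  have h4α : (0:ℝ) < 4/α := by positivity
  obtain ⟨θ, hθdef⟩ : ∃ θ : ℕ → ℝ, ∀ n : ℕ, θ n = (n : ℝ) ^ α * x := ⟨_, fun _ => rfl⟩
  obtain ⟨d, hddef⟩ : ∃ d : ℕ → ℝ, ∀ n : ℕ, d n = θ (n + 1) - θ n := ⟨_, fun _ => rfl⟩
  have hdform : ∀ n : ℕ, d n = (((n:ℝ) + 1) ^ α - (n:ℝ) ^ α) * x := by
    intro n; rw [hddef, hθdef, hθdef]; push_cast; ring
  have hd_lower : ∀ n : ℕ, 1 ≤ n → α * ((n:ℝ) + 1) ^ (α - 1) * x ≤ d n := by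
    intro n hn; rw [hdform]
    exact mul_le_mul_of_nonneg_right (aux_diff α hα0 hα1 n hn).1 hx0.le
  have hd_pos : ∀ n : ℕ, 1 ≤ n → 0 < d n := by
    intro n hn
    refine lt_of_lt_of_le ?_ (hd_lower n hn)
    positivity
  have hd_le : ∀ n : ℕ, 1 ≤ n → d n ≤ x := by
    intro n hn; rw [hdform]
    have := (aux_diff α hα0 hα1 n hn).2
    nlinarith
  have hd_anti : ∀ n : ℕ, d (n + 1) ≤ d n := by
    intro n
    rw [hdform, hdform]
    have h := aux_anti α hα0 hα1 n
    push_cast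
    rw [show ((n:ℝ) + 1 + 1) = (n:ℝ) + 2 by ring]
    nlinarith
  obtain ⟨r, hrdef⟩ : ∃ r : ℕ → ℝ, ∀ n : ℕ, r n = Real.cos (d n / 2) / Real.sin (d n / 2) :=
    ⟨_, fun _ => rfl⟩
  obtain ⟨c, hcdef⟩ : ∃ c : ℕ → ℂ, ∀ n : ℕ, c n = -(1/2 : ℂ) - (↑(r n) * Complex.I) / 2 :=
    ⟨_, fun _ => rfl⟩
  obtain ⟨E, hEdef⟩ : ∃ E : ℕ → ℂ, ∀ n : ℕ, E n = Complex.exp (↑(θ n) * Complex.I) :=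
    ⟨_, fun _ => rfl⟩
  have hsinpos : ∀ n : ℕ, 1 ≤ n → 0 < Real.sin (d n / 2) := by
    intro n hn
    have h1 := hd_pos n hn
    have h2 := hd_le n hn
    have h3 := Real.pi_gt_three
    exact Real.sin_pos_of_pos_of_lt_pi (by linarith) (by linarith)
  have hcos_nonneg : ∀ n : ℕ, 1 ≤ n → 0 ≤ Real.cos (d n / 2) := by
    intro n hn
    have h1 := hd_pos n hn
    have h2 := hd_le n hn
    have h3 := Real.pi_gt_three
    apply Real.cos_nonneg_of_mem_Icc
    constructor
    · linarith
    · linarith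
  have hr_nonneg : ∀ n : ℕ, 1 ≤ n → 0 ≤ r n := by
    intro n hn
    rw [hrdef]
    exact div_nonneg (hcos_nonneg n hn) (hsinpos n hn).le
  have hr_mono : ∀ n : ℕ, 1 ≤ n → r n ≤ r (n + 1) := by
    intro n hn
    have h1 : 0 < d (n+1) := hd_pos (n+1) (by omega)
    have h2 : d (n+1) ≤ d n := hd_anti n
    have h3 : d n ≤ x := hd_le n hn
    have hpi := Real.pi_gt_three
    rw [hrdef, hrdef]
    apply div_le_div₀ (hcos_nonneg (n+1) (by omega))
    · exact Real.cos_le_cos_of_nonneg_of_le_pi (by linarith) (by linarith) (by linarith)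
    · exact hsinpos (n+1) (by omega)
    · exact Real.sin_le_sin_of_le_of_le_pi_div_two (by linarith) (by linarith) (by linarith)
  have hr_le : ∀ n : ℕ, 1 ≤ n → r n ≤ 4 / d n := by
    intro n hn
    have h1 : 0 < d n := hd_pos n hn
    have h2 : d n ≤ x := hd_le n hn
    have hsin : d n / Real.pi ≤ Real.sin (d n / 2) := by
      have hpi3 := Real.pi_gt_three
      have := Real.mul_le_sin (x := d n / 2) (by linarith) (by linarith)
      calc d n / Real.pi = 2 / Real.pi * (d n / 2) := by
            field_simp
        _ ≤ Real.sin (d n / 2) := this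
    have hpi : 0 < Real.pi := Real.pi_pos
    calc r n ≤ 1 / Real.sin (d n / 2) := by
          rw [hrdef]
          apply div_le_div₀ (by norm_num) (Real.cos_le_one _) (hsinpos n hn) le_rfl
      _ ≤ 1 / (d n / Real.pi) := by
          apply one_div_le_one_div_of_le (by positivity) hsin
      _ = Real.pi / d n := by field_simp
      _ ≤ 4 / d n := by
          have := Real.pi_le_four
          apply div_le_div₀ (by norm_num) this h1 le_rfl
  have hEc : ∀ n : ℕ, 1 ≤ n → c n * (E (n+1) - E n) = E n := by
    intro n hn
    have hθd : θ (n+1) = θ n + d n := by rw [hddef]; ring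
    have hE1 : E (n+1) = E n * Complex.exp (↑(d n) * Complex.I) := by
      rw [hEdef, hEdef, hθd, ← Complex.exp_add]
      push_cast
      ring_nf
    have hkey : (-(1/2 : ℂ) - (↑(Real.cos (d n/2) / Real.sin (d n/2)) * Complex.I) / 2)
        * (Complex.exp (↑(d n) * Complex.I) - 1) = 1 :=
      aux_key (d n) (hd_pos n hn) (lt_of_le_of_lt (hd_le n hn) (by linarith))
    rw [hE1, hcdef, hrdef]
    calc (-(1/2 : ℂ) - (↑(Real.cos (d n/2)/Real.sin (d n/2)) * Complex.I) / 2)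
          * (E n * Complex.exp (↑(d n) * Complex.I) - E n)
        = E n * ((-(1/2 : ℂ) - (↑(Real.cos (d n/2)/Real.sin (d n/2)) * Complex.I) / 2)
            * (Complex.exp (↑(d n) * Complex.I) - 1)) := by ring
      _ = E n := by rw [hkey, mul_one]
  rcases Nat.lt_or_ge k 2 with h2 | h2
  · have hk1 : k = 1 := by omega
    subst hk1
    rw [Finset.Icc_self, Finset.sum_singleton]
    simp only [Nat.cast_one, Real.one_rpow, one_mul]
    have hsle : |Real.sin x| ≤ 1 := Real.abs_sin_le_one x
    have h1 : (1:ℝ) ≤ (1 + 4/α) * 1 * x⁻¹ := by nlinarith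
    linarith
  · obtain ⟨m, rfl⟩ : ∃ m, k = m + 2 := ⟨k - 2, by omega⟩
    have hsin_sum : ∑ n ∈ Finset.Icc 1 (m+2), Real.sin ((n : ℝ) ^ α * x)
        = (∑ n ∈ Finset.Icc 1 (m+2), E n).im := by
      rw [Complex.im_sum]
      refine Finset.sum_congr rfl (fun n _ => ?_)
      rw [hEdef, Complex.exp_ofReal_mul_I_im, hθdef]
    have hsum : ∑ n ∈ Finset.Icc 1 (m+2), E n
        = c (m+1) * E (m+2) - c 1 * E 1
          - (∑ n ∈ Finset.Icc 1 m, (c (n+1) - c n) * E (n+1)) + E (m+2) := by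
      rw [Finset.sum_Icc_succ_top (show 1 ≤ m+2 by omega)]
      rw [show ∑ n ∈ Finset.Icc 1 (m+1), E n
          = ∑ n ∈ Finset.Icc 1 (m+1), c n * (E (n+1) - E n) from
        Finset.sum_congr rfl (fun n hn => (hEc n (Finset.mem_Icc.mp hn).1).symm)]
      rw [aux_abel]
    have hnE : ∀ j : ℕ, ‖E j‖ = 1 := by
      intro j; rw [hEdef]; exact Complex.norm_exp_ofReal_mul_I _
    have hnc : ∀ j : ℕ, 1 ≤ j → ‖c j‖ ≤ 1/2 + r j / 2 := by
      intro j hj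
      rw [hcdef]
      calc ‖-(1/2 : ℂ) - (↑(r j) * Complex.I) / 2‖
          ≤ ‖-(1/2 : ℂ)‖ + ‖(↑(r j) * Complex.I)/2‖ := norm_sub_le _ _
        _ = 1/2 + r j / 2 := by
            have hh : ‖(↑(r j) * Complex.I)/2‖ = r j / 2 := by
              rw [norm_div, norm_mul, Complex.norm_I, mul_one, Complex.norm_real,
                Real.norm_eq_abs, abs_of_nonneg (hr_nonneg j hj)]
              norm_num
            rw [norm_neg, hh]
            norm_num
    have hdiffnorm : ∀ n : ℕ, 1 ≤ n → ‖c (n+1) - c n‖ = (r (n+1) - r n)/2 := by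
      intro n hn
      have hcc : c (n+1) - c n = ((↑(r n - r (n+1)) : ℂ) * Complex.I) / 2 := by
        rw [hcdef, hcdef]; push_cast; ring
      rw [hcc, norm_div, norm_mul, Complex.norm_I, mul_one, Complex.norm_real,
        Real.norm_eq_abs, abs_sub_comm, abs_of_nonneg (by linarith [hr_mono n hn])]
      norm_num
    have hsum_norm : ∑ n ∈ Finset.Icc 1 m, ‖(c (n+1) - c n) * E (n+1)‖
        = (r (m+1) - r 1) / 2 := by
      have hcongr : ∀ n ∈ Finset.Icc 1 m, ‖(c (n+1) - c n) * E (n+1)‖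
          = r (n+1) / 2 - r n / 2 := by
        intro n hn
        have hn1 := (Finset.mem_Icc.mp hn).1
        rw [norm_mul, hnE, mul_one, hdiffnorm n hn1]; ring
      rw [Finset.sum_congr rfl hcongr]
      have ht := aux_tele (fun j => r j / 2) m
      rw [ht]; ring
    have hfinal_norm : ‖∑ n ∈ Finset.Icc 1 (m+2), E n‖ ≤ 2 + r (m+1) := by
      rw [hsum]
      have t1 := norm_add_le (c (m+1) * E (m+2) - c 1 * E 1
        - (∑ n ∈ Finset.Icc 1 m, (c (n+1) - c n) * E (n+1))) (E (m+2))
      have t2 := norm_sub_le (c (m+1) * E (m+2) - c 1 * E 1)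
        (∑ n ∈ Finset.Icc 1 m, (c (n+1) - c n) * E (n+1))
      have t3 := norm_sub_le (c (m+1) * E (m+2)) (c 1 * E 1)
      have t4 := norm_sum_le (Finset.Icc 1 m) (fun n => (c (n+1) - c n) * E (n+1))
      have e1 : ‖c (m+1) * E (m+2)‖ = ‖c (m+1)‖ := by rw [norm_mul, hnE, mul_one]
      have e2 : ‖c 1 * E 1‖ = ‖c 1‖ := by rw [norm_mul, hnE, mul_one]
      have b1 := hnc (m+1) (by omega)
      have b2 := hnc 1 le_rfl
      have hEm := hnE (m+2)
      linarith [hsum_norm]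
    have hKpos : (0:ℝ) < ((m+2:ℕ):ℝ) := by positivity
    have hK1 : (1:ℝ) ≤ ((m+2:ℕ):ℝ) := by
      push_cast; linarith [Nat.cast_nonneg (α := ℝ) m]
    have hdl : α * ((m+2:ℕ):ℝ)^(α-1) * x ≤ d (m+1) := by
      have h := hd_lower (m+1) (by omega)
      push_cast at h ⊢
      rwa [show ((m:ℝ)+1+1) = (m:ℝ)+2 by ring] at h
    have hdpos := hd_pos (m+1) (by omega)
    have hrle := hr_le (m+1) (by omega)
    have hden : (0:ℝ) < α * ((m+2:ℕ):ℝ)^(α-1) * x := by positivity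
    have h5 : 4 / d (m+1) ≤ 4 / (α * ((m+2:ℕ):ℝ)^(α-1) * x) := by
      gcongr
    have hKrpos : (0:ℝ) < ((m+2:ℕ):ℝ)^(1-α) := Real.rpow_pos_of_pos hKpos _
    have heq : 4 / (α * ((m+2:ℕ):ℝ)^(α-1) * x) = (4/α) * ((m+2:ℕ):ℝ)^(1-α) * x⁻¹ := by
      rw [show α - 1 = -(1-α) by ring, Real.rpow_neg hKpos.le]
      field_simp
    have hK1a : (1:ℝ) ≤ ((m+2:ℕ):ℝ)^(1-α) := by
      have := Real.rpow_le_rpow (by norm_num : (0:ℝ) ≤ 1) hK1 (by linarith : (0:ℝ) ≤ 1-α)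
      rwa [Real.one_rpow] at this
    have key2 : (2:ℝ) ≤ ((m+2:ℕ):ℝ)^(1-α) * x⁻¹ := by
      nlinarith
    calc |∑ n ∈ Finset.Icc 1 (m+2), Real.sin ((n : ℝ) ^ α * x)|
        = |(∑ n ∈ Finset.Icc 1 (m+2), E n).im| := by rw [hsin_sum]
      _ ≤ ‖∑ n ∈ Finset.Icc 1 (m+2), E n‖ := by
          exact Complex.abs_im_le_norm _
      _ ≤ 2 + r (m+1) := hfinal_norm
      _ ≤ 2 + 4 / d (m+1) := by linarith
      _ ≤ 2 + (4/α) * ((m+2:ℕ):ℝ)^(1-α) * x⁻¹ := by rw [← heq]; linarith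
      _ ≤ (1 + 4/α) * ((m+2:ℕ):ℝ)^(1-α) * x⁻¹ := by nlinarith [key2]
end

section
/- Let α > 1 and let x ∈ (0, x₀(α)) for x₀(α) sufficiently small. Set L₀ = ⌊x^{−1/α}⌋ + 1 and L₁ = ⌊(2xα)^{−1/(α−1)}⌋. Then there is a constant C depending only on α such that for every integer k with L₀ ≤ k < L₁, |∑_{n=L₀}^{k} sin(n^α · x)| ≤ C · x^{−1/α}. -/
open Real Finset

lemma kl_winv (θ : ℝ) (h1 : 0 < θ) (h2 : θ < Real.pi) :
    ((-(1/2) : ℂ) - ((Real.cos (θ/2) / (2*Real.sin (θ/2)) : ℝ) : ℂ) * Complex.I) *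
      (Complex.exp (θ * Complex.I) - 1) = 1 := by
  have hsr : Real.sin (θ/2) ≠ 0 :=
    ne_of_gt (Real.sin_pos_of_pos_of_lt_pi (by linarith) (by linarith [Real.pi_pos]))
  set s : ℂ := ((Real.sin (θ/2) : ℝ) : ℂ) with hsdef
  set c : ℂ := ((Real.cos (θ/2) : ℝ) : ℂ) with hcdef
  have hs : s ≠ 0 := by
    rw [hsdef]; exact_mod_cast Complex.ofReal_ne_zero.mpr hsr
  have hsc : s^2 + c^2 = 1 := by
    rw [hsdef, hcdef, ← Complex.ofReal_pow, ← Complex.ofReal_pow, ← Complex.ofReal_add,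
      Real.sin_sq_add_cos_sq, Complex.ofReal_one]
  have hcosr : Real.cos θ = 1 - 2 * Real.sin (θ/2)^2 := by
    have h := Real.cos_sq' (θ/2)
    have h2 : Real.cos (2*(θ/2)) = 2 * Real.cos (θ/2)^2 - 1 := Real.cos_two_mul (θ/2)
    have : (2:ℝ)*(θ/2) = θ := by ring
    rw [this] at h2; linarith
  have hsinr : Real.sin θ = 2 * Real.sin (θ/2) * Real.cos (θ/2) := by
    have h := Real.sin_two_mul (θ/2)
    have : (2:ℝ)*(θ/2) = θ := by ring
    rw [this] at h; linarith
  have hcos : (Real.cos θ : ℂ) = 1 - 2*s^2 := by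
    rw [hcosr, Complex.ofReal_sub, Complex.ofReal_one, Complex.ofReal_mul,
      Complex.ofReal_ofNat, Complex.ofReal_pow, hsdef]
  have hsin : (Real.sin θ : ℂ) = 2*s*c := by
    rw [hsinr, Complex.ofReal_mul, Complex.ofReal_mul, Complex.ofReal_ofNat, hsdef, hcdef]
  have hcast : ((Real.cos (θ/2) / (2*Real.sin (θ/2)) : ℝ) : ℂ) = c / (2*s) := by
    rw [Complex.ofReal_div, Complex.ofReal_mul, Complex.ofReal_ofNat, hsdef, hcdef]
  rw [Complex.exp_mul_I, ← Complex.ofReal_cos, ← Complex.ofReal_sin, hcos, hsin, hcast]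
  field_simp
  linear_combination (2*s) * hsc + (-2*s*c^2) * Complex.I_sq

lemma kl_cot_bound (t : ℝ) (h1 : 0 < t) (h2 : t ≤ Real.pi/2) :
    Real.cos t / Real.sin t ≤ Real.pi / (2*t) := by
  have hπ := Real.pi_pos
  have hj : 2/Real.pi * t ≤ Real.sin t := Real.mul_le_sin h1.le h2
  have hc : Real.cos t ≤ 1 := Real.cos_le_one t
  have h0 : (0:ℝ) < 2/Real.pi * t := by positivity
  have : Real.cos t / Real.sin t ≤ 1 / (2/Real.pi * t) :=
    div_le_div₀ zero_le_one hc h0 hj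
  calc Real.cos t / Real.sin t ≤ 1 / (2/Real.pi * t) := this
    _ = Real.pi / (2*t) := by
        rw [div_eq_div_iff (ne_of_gt h0) (by positivity)]
        field_simp

lemma kl_cot_anti (t s : ℝ) (h1 : 0 < t) (h2 : t ≤ s) (h3 : s ≤ Real.pi/2) :
    Real.cos s / Real.sin s ≤ Real.cos t / Real.sin t := by
  have hπ := Real.pi_pos
  have hst : 0 < Real.sin t := Real.sin_pos_of_pos_of_lt_pi h1 (by linarith)
  have hss : 0 < Real.sin s := Real.sin_pos_of_pos_of_lt_pi (by linarith) (by linarith)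
  rw [div_le_div_iff₀ hss hst]
  have h4 : 0 ≤ Real.sin (s - t) :=
    Real.sin_nonneg_of_nonneg_of_le_pi (by linarith) (by linarith)
  rw [Real.sin_sub] at h4
  nlinarith

lemma kl_sum_bound (f : ℕ → ℝ) (a k : ℕ) (lam : ℝ) (hlam : 0 < lam) (hak : a ≤ k)
    (hlow : ∀ n, a ≤ n → n ≤ k → lam ≤ f (n+1) - f n)
    (hup : ∀ n, a ≤ n → n ≤ k → f (n+1) - f n ≤ 1)
    (hmono : ∀ n, a ≤ n → n < k → f (n+1) - f n ≤ f (n+2) - f (n+1)) :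
    |∑ n ∈ Finset.Icc a k, Real.sin (f n)| ≤ 6 / lam := by
  have hπ := Real.pi_pos
  have hπ4 : Real.pi < 3.15 := Real.pi_lt_d2
  have hπ3 : 3 < Real.pi := Real.pi_gt_three
  obtain ⟨δ, hδd⟩ : ∃ δ : ℕ → ℝ, ∀ n, δ n = f (n+1) - f n := ⟨_, fun n => rfl⟩
  obtain ⟨g, hgd⟩ : ∃ g : ℕ → ℝ, ∀ n, g n = Real.cos (δ n / 2) / (2 * Real.sin (δ n / 2)) :=
    ⟨_, fun n => rfl⟩
  obtain ⟨w, hwd⟩ : ∃ w : ℕ → ℂ, ∀ n, w n = (-(1/2) : ℂ) - ((g n : ℝ) : ℂ) * Complex.I :=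
    ⟨_, fun n => rfl⟩
  obtain ⟨E, hEd⟩ : ∃ E : ℕ → ℂ, ∀ n, E n = Complex.exp ((f n : ℂ) * Complex.I) :=
    ⟨_, fun n => rfl⟩
  -- basic bounds on δ
  have hδpos : ∀ n, a ≤ n → n ≤ k → 0 < δ n := fun n h1 h2 =>
    (hδd n) ▸ lt_of_lt_of_le hlam (hlow n h1 h2)
  have hδ1 : ∀ n, a ≤ n → n ≤ k → δ n ≤ 1 := fun n h1 h2 => (hδd n) ▸ hup n h1 h2
  -- key recursion
  have hE : ∀ n, a ≤ n → n ≤ k → w n * (E (n+1) - E n) = E n := by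
    intro n h1 h2
    have hexp : E (n+1) = E n * Complex.exp ((δ n : ℂ) * Complex.I) := by
      rw [hEd, hEd, ← Complex.exp_add]
      congr 1
      have : (f (n+1) : ℂ) = (f n : ℂ) + (δ n : ℂ) := by
        rw [hδd]; push_cast; ring
      rw [this]; ring
    have hw := kl_winv (δ n) (hδpos n h1 h2) (by linarith [hδ1 n h1 h2])
    rw [← hgd n] at hw
    calc w n * (E (n+1) - E n)
        = E n * (w n * (Complex.exp ((δ n : ℂ) * Complex.I) - 1)) := by rw [hexp]; ring
      _ = E n * 1 := by rw [hwd, hw]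
      _ = E n := mul_one _
  -- Abel summation identity
  have hident : ∀ k', a ≤ k' → k' ≤ k →
      ∑ n ∈ Finset.Icc a k', E n =
        w k' * E (k'+1) - w a * E a - ∑ n ∈ Finset.Icc (a+1) k', (w n - w (n-1)) * E n := by
    intro k' hk'
    induction k', hk' using Nat.le_induction with
    | base =>
      intro _
      rw [Finset.Icc_self, Finset.sum_singleton, Finset.Icc_eq_empty (by omega),
        Finset.sum_empty]
      linear_combination (-1 : ℂ) * hE a le_rfl hak
    | succ m hm IH =>
      intro hmk
      have hm' := IH (by omega)
      rw [Finset.sum_Icc_succ_top (by omega : a ≤ m+1), hm',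
        Finset.sum_Icc_succ_top (by omega : a+1 ≤ m+1)]
      have h := hE (m+1) (by omega) hmk
      simp only [Nat.add_sub_cancel]
      linear_combination (-1 : ℂ) * h
  -- telescoping of g
  have htel : ∀ k', a ≤ k' →
      ∑ n ∈ Finset.Icc (a+1) k', (g (n-1) - g n) = g a - g k' := by
    intro k' hk'
    induction k', hk' using Nat.le_induction with
    | base => rw [Finset.Icc_eq_empty (by omega), Finset.sum_empty]; ring
    | succ m hm IH =>
      rw [Finset.sum_Icc_succ_top (by omega : a+1 ≤ m+1), IH]
      simp only [Nat.add_sub_cancel]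
      ring
  -- bounds on g
  have hgb : ∀ n, a ≤ n → n ≤ k → g n ≤ Real.pi / (2*lam) := by
    intro n h1 h2
    have hδp := hδpos n h1 h2
    have hδu := hδ1 n h1 h2
    have hcot := kl_cot_bound (δ n / 2) (by linarith) (by linarith)
    have he : (2:ℝ) * (δ n / 2) = δ n := by ring
    rw [he] at hcot
    have hll : lam ≤ δ n := (hδd n) ▸ hlow n h1 h2
    calc g n = (Real.cos (δ n/2) / Real.sin (δ n/2)) / 2 := by rw [hgd]; ring
      _ ≤ (Real.pi / δ n) / 2 := by linarith
      _ = Real.pi / (2 * δ n) := by ring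
      _ ≤ Real.pi / (2 * lam) := by gcongr
  have hgpos : ∀ n, a ≤ n → n ≤ k → 0 ≤ g n := by
    intro n h1 h2
    have hδp := hδpos n h1 h2
    have hδu := hδ1 n h1 h2
    have hsp : 0 < Real.sin (δ n/2) :=
      Real.sin_pos_of_pos_of_lt_pi (by linarith) (by linarith)
    have hcp : 0 ≤ Real.cos (δ n/2) :=
      Real.cos_nonneg_of_mem_Icc ⟨by linarith, by linarith⟩
    rw [hgd]
    positivity
  -- monotonicity: g (n-1) ≥ g n on the relevant range
  have hganti : ∀ n, a+1 ≤ n → n ≤ k → g n ≤ g (n-1) := by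
    intro n h1 h2
    obtain ⟨m, rfl⟩ : ∃ m, n = m + 1 := ⟨n-1, by omega⟩
    simp only [Nat.add_sub_cancel]
    have hδm : 0 < δ m := hδpos m (by omega) (by omega)
    have hδmono : δ m ≤ δ (m+1) := by
      rw [hδd, hδd]; exact hmono m (by omega) (by omega)
    have hδu : δ (m+1) ≤ 1 := hδ1 (m+1) (by omega) h2
    have hanti := kl_cot_anti (δ m / 2) (δ (m+1) / 2) (by linarith) (by linarith) (by linarith)
    rw [hgd, hgd]
    calc Real.cos (δ (m+1)/2) / (2 * Real.sin (δ (m+1)/2))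
        = (Real.cos (δ (m+1)/2) / Real.sin (δ (m+1)/2)) / 2 := by ring
      _ ≤ (Real.cos (δ m/2) / Real.sin (δ m/2)) / 2 := by linarith
      _ = Real.cos (δ m/2) / (2 * Real.sin (δ m/2)) := by ring
  -- norms
  have hEnorm : ∀ n, ‖E n‖ = 1 := fun n => (hEd n) ▸ Complex.norm_exp_ofReal_mul_I (f n)
  have hwnorm : ∀ n, ‖w n‖ ≤ 1/2 + |g n| := by
    intro n
    rw [hwd]
    calc ‖(-(1/2) : ℂ) - ((g n : ℝ) : ℂ) * Complex.I‖
        ≤ ‖(-(1/2) : ℂ)‖ + ‖((g n : ℝ) : ℂ) * Complex.I‖ := norm_sub_le _ _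
      _ = 1/2 + |g n| := by
          rw [norm_mul, Complex.norm_I, Complex.norm_real, Real.norm_eq_abs, mul_one]
          norm_num
  have hwdiff : ∀ n, a+1 ≤ n → n ≤ k → ‖w n - w (n-1)‖ = g (n-1) - g n := by
    intro n h1 h2
    have : w n - w (n-1) = ((g (n-1) - g n : ℝ) : ℂ) * Complex.I := by
      rw [hwd, hwd]; push_cast; ring
    rw [this, norm_mul, Complex.norm_I, Complex.norm_real, mul_one, Real.norm_eq_abs,
      abs_of_nonneg (by linarith [hganti n h1 h2])]
  -- put it together
  have hS : ‖∑ n ∈ Finset.Icc a k, E n‖ ≤ 1 + 3 * (Real.pi / (2 * lam)) := by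
    rw [hident k hak le_rfl]
    have hV : ‖∑ n ∈ Finset.Icc (a+1) k, (w n - w (n-1)) * E n‖ ≤ g a - g k := by
      calc ‖∑ n ∈ Finset.Icc (a+1) k, (w n - w (n-1)) * E n‖
          ≤ ∑ n ∈ Finset.Icc (a+1) k, ‖(w n - w (n-1)) * E n‖ := norm_sum_le _ _
        _ = ∑ n ∈ Finset.Icc (a+1) k, (g (n-1) - g n) := by
            apply Finset.sum_congr rfl
            intro n hn
            rw [Finset.mem_Icc] at hn
            rw [norm_mul, hEnorm, mul_one, hwdiff n hn.1 hn.2]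
        _ = g a - g k := htel k hak
    have hwk : ‖w k * E (k+1)‖ ≤ 1/2 + Real.pi/(2*lam) := by
      rw [norm_mul, hEnorm, mul_one]
      calc ‖w k‖ ≤ 1/2 + |g k| := hwnorm k
        _ ≤ 1/2 + Real.pi/(2*lam) := by
            have := hgb k hak le_rfl
            have := hgpos k hak le_rfl
            rw [abs_of_nonneg ‹0 ≤ g k›]
            linarith
    have hwa : ‖w a * E a‖ ≤ 1/2 + Real.pi/(2*lam) := by
      rw [norm_mul, hEnorm, mul_one]
      calc ‖w a‖ ≤ 1/2 + |g a| := hwnorm a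
        _ ≤ 1/2 + Real.pi/(2*lam) := by
            have := hgb a le_rfl hak
            have := hgpos a le_rfl hak
            rw [abs_of_nonneg ‹0 ≤ g a›]
            linarith
    have hga : g a ≤ Real.pi/(2*lam) := hgb a le_rfl hak
    have hgk : 0 ≤ g k := hgpos k hak le_rfl
    calc ‖w k * E (k+1) - w a * E a - ∑ n ∈ Finset.Icc (a+1) k, (w n - w (n-1)) * E n‖
        ≤ ‖w k * E (k+1) - w a * E a‖ + ‖∑ n ∈ Finset.Icc (a+1) k, (w n - w (n-1)) * E n‖ :=
          norm_sub_le _ _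
      _ ≤ (‖w k * E (k+1)‖ + ‖w a * E a‖) + (g a - g k) := by
          have := norm_sub_le (w k * E (k+1)) (w a * E a)
          linarith
      _ ≤ 1 + 3 * (Real.pi / (2 * lam)) := by linarith
  -- from complex to real
  have him : ∑ n ∈ Finset.Icc a k, Real.sin (f n) = (∑ n ∈ Finset.Icc a k, E n).im := by
    rw [Complex.im_sum]
    apply Finset.sum_congr rfl
    intro n _
    rw [hEd]
    exact (Complex.exp_ofReal_mul_I_im (f n)).symm
  rw [him]
  have h1 : |(∑ n ∈ Finset.Icc a k, E n).im| ≤ ‖∑ n ∈ Finset.Icc a k, E n‖ :=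
    Complex.abs_im_le_norm _
  have hlam1 : lam ≤ 1 := le_trans (hlow a le_rfl hak) (hup a le_rfl hak)
  have hinv1 : (1:ℝ) ≤ lam⁻¹ := by
    rw [le_inv_comm₀ one_pos hlam]; simpa using hlam1
  have hfin : 1 + 3 * (Real.pi / (2 * lam)) ≤ 6 / lam := by
    have e1 : 3 * (Real.pi / (2 * lam)) = (3 * Real.pi / 2) * lam⁻¹ := by ring
    have e2 : 6 / lam = 6 * lam⁻¹ := by ring
    rw [e1, e2]
    nlinarith
  linarith

lemma kl_incr (α : ℝ) (hα : 1 < α) (t : ℝ) (ht : 0 < t) :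
    α * t^(α-1) ≤ (t+1)^α - t^α ∧ (t+1)^α - t^α ≤ α * (t+1)^(α-1) := by
  have hα1 : (0:ℝ) ≤ α - 1 := by linarith
  obtain ⟨c, hc, hc'⟩ := exists_hasDerivAt_eq_slope (fun y : ℝ => y^α)
    (fun y : ℝ => α * y^(α-1)) (show t < t+1 by linarith)
    (fun y hy => (Real.continuousAt_rpow_const y α
      (Or.inl (ne_of_gt (lt_of_lt_of_le ht hy.1)))).continuousWithinAt)
    (fun y hy => Real.hasDerivAt_rpow_const (Or.inl (ne_of_gt (lt_trans ht hy.1))))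
  have hden : (t+1) - t = 1 := by ring
  rw [hden, div_one] at hc'
  have hcl : t ≤ c := hc.1.le
  have hcu : c ≤ t + 1 := hc.2.le
  have h1 : t^(α-1) ≤ c^(α-1) := Real.rpow_le_rpow ht.le hcl hα1
  have h2 : c^(α-1) ≤ (t+1)^(α-1) := Real.rpow_le_rpow (by linarith) hcu hα1
  constructor
  · calc α * t^(α-1) ≤ α * c^(α-1) := by nlinarith
      _ = (t+1)^α - t^α := hc'
  · calc (t+1)^α - t^α = α * c^(α-1) := hc'.symm
      _ ≤ α * (t+1)^(α-1) := by nlinarith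

lemma kl_convex (α : ℝ) (hα : 1 ≤ α) (t : ℝ) (ht : 0 ≤ t) :
    (t+1)^α - t^α ≤ (t+2)^α - (t+1)^α := by
  have h := (convexOn_rpow hα).2 (Set.mem_Ici.mpr ht) (Set.mem_Ici.mpr (by linarith : (0:ℝ) ≤ t+2))
    (by norm_num : (0:ℝ) ≤ 1/2) (by norm_num : (0:ℝ) ≤ 1/2) (by norm_num)
  simp only [smul_eq_mul] at h
  have he : (1/2 : ℝ) * t + (1/2 : ℝ) * (t+2) = t + 1 := by ring
  rw [he] at h
  linarith


theorem stmt5 (α : ℝ) (hα : 1 < α) :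
    ∃ x₀ > 0, ∃ C > 0, ∀ x : ℝ, x ∈ Set.Ioo 0 x₀ →
      ∀ k : ℕ, ⌊x ^ (-1/α)⌋₊ + 1 ≤ k → k < ⌊(2 * x * α) ^ (-1/(α-1))⌋₊ →
        |∑ n ∈ Finset.Icc (⌊x ^ (-1/α)⌋₊ + 1) k, Real.sin ((n : ℝ) ^ α * x)| ≤
          C * x ^ (-1/α) := by
  have hα0 : (0:ℝ) < α := by linarith
  refine ⟨1, one_pos, 6/α, by positivity, ?_⟩
  intro x hx k hk1 hk2
  obtain ⟨hx0, hx1⟩ := hx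
  have hα1 : (0:ℝ) ≤ α - 1 := by linarith
  have hxp : (0:ℝ) < x ^ (-1/α) := Real.rpow_pos_of_pos hx0 _
  set a : ℕ := ⌊x ^ (-1/α)⌋₊ + 1 with had
  have hL0 : x ^ (-1/α) < (a : ℝ) := by
    rw [had]; push_cast; exact Nat.lt_floor_add_one _
  -- the two key exponent computations
  have hlamval : α * ((x ^ (-1/α))^(α-1) * x) = α * x ^ (1/α) := by
    congr 1
    rw [← Real.rpow_mul hx0.le, ← Real.rpow_add_one (ne_of_gt hx0)]
    congr 1
    field_simp
    ring
  set lam : ℝ := α * x ^ (1/α) with hlamd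
  have hlam : 0 < lam := by rw [hlamd]; positivity
  -- upper bound ingredient: n+1 ≤ (2xα)^(-1/(α-1)) for n ≤ k
  have hkup : ((k:ℝ) + 1) ≤ (2 * x * α) ^ (-1/(α-1)) := by
    have h1 : (k:ℕ) + 1 ≤ ⌊(2 * x * α) ^ (-1/(α-1))⌋₊ := hk2
    have h2 : ((⌊(2 * x * α) ^ (-1/(α-1))⌋₊ : ℕ) : ℝ) ≤ (2 * x * α) ^ (-1/(α-1)) :=
      Nat.floor_le (Real.rpow_nonneg (by positivity) _)
    calc ((k:ℝ) + 1) = ((k + 1 : ℕ) : ℝ) := by push_cast; ring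
      _ ≤ ((⌊(2 * x * α) ^ (-1/(α-1))⌋₊ : ℕ) : ℝ) := by exact_mod_cast h1
      _ ≤ _ := h2
  have hpow2 : ((2 * x * α) ^ (-1/(α-1)))^(α-1) = (2 * x * α)⁻¹ := by
    rw [← Real.rpow_mul (by positivity)]
    rw [div_mul_cancel₀ _ (show α - 1 ≠ 0 by linarith)]
    exact Real.rpow_neg_one _
  -- apply the Kusmin–Landau bound
  have hmain := kl_sum_bound (fun n : ℕ => (n:ℝ)^α * x) a k lam hlam hk1
    (by -- lower bound
      intro n h1 h2
      have hn : x ^ (-1/α) < (n:ℝ) := lt_of_lt_of_le hL0 (by exact_mod_cast h1)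
      have hn0 : (0:ℝ) < n := lt_trans hxp hn
      have hincr := (kl_incr α hα (n:ℝ) hn0).1
      have hr : (x ^ (-1/α))^(α-1) ≤ (n:ℝ)^(α-1) := Real.rpow_le_rpow hxp.le hn.le hα1
      have hcast : ((n+1 : ℕ) : ℝ) = (n:ℝ) + 1 := by push_cast; ring
      rw [hcast]
      calc lam = α * ((x ^ (-1/α))^(α-1) * x) := hlamval.symm
        _ ≤ α * ((n:ℝ)^(α-1) * x) :=
            mul_le_mul_of_nonneg_left (mul_le_mul_of_nonneg_right hr hx0.le) hα0.le
        _ = (α * (n:ℝ)^(α-1)) * x := by ring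
        _ ≤ (((n:ℝ)+1)^α - (n:ℝ)^α) * x := mul_le_mul_of_nonneg_right hincr hx0.le
        _ = ((n:ℝ)+1)^α * x - (n:ℝ)^α * x := by ring)
    (by -- upper bound
      intro n h1 h2
      have hn : x ^ (-1/α) < (n:ℝ) := lt_of_lt_of_le hL0 (by exact_mod_cast h1)
      have hn0 : (0:ℝ) < n := lt_trans hxp hn
      have hincr := (kl_incr α hα (n:ℝ) hn0).2
      have hnk : ((n:ℝ) + 1) ≤ (2 * x * α) ^ (-1/(α-1)) := by
        have : (n:ℝ) ≤ (k:ℝ) := by exact_mod_cast h2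
        linarith
      have hr : ((n:ℝ)+1)^(α-1) ≤ (2 * x * α)⁻¹ := by
        rw [← hpow2]
        exact Real.rpow_le_rpow (by positivity) hnk hα1
      have hcast : ((n+1 : ℕ) : ℝ) = (n:ℝ) + 1 := by push_cast; ring
      rw [hcast]
      have hhalf : α * (2 * x * α)⁻¹ * x = 1/2 := by
        field_simp
      calc ((n:ℝ)+1)^α * x - (n:ℝ)^α * x = (((n:ℝ)+1)^α - (n:ℝ)^α) * x := by ring
        _ ≤ (α * ((n:ℝ)+1)^(α-1)) * x := mul_le_mul_of_nonneg_right hincr hx0.le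
        _ ≤ (α * (2 * x * α)⁻¹) * x :=
            mul_le_mul_of_nonneg_right (mul_le_mul_of_nonneg_left hr hα0.le) hx0.le
        _ = 1/2 := by rw [← hhalf]
        _ ≤ 1 := by norm_num)
    (by -- monotonicity
      intro n h1 h2
      have hconv := kl_convex α hα.le (n:ℝ) (Nat.cast_nonneg n)
      have hcast1 : ((n+1 : ℕ) : ℝ) = (n:ℝ) + 1 := by push_cast; ring
      have hcast2 : ((n+2 : ℕ) : ℝ) = (n:ℝ) + 2 := by push_cast; ring
      rw [hcast1, hcast2]
      nlinarith [mul_le_mul_of_nonneg_right hconv hx0.le])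
  -- convert the bound
  have hconv : 6 / lam = 6/α * x ^ (-1/α) := by
    rw [hlamd]
    rw [show (-1/α : ℝ) = -(1/α) by ring, Real.rpow_neg hx0.le]
    field_simp
  calc |∑ n ∈ Finset.Icc a k, Real.sin ((n : ℝ) ^ α * x)| ≤ 6 / lam := hmain
    _ = 6/α * x ^ (-1/α) := hconv
end

section
/- Let α ∈ (0,1) and 0 < a' < b'. Then there is a constant C depending only on α, a', b' such that for all x ∈ [a', b'] and all integers k ≥ 1, |∑_{n=1}^{k} e^{2πi n^α x}| ≤ C · k^{1−α}. -/
open Complex Finset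

noncomputable def klw (δ : ℝ) : ℂ :=
  1/2 + (Real.cos (Real.pi * δ) / Real.sin (Real.pi * δ) : ℝ) * I / 2

lemma sin_pi_pos {δ : ℝ} (h1 : 0 < δ) (h2 : δ ≤ 1/2) : 0 < Real.sin (Real.pi * δ) :=
  Real.sin_pos_of_pos_of_lt_pi (by positivity)
    (by nlinarith [Real.pi_pos])

lemma klw_mul {δ : ℝ} (h1 : 0 < δ) (h2 : δ ≤ 1/2) :
    (1 - Complex.exp (2 * Real.pi * I * δ)) * klw δ = 1 := by
  have hsin := sin_pi_pos h1 h2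
  have hexp : Complex.exp (2 * Real.pi * I * δ)
      = ((1 - 2*Real.sin (Real.pi*δ)^2 : ℝ) : ℂ) + ((2*Real.sin (Real.pi*δ)*Real.cos (Real.pi*δ) : ℝ) : ℂ) * I := by
    rw [show (2 * (Real.pi:ℂ) * I * (δ:ℝ) : ℂ) = ((2*(Real.pi*δ) : ℝ) : ℂ) * I by push_cast; ring]
    rw [Complex.exp_mul_I, ← Complex.ofReal_cos, ← Complex.ofReal_sin,
      show Real.cos (2*(Real.pi*δ)) = 1 - 2*Real.sin (Real.pi*δ)^2 by
        rw [Real.cos_two_mul']; nlinarith [Real.sin_sq_add_cos_sq (Real.pi*δ)],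
      Real.sin_two_mul]
  have key : ∀ s c : ℝ, 0 < s → s^2 + c^2 = 1 →
      (1 - (((1 - 2*s^2 : ℝ):ℂ) + ((2*s*c : ℝ):ℂ) * I)) * (1/2 + ((c/s : ℝ):ℂ) * I / 2) = 1 := by
    intro s c hs h
    have hs' : (s:ℂ) ≠ 0 := by exact_mod_cast hs.ne'
    have h' : (s:ℂ)^2 + (c:ℂ)^2 = 1 := by exact_mod_cast congrArg (Complex.ofReal) h
    have step : (1 - (((1 - 2*s^2 : ℝ):ℂ) + ((2*s*c : ℝ):ℂ) * I)) * (1/2 + ((c/s : ℝ):ℂ) * I / 2)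
        = (s:ℂ)^2 - (c:ℂ)^2 * I^2 := by
      push_cast
      field_simp
      ring
    rw [step, Complex.I_sq]
    linear_combination h'
  rw [hexp, klw]
  exact key _ _ hsin (Real.sin_sq_add_cos_sq _)

noncomputable def klcot (δ : ℝ) : ℝ := Real.cos (Real.pi * δ) / Real.sin (Real.pi * δ)

lemma klw_eq (δ : ℝ) : klw δ = 1/2 + ((klcot δ : ℝ):ℂ) * I / 2 := rfl

lemma norm_klw_sub (x y : ℝ) : ‖klw x - klw y‖ = |klcot x - klcot y| / 2 := by
  have : klw x - klw y = ((klcot x - klcot y : ℝ):ℂ) * I / 2 := by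
    rw [klw_eq, klw_eq]; push_cast; ring
  rw [this, norm_div, norm_mul, Complex.norm_real, Complex.norm_I]
  simp [Real.norm_eq_abs]

lemma klcot_nonneg {x : ℝ} (h1 : 0 < x) (h2 : x ≤ 1/2) : 0 ≤ klcot x := by
  have hs := sin_pi_pos h1 h2
  have hc : 0 ≤ Real.cos (Real.pi * x) := by
    apply Real.cos_nonneg_of_mem_Icc
    constructor
    · nlinarith [Real.pi_pos]
    · nlinarith [Real.pi_pos]
  exact div_nonneg hc hs.le

lemma klcot_anti {x y : ℝ} (hy : 0 < y) (hyx : y ≤ x) (hx : x ≤ 1/2) : klcot x ≤ klcot y := by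
  have hsy := sin_pi_pos hy (hyx.trans hx)
  have hsx := sin_pi_pos (hy.trans_le hyx) hx
  have hpi := Real.pi_pos
  have hcx : 0 ≤ Real.cos (Real.pi * x) := by
    apply Real.cos_nonneg_of_mem_Icc; constructor <;> nlinarith
  have hc : Real.cos (Real.pi * x) ≤ Real.cos (Real.pi * y) :=
    Real.cos_le_cos_of_nonneg_of_le_pi (by positivity) (by nlinarith) (by nlinarith)
  have hsle : Real.sin (Real.pi * y) ≤ Real.sin (Real.pi * x) := by
    apply Real.sin_le_sin_of_le_of_le_pi_div_two (by nlinarith) (by nlinarith) (by nlinarith)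
  exact div_le_div₀ (hcx.trans hc) hc hsy hsle

lemma klcot_le {m x : ℝ} (hm : 0 < m) (hmx : m ≤ x) (hx : x ≤ 1/2) : klcot x ≤ 1/(2*m) := by
  have hs := sin_pi_pos (hm.trans_le hmx) hx
  have hsin : 2*m ≤ Real.sin (Real.pi * x) := by
    have h := Real.mul_le_sin (x := Real.pi * x) (by nlinarith [Real.pi_pos]) (by nlinarith [Real.pi_pos])
    have : 2 / Real.pi * (Real.pi * x) = 2 * x := by field_simp
    rw [this] at h
    linarith
  calc klcot x ≤ 1 / Real.sin (Real.pi * x) := by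
        apply div_le_div₀ (by norm_num) (Real.cos_le_one _) hs le_rfl
    _ ≤ 1/(2*m) := by
        apply div_le_div₀ (by norm_num) le_rfl (by positivity) hsin

lemma norm_klw_le {m x : ℝ} (hm : 0 < m) (hmx : m ≤ x) (hx : x ≤ 1/2) :
    ‖klw x‖ ≤ 1/2 + 1/(4*m) := by
  rw [klw_eq]
  calc ‖(1/2 : ℂ) + ((klcot x : ℝ):ℂ) * I / 2‖ ≤ ‖(1/2 : ℂ)‖ + ‖((klcot x : ℝ):ℂ) * I / 2‖ :=
        norm_add_le _ _
    _ = 1/2 + |klcot x|/2 := by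
        have h1 : ‖((klcot x : ℝ):ℂ) * I / 2‖ = |klcot x|/2 := by
          rw [norm_div, norm_mul, Complex.norm_real, Complex.norm_I]
          simp [Real.norm_eq_abs]
        rw [h1]
        norm_num
    _ ≤ 1/2 + 1/(4*m) := by
        rw [_root_.abs_of_nonneg (klcot_nonneg (hm.trans_le hmx) hx)]
        have := klcot_le hm hmx hx
        have h2 : 1/(2*m)/2 = 1/(4*m) := by field_simp; ring
        linarith

lemma norm_uexp (t : ℝ) : ‖Complex.exp (2*Real.pi*I*(t:ℂ))‖ = 1 := by
  rw [show (2*(Real.pi:ℂ)*I*(t:ℂ)) = ((2*Real.pi*t : ℝ):ℂ)*I by push_cast; ring]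
  exact Complex.norm_exp_ofReal_mul_I _

lemma key_step (f : ℕ → ℝ) (n : ℕ) (h1 : 0 < f (n+1) - f n) (h2 : f (n+1) - f n ≤ 1/2) :
    Complex.exp (2*Real.pi*I*((f n : ℝ):ℂ))
      = (Complex.exp (2*Real.pi*I*((f n : ℝ):ℂ)) - Complex.exp (2*Real.pi*I*((f (n+1) : ℝ):ℂ)))
        * klw (f (n+1) - f n) := by
  have hsplit : Complex.exp (2*Real.pi*I*((f (n+1) : ℝ):ℂ))
      = Complex.exp (2*Real.pi*I*((f n : ℝ):ℂ)) * Complex.exp (2*Real.pi*I*((f (n+1) - f n : ℝ):ℂ)) := by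
    rw [← Complex.exp_add]; congr 1; push_cast; ring
  have hk := klw_mul h1 h2
  rw [hsplit]
  linear_combination (-Complex.exp (2*Real.pi*I*((f n : ℝ):ℂ))) * hk

lemma kusmin_landau (f : ℕ → ℝ) (a b : ℕ) (hab : a ≤ b) (m : ℝ) (hm : 0 < m)
    (hlow : ∀ n, a ≤ n → n ≤ b → m ≤ f (n+1) - f n)
    (hhigh : ∀ n, a ≤ n → n ≤ b → f (n+1) - f n ≤ 1/2)
    (hmono : ∀ n, a ≤ n → n < b → f (n+2) - f (n+1) ≤ f (n+1) - f n) :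
    ‖∑ n ∈ Finset.Icc a b, Complex.exp (2*Real.pi*I*((f n : ℝ):ℂ))‖ ≤ 2/m := by
  have hm2 : m ≤ 1/2 := (hlow a le_rfl hab).trans (hhigh a le_rfl hab)
  obtain ⟨L, hL⟩ : ∃ L, L = b - a + 1 := ⟨_, rfl⟩
  have hLpos : 1 ≤ L := by omega
  have hab' : a + (L - 1) = b := by omega
  set u : ℕ → ℂ := fun n => Complex.exp (2*Real.pi*I*((f n : ℝ):ℂ)) with hu
  set δ : ℕ → ℝ := fun n => f (n+1) - f n with hδ
  -- (1) rewrite as a range sum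
  have hsum1 : ∑ n ∈ Finset.Icc a b, u n = ∑ i ∈ Finset.range L, u (a + i) := by
    rw [← Finset.Ico_add_one_right_eq_Icc, Finset.sum_Ico_eq_sum_range, show b + 1 - a = L by omega]
  -- (2) term identity
  have hterm : ∀ i ∈ Finset.range L, u (a + i) = klw (δ (a + i)) • (u (a+i) - u (a+i+1)) := by
    intro i hi
    have hi' : i < L := Finset.mem_range.mp hi
    have h1 : a ≤ a + i := Nat.le_add_right _ _
    have h2 : a + i ≤ b := by omega
    have hlo := hlow _ h1 h2
    have hhi := hhigh _ h1 h2
    rw [smul_eq_mul, mul_comm]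
    exact key_step f (a+i) (hm.trans_le hlo) hhi
  rw [hsum1, Finset.sum_congr rfl hterm, Finset.sum_range_by_parts]
  -- partial sums telescope
  have hG : ∀ n : ℕ, ∑ i ∈ Finset.range n, (u (a+i) - u (a+i+1)) = u a - u (a+n) := by
    intro n
    have := Finset.sum_range_sub' (fun j => u (a + j)) n
    simpa [Nat.add_assoc] using this
  simp only [hG, ← Nat.add_assoc]
  -- norms
  have hnu : ∀ n : ℕ, ‖u n‖ = 1 := fun n => norm_uexp (f n)
  have hGle : ∀ n : ℕ, ‖u a - u (a+n)‖ ≤ 2 := by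
    intro n
    calc ‖u a - u (a+n)‖ ≤ ‖u a‖ + ‖u (a+n)‖ := norm_sub_le _ _
      _ = 2 := by rw [hnu, hnu]; norm_num
  -- the boundary term
  have hδb : m ≤ δ (a + (L-1)) := hlow _ (Nat.le_add_right _ _) (le_of_eq hab')
  have hδb2 : δ (a + (L-1)) ≤ 1/2 := hhigh _ (Nat.le_add_right _ _) (le_of_eq hab')
  have hbd1 : ‖klw (δ (a + (L - 1))) • (u a - u (a + L))‖ ≤ (1/2 + 1/(4*m)) * 2 := by
    rw [smul_eq_mul, norm_mul]
    exact mul_le_mul (norm_klw_le hm hδb hδb2) (hGle L) (norm_nonneg _) (by positivity)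
  -- the sum of differences
  have hbd2 : ‖∑ i ∈ Finset.range (L-1), (klw (δ (a+i+1)) - klw (δ (a+i))) • (u a - u (a+i+1))‖
      ≤ (1/(2*m))/2 * 2 := by
    calc ‖∑ i ∈ Finset.range (L-1), (klw (δ (a+i+1)) - klw (δ (a+i))) • (u a - u (a+i+1))‖
        ≤ ∑ i ∈ Finset.range (L-1), ‖(klw (δ (a+i+1)) - klw (δ (a+i))) • (u a - u (a+i+1))‖ :=
          norm_sum_le _ _
      _ ≤ ∑ i ∈ Finset.range (L-1), (klcot (δ (a+i+1)) - klcot (δ (a+i)))/2 * 2 := by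
          apply Finset.sum_le_sum
          intro i hi
          have hi' : i < L - 1 := Finset.mem_range.mp hi
          have e1 : a ≤ a + i := Nat.le_add_right _ _
          have e2 : a + i < b := by omega
          have e3 : a + i + 1 ≤ b := by omega
          have hmono' := hmono _ e1 e2
          have hlo1 := hlow _ e1 e2.le
          have hlo2 := hlow _ (by omega : a ≤ a+i+1) e3
          have hhi1 := hhigh _ e1 e2.le
          have hδ1 : 0 < δ (a+i+1) := hm.trans_le hlo2
          have hδanti : δ (a+i+1) ≤ δ (a+i) := by
            have : a + i + 1 + 1 = a + i + 2 := by omega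
            simp only [hδ]
            rw [this]
            exact hmono'
          rw [smul_eq_mul, norm_mul, norm_klw_sub]
          have habs : |klcot (δ (a+i+1)) - klcot (δ (a+i))| = klcot (δ (a+i+1)) - klcot (δ (a+i)) := by
            rw [_root_.abs_of_nonneg]
            have := klcot_anti hδ1 hδanti hhi1
            linarith
          rw [habs]
          exact mul_le_mul le_rfl (by simpa [Nat.add_assoc] using hGle (i+1)) (norm_nonneg _)
            (by have := klcot_anti hδ1 hδanti hhi1; linarith)
      _ = (∑ i ∈ Finset.range (L-1), (klcot (δ (a+i+1)) - klcot (δ (a+i)))) / 2 * 2 := by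
          rw [Finset.sum_div, Finset.sum_mul]
      _ = (klcot (δ (a + (L-1))) - klcot (δ (a + 0))) / 2 * 2 := by
          congr 2
          have := Finset.sum_range_sub (fun j => klcot (δ (a + j))) (L-1)
          simpa [Nat.add_assoc] using this
      _ ≤ (1/(2*m))/2 * 2 := by
          have h1 : klcot (δ (a + (L-1))) ≤ 1/(2*m) := klcot_le hm hδb hδb2
          have h2 : 0 ≤ klcot (δ (a + 0)) := by
            have hlo := hlow a (by omega) hab
            have hhi := hhigh a (by omega) hab
            simpa using klcot_nonneg (hm.trans_le hlo) hhi
          have : klcot (δ (a + (L-1))) - klcot (δ (a + 0)) ≤ 1/(2*m) := by linarith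
          linarith
  calc ‖klw (δ (a + (L - 1))) • (u a - u (a + L))
        - ∑ i ∈ Finset.range (L-1), (klw (δ (a+i+1)) - klw (δ (a+i))) • (u a - u (a+i+1))‖
      ≤ ‖klw (δ (a + (L - 1))) • (u a - u (a + L))‖
        + ‖∑ i ∈ Finset.range (L-1), (klw (δ (a+i+1)) - klw (δ (a+i))) • (u a - u (a+i+1))‖ :=
        norm_sub_le _ _
    _ ≤ (1/2 + 1/(4*m)) * 2 + (1/(2*m))/2 * 2 := add_le_add hbd1 hbd2
    _ ≤ 2/m := by
        have e : (1/2 + 1/(4*m))*2 + 1/(2*m)/2*2 = 1 + 1/m := by field_simp; ring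
        rw [e]
        rw [show (2:ℝ)/m = 1/m + 1/m by ring]
        have : (1:ℝ) ≤ 1/m := by
          rw [le_div_iff₀ hm]; linarith
        linarith

lemma rpow_diff_le {α : ℝ} (hα0 : 0 < α) (hα1 : α < 1) {t : ℝ} (ht : 1 ≤ t) :
    (t+1)^α - t^α ≤ α * t^(α-1) := by
  have ht0 : (0:ℝ) < t := lt_of_lt_of_le one_pos ht
  have h1 : (t+1)^α = t^α * (1+1/t)^α := by
    rw [← Real.mul_rpow ht0.le (by positivity)]
    congr 1
    field_simp
  have h2 : (1+1/t)^α ≤ 1 + α*(1/t) := by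
    apply rpow_one_add_le_one_add_mul_self _ hα0.le hα1.le
    have : (0:ℝ) ≤ 1/t := by positivity
    linarith
  have h3 : t^(α-1) = t^α / t := by
    rw [Real.rpow_sub ht0, Real.rpow_one]
  have htα : (0:ℝ) < t^α := Real.rpow_pos_of_pos ht0 α
  have h4 : (t+1)^α ≤ t^α * (1 + α*(1/t)) := by
    rw [h1]
    exact mul_le_mul_of_nonneg_left h2 htα.le
  have h5 : t^α * (1 + α*(1/t)) = t^α + α * (t^α / t) := by
    field_simp
  rw [h3]
  nlinarith [h4, h5]

lemma le_rpow_diff {α : ℝ} (hα0 : 0 < α) (hα1 : α < 1) {t : ℝ} (ht : 1 ≤ t) :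
    α * (t+1)^(α-1) ≤ (t+1)^α - t^α := by
  have ht0 : (0:ℝ) < t := lt_of_lt_of_le one_pos ht
  have ht1 : (0:ℝ) < t + 1 := by linarith
  have h1 : t^α = (t+1)^α * (1 - 1/(t+1))^α := by
    rw [← Real.mul_rpow ht1.le (by
      have : 1/(t+1) ≤ 1 := by rw [div_le_one ht1]; linarith
      linarith)]
    congr 1
    field_simp
    ring
  have h2 : (1 - 1/(t+1))^α ≤ 1 - α*(1/(t+1)) := by
    have := rpow_one_add_le_one_add_mul_self (s := -(1/(t+1)))
      (by
        have : 1/(t+1) ≤ 1 := by rw [div_le_one ht1]; linarith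
        linarith) hα0.le hα1.le
    have e1 : 1 + -(1/(t+1)) = 1 - 1/(t+1) := by ring
    have e2 : 1 + α * -(1/(t+1)) = 1 - α*(1/(t+1)) := by ring
    rw [e1, e2] at this
    exact this
  have htα : (0:ℝ) < (t+1)^α := Real.rpow_pos_of_pos ht1 α
  have h3 : (t+1)^(α-1) = (t+1)^α / (t+1) := by
    rw [Real.rpow_sub ht1, Real.rpow_one]
  have h4 : t^α ≤ (t+1)^α * (1 - α*(1/(t+1))) := by
    rw [h1]
    exact mul_le_mul_of_nonneg_left h2 htα.le
  have h5 : (t+1)^α * (1 - α*(1/(t+1))) = (t+1)^α - α * ((t+1)^α / (t+1)) := by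
    field_simp
  rw [h3]
  nlinarith [h4, h5]

open Complex in
theorem stmt6 (α a' b' : ℝ) (hα : α ∈ Set.Ioo (0:ℝ) 1) (ha' : 0 < a') (hab : a' < b') :
    ∃ C > 0, ∀ x ∈ Set.Icc a' b', ∀ k : ℕ, 1 ≤ k →
      ‖∑ n ∈ Finset.Icc 1 k, Complex.exp (2 * Real.pi * I * (((n : ℝ) ^ α * x : ℝ) : ℂ))‖ ≤
        C * (k : ℝ) ^ (1 - α) := by
  obtain ⟨hα0, hα1⟩ := hα
  have hb' : 0 < b' := ha'.trans hab
  have h1α : (0:ℝ) < 1 - α := by linarith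
  set N₀ : ℕ := ⌈(2*α*b') ^ ((1:ℝ)/(1-α))⌉₊ + 1 with hN₀
  have hN₀1 : 1 ≤ N₀ := by omega
  -- key property of N₀ : α * b' * N₀ ^ (α-1) ≤ 1/2
  have hNbig : (2*α*b') ≤ (N₀:ℝ)^(1-α) := by
    have h1 : (2*α*b') ^ ((1:ℝ)/(1-α)) ≤ (N₀:ℝ) := by
      refine (Nat.le_ceil _).trans ?_
      rw [hN₀]
      push_cast
      linarith
    calc (2*α*b') = ((2*α*b') ^ ((1:ℝ)/(1-α)))^(1-α) := by
          rw [← Real.rpow_mul (by positivity), one_div, inv_mul_cancel₀ h1α.ne', Real.rpow_one]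
      _ ≤ (N₀:ℝ)^(1-α) := Real.rpow_le_rpow (by positivity) h1 h1α.le
  refine ⟨(N₀:ℝ) + 4/(α*a'), by positivity, ?_⟩
  intro x hx k hk
  obtain ⟨hax, hxb⟩ := hx
  have hx0 : (0:ℝ) < x := ha'.trans_le hax
  have hk1 : (1:ℝ) ≤ (k:ℝ)^(1-α) := Real.one_le_rpow (by exact_mod_cast hk) h1α.le
  have hkpow0 : (0:ℝ) < (k:ℝ)^(1-α) := by positivity
  have htriv : ∀ s : Finset ℕ,
      ‖∑ n ∈ s, Complex.exp (2 * Real.pi * I * (((n : ℝ) ^ α * x : ℝ) : ℂ))‖ ≤ s.card := by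
    intro s
    refine le_trans (norm_sum_le _ _) ?_
    rw [show (s.card : ℝ) = ∑ _n ∈ s, (1:ℝ) by simp]
    exact Finset.sum_le_sum fun n _ => le_of_eq (norm_uexp _)
  by_cases hkN : k < N₀
  · -- small k : trivial bound
    refine le_trans (htriv _) ?_
    have h1 : ((Finset.Icc 1 k).card : ℝ) ≤ (N₀:ℝ) := by
      rw [Nat.card_Icc]
      exact_mod_cast (by omega : k + 1 - 1 ≤ N₀)
    calc ((Finset.Icc 1 k).card : ℝ) ≤ (N₀:ℝ) := h1
      _ = (N₀:ℝ) * 1 := by ring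
      _ ≤ ((N₀:ℝ) + 4/(α*a')) * (k:ℝ)^(1-α) := by
          apply mul_le_mul _ hk1 zero_le_one (by positivity)
          have : (0:ℝ) ≤ 4/(α*a') := by positivity
          linarith
  · push_neg at hkN
    -- split the sum
    have hsplit : ∑ n ∈ Finset.Icc 1 k, Complex.exp (2 * Real.pi * I * (((n : ℝ) ^ α * x : ℝ) : ℂ))
        = (∑ n ∈ Finset.Icc 1 (N₀-1), Complex.exp (2 * Real.pi * I * (((n : ℝ) ^ α * x : ℝ) : ℂ)))
          + ∑ n ∈ Finset.Icc N₀ k, Complex.exp (2 * Real.pi * I * (((n : ℝ) ^ α * x : ℝ) : ℂ)) := by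
      rw [show Finset.Icc 1 k = Finset.Ioc 0 k by rw [← Finset.Icc_add_one_left_eq_Ioc]; rfl,
          show Finset.Icc 1 (N₀-1) = Finset.Ioc 0 (N₀-1) by rw [← Finset.Icc_add_one_left_eq_Ioc]; rfl,
          show Finset.Icc N₀ k = Finset.Ioc (N₀-1) k by rw [← Finset.Icc_add_one_left_eq_Ioc]; congr 1]
      exact (Finset.sum_Ioc_consecutive _ (by omega) (by omega)).symm
    rw [hsplit]
    -- the Kusmin-Landau part
    set m : ℝ := α * a' * ((k:ℝ)+1)^(α-1) with hm_def
    have hm : 0 < m := by positivity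
    have hKL : ‖∑ n ∈ Finset.Icc N₀ k,
        Complex.exp (2 * Real.pi * I * (((n : ℝ) ^ α * x : ℝ) : ℂ))‖ ≤ 2/m := by
      apply kusmin_landau (fun n => (n:ℝ)^α * x) N₀ k hkN m hm
      · -- lower bound
        intro n hn1 hn2
        have ht : (1:ℝ) ≤ (n:ℝ) := by exact_mod_cast hN₀1.trans hn1
        have hcast : ((n+1 : ℕ):ℝ) = (n:ℝ)+1 := by push_cast; ring
        simp only [hcast]
        have hd := le_rpow_diff hα0 hα1 ht
        have hrk : ((k:ℝ)+1)^(α-1) ≤ ((n:ℝ)+1)^(α-1) := by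
          apply Real.rpow_le_rpow_of_nonpos (by linarith) (by exact_mod_cast Nat.succ_le_succ hn2) (by linarith)
        calc m = α * ((k:ℝ)+1)^(α-1) * a' := by rw [hm_def]; ring
          _ ≤ α * (((n:ℝ)+1)^(α-1)) * x := by
              apply mul_le_mul _ hax ha'.le (by positivity)
              exact mul_le_mul_of_nonneg_left hrk hα0.le
          _ ≤ (((n:ℝ)+1)^α - (n:ℝ)^α) * x := by
              apply mul_le_mul_of_nonneg_right _ hx0.le
              linarith
          _ = ((n:ℝ)+1)^α * x - (n:ℝ)^α * x := by ring
      · -- upper bound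
        intro n hn1 hn2
        have ht : (1:ℝ) ≤ (n:ℝ) := by exact_mod_cast hN₀1.trans hn1
        have hcast : ((n+1 : ℕ):ℝ) = (n:ℝ)+1 := by push_cast; ring
        simp only [hcast]
        have hd := rpow_diff_le hα0 hα1 ht
        have hrN : ((n:ℝ))^(α-1) ≤ ((N₀:ℝ))^(α-1) := by
          apply Real.rpow_le_rpow_of_nonpos (by exact_mod_cast hN₀1) (by exact_mod_cast hn1) (by linarith)
        have hhalf : α * b' * ((N₀:ℝ))^(α-1) ≤ 1/2 := by
          have hNpow : (0:ℝ) < (N₀:ℝ)^(1-α) := by positivity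
          have hNe : ((N₀:ℝ))^(α-1) = ((N₀:ℝ)^(1-α))⁻¹ := by
            rw [show α - 1 = -(1-α) by ring, Real.rpow_neg (by positivity)]
          rw [hNe]
          have h2ab : (0:ℝ) < 2*α*b' := by positivity
          have hinv : ((N₀:ℝ)^(1-α))⁻¹ ≤ (2*α*b')⁻¹ := by
            apply inv_anti₀ h2ab hNbig
          calc α * b' * ((N₀:ℝ)^(1-α))⁻¹ ≤ α * b' * (2*α*b')⁻¹ :=
                mul_le_mul_of_nonneg_left hinv (by positivity)
            _ = 1/2 := by field_simp
        calc ((n:ℝ)+1)^α * x - (n:ℝ)^α * x = (((n:ℝ)+1)^α - (n:ℝ)^α) * x := by ring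
          _ ≤ (α * (n:ℝ)^(α-1)) * x := mul_le_mul_of_nonneg_right hd hx0.le
          _ ≤ (α * ((N₀:ℝ))^(α-1)) * b' := by
              apply mul_le_mul _ hxb hx0.le (by positivity)
              exact mul_le_mul_of_nonneg_left hrN hα0.le
          _ = α * b' * ((N₀:ℝ))^(α-1) := by ring
          _ ≤ 1/2 := hhalf
      · -- monotonicity
        intro n hn1 hn2
        have ht : (1:ℝ) ≤ (n:ℝ) := by exact_mod_cast hN₀1.trans hn1
        have hcast1 : ((n+1 : ℕ):ℝ) = (n:ℝ)+1 := by push_cast; ring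
        have hcast2 : ((n+2 : ℕ):ℝ) = (n:ℝ)+2 := by push_cast; ring
        simp only [hcast1, hcast2]
        have h1 := rpow_diff_le hα0 hα1 (t := (n:ℝ)+1) (by linarith)
        have h2 := le_rpow_diff hα0 hα1 ht
        have e : ((n:ℝ)+1)+1 = (n:ℝ)+2 := by ring
        rw [e] at h1
        have : ((n:ℝ)+2)^α - ((n:ℝ)+1)^α ≤ ((n:ℝ)+1)^α - (n:ℝ)^α := by linarith
        calc ((n:ℝ)+2)^α * x - ((n:ℝ)+1)^α * x = (((n:ℝ)+2)^α - ((n:ℝ)+1)^α) * x := by ring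
          _ ≤ (((n:ℝ)+1)^α - (n:ℝ)^α) * x := mul_le_mul_of_nonneg_right this hx0.le
          _ = ((n:ℝ)+1)^α * x - (n:ℝ)^α * x := by ring
    -- bound 2/m
    have hmd : 2/m ≤ 4/(α*a') * (k:ℝ)^(1-α) := by
      have hk1' : (1:ℝ) ≤ (k:ℝ) := by exact_mod_cast hk
      have hke : ((k:ℝ)+1)^(α-1) = (((k:ℝ)+1)^(1-α))⁻¹ := by
        rw [show α - 1 = -(1-α) by ring, Real.rpow_neg (by positivity)]
      have hkpow1 : (0:ℝ) < ((k:ℝ)+1)^(1-α) := by positivity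
      have e1 : 2/m = 2/(α*a') * ((k:ℝ)+1)^(1-α) := by
        rw [hm_def, hke]
        field_simp
      rw [e1]
      have h2 : ((k:ℝ)+1)^(1-α) ≤ 2 * (k:ℝ)^(1-α) := by
        calc ((k:ℝ)+1)^(1-α) ≤ (2*(k:ℝ))^(1-α) :=
              Real.rpow_le_rpow (by linarith) (by linarith) h1α.le
          _ = 2^(1-α) * (k:ℝ)^(1-α) := Real.mul_rpow (by norm_num) (by positivity)
          _ ≤ 2 * (k:ℝ)^(1-α) := by
              apply mul_le_mul_of_nonneg_right _ (by positivity)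
              calc (2:ℝ)^(1-α) ≤ 2^(1:ℝ) := Real.rpow_le_rpow_of_exponent_le (by norm_num) (by linarith)
                _ = 2 := Real.rpow_one 2
      calc 2/(α*a') * ((k:ℝ)+1)^(1-α) ≤ 2/(α*a') * (2 * (k:ℝ)^(1-α)) :=
            mul_le_mul_of_nonneg_left h2 (by positivity)
        _ = 4/(α*a') * (k:ℝ)^(1-α) := by ring
    -- combine
    calc ‖(∑ n ∈ Finset.Icc 1 (N₀-1), Complex.exp (2 * Real.pi * I * (((n : ℝ) ^ α * x : ℝ) : ℂ)))
          + ∑ n ∈ Finset.Icc N₀ k, Complex.exp (2 * Real.pi * I * (((n : ℝ) ^ α * x : ℝ) : ℂ))‖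
        ≤ ‖∑ n ∈ Finset.Icc 1 (N₀-1), Complex.exp (2 * Real.pi * I * (((n : ℝ) ^ α * x : ℝ) : ℂ))‖
          + ‖∑ n ∈ Finset.Icc N₀ k, Complex.exp (2 * Real.pi * I * (((n : ℝ) ^ α * x : ℝ) : ℂ))‖ :=
          norm_add_le _ _
      _ ≤ ((Finset.Icc 1 (N₀-1)).card : ℝ) + 2/m := add_le_add (htriv _) hKL
      _ ≤ (N₀:ℝ) + 4/(α*a') * (k:ℝ)^(1-α) := by
          apply add_le_add _ hmd
          rw [Nat.card_Icc]
          exact_mod_cast (by omega : N₀ - 1 + 1 - 1 ≤ N₀)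
      _ ≤ ((N₀:ℝ) + 4/(α*a')) * (k:ℝ)^(1-α) := by
          have hN0 : (0:ℝ) ≤ (N₀:ℝ) := by positivity
          have : (N₀:ℝ) * 1 ≤ (N₀:ℝ) * (k:ℝ)^(1-α) := mul_le_mul_of_nonneg_left hk1 hN0
          nlinarith
end

section
/- Let f : [u, v] → ℝ be twice continuously differentiable with θ ≤ |f'(y)| ≤ 1 − θ for all y ∈ [u,v] (for some θ ∈ (0, 1/2)) and f''(y) ≠ 0 on [u,v]. Then |∑_{u ≤ n < v} e^{2πi f(n)}| ≤ C·θ^{−1} for an absolute constant C. -/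
open Finset in
lemma vdc_Ico_top (a b : ℤ) (h : a ≤ b) : Finset.Ico a (b+1) = insert b (Finset.Ico a b) := by
  ext n; simp only [Finset.mem_Ico, Finset.mem_insert]; omega

open Finset in
lemma vdc_Ico_bot (a b : ℤ) (h : a < b) : Finset.Ico a b = insert a (Finset.Ico (a+1) b) := by
  ext n; simp only [Finset.mem_Ico, Finset.mem_insert]; omega

lemma vdc_tel (c : ℤ → ℝ) (a m : ℤ) (h : a ≤ m) :
    ∑ n ∈ Finset.Ico a m, (c (n+1) - c n) = c m - c a := by
  refine Int.le_induction (motive := fun m _ => ∑ n ∈ Finset.Ico a m, (c (n+1) - c n) = c m - c a) ?_ ?_ m h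
  · simp
  · intro n hn ih
    rw [vdc_Ico_top a n hn, Finset.sum_insert (by simp), ih]; ring

lemma vdc_tel_abs (c : ℤ → ℝ) (a m : ℤ) (h : a ≤ m)
    (hmono : (∀ n, a ≤ n → n < m → c n ≤ c (n+1)) ∨ (∀ n, a ≤ n → n < m → c (n+1) ≤ c n)) :
    ∑ n ∈ Finset.Ico a m, |c (n+1) - c n| ≤ |c a| + |c m| := by
  rcases hmono with hm1 | hm1
  · have : ∑ n ∈ Finset.Ico a m, |c (n+1) - c n| = c m - c a := by
      rw [← vdc_tel c a m h]
      apply Finset.sum_congr rfl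
      intro n hn
      simp only [Finset.mem_Ico] at hn
      rw [abs_of_nonneg (by linarith [hm1 n hn.1 hn.2])]
    rw [this]
    cases abs_cases (c a) <;> cases abs_cases (c m) <;> linarith
  · have : ∑ n ∈ Finset.Ico a m, |c (n+1) - c n| = c a - c m := by
      have := vdc_tel c a m h
      rw [show c a - c m = -(c m - c a) by ring, ← this, ← Finset.sum_neg_distrib]
      apply Finset.sum_congr rfl
      intro n hn
      simp only [Finset.mem_Ico] at hn
      rw [abs_of_nonpos (by linarith [hm1 n hn.1 hn.2])]
    rw [this]
    cases abs_cases (c a) <;> cases abs_cases (c m) <;> linarith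

open Real in
lemma vdc_sin_lb {θ x : ℝ} (hθ : 0 < θ) (hθ2 : θ < 1/2) (hx : x ∈ Set.Icc θ (1-θ)) :
    2*θ ≤ Real.sin (π*x) := by
  obtain ⟨hx1, hx2⟩ := hx
  have hπ := Real.pi_pos
  rcases le_or_gt x (1/2) with h | h
  · have := Real.mul_le_sin (x := π*x) (by nlinarith) (by nlinarith)
    calc 2*θ ≤ 2*x := by linarith
    _ = 2/π*(π*x) := by field_simp
    _ ≤ _ := this
  · have h1x : π*x = π - π*(1-x) := by ring
    rw [h1x, Real.sin_pi_sub]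
    have := Real.mul_le_sin (x := π*(1-x)) (by nlinarith) (by nlinarith)
    calc 2*θ ≤ 2*(1-x) := by linarith
    _ = 2/π*(π*(1-x)) := by field_simp
    _ ≤ _ := this

open Real in
lemma vdc_cot_bound {θ x : ℝ} (hθ : 0 < θ) (hθ2 : θ < 1/2) (hx : x ∈ Set.Icc θ (1-θ)) :
    |Real.cos (π*x) / Real.sin (π*x)| ≤ 1/(2*θ) := by
  have hs := vdc_sin_lb hθ hθ2 hx
  rw [abs_div, div_le_div_iff₀ (by rw [abs_of_pos (by linarith)]; linarith) (by positivity)]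
  rw [abs_of_pos (show (0:ℝ) < Real.sin (π*x) by linarith)]
  calc |Real.cos (π*x)| * (2*θ) ≤ 1 * (2*θ) := by
        have := Real.abs_cos_le_one (π*x); nlinarith
    _ ≤ 1 * Real.sin (π*x) := by nlinarith

open Real in
lemma vdc_cot_anti {θ x y : ℝ} (hθ : 0 < θ) (hθ2 : θ < 1/2) (hx : x ∈ Set.Icc θ (1-θ))
    (hy : y ∈ Set.Icc θ (1-θ)) (hxy : x ≤ y) :
    Real.cos (π*y) / Real.sin (π*y) ≤ Real.cos (π*x) / Real.sin (π*x) := by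
  have hsx := vdc_sin_lb hθ hθ2 hx
  have hsy := vdc_sin_lb hθ hθ2 hy
  have hπ := Real.pi_pos
  rw [div_le_div_iff₀ (by linarith) (by linarith)]
  have key : 0 ≤ Real.sin (π*y - π*x) := by
    apply Real.sin_nonneg_of_nonneg_of_le_pi
    · nlinarith [hx.1, hy.1]
    · obtain ⟨hx1, hx2⟩ := hx; obtain ⟨hy1, hy2⟩ := hy; nlinarith
  rw [Real.sin_sub] at key
  nlinarith

lemma vdc_w_id (x : ℝ) (hs : Real.sin (Real.pi*x) ≠ 0) :
    (Complex.exp (2*Real.pi*Complex.I*x) - 1) *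
      (-(1/2) - (Complex.I/2) * ((Real.cos (Real.pi*x) : ℂ)/(Real.sin (Real.pi*x) : ℂ))) = 1 := by
  have h1 : (2*(Real.pi:ℂ)*Complex.I*(x:ℂ)) = ((Real.pi*x : ℝ):ℂ)*Complex.I + ((Real.pi*x : ℝ):ℂ)*Complex.I := by
    push_cast; ring
  rw [h1, Complex.exp_add, Complex.exp_mul_I, ← Complex.ofReal_cos, ← Complex.ofReal_sin]
  have hs' : ((Real.sin (Real.pi*x) : ℝ):ℂ) ≠ 0 := Complex.ofReal_ne_zero.2 hs
  have pyth : ((Real.sin (Real.pi*x) : ℝ):ℂ)^2 + ((Real.cos (Real.pi*x) : ℝ):ℂ)^2 = 1 := by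
    exact_mod_cast congrArg (Complex.ofReal) (Real.sin_sq_add_cos_sq (Real.pi*x))
  set c := ((Real.cos (Real.pi*x) : ℝ):ℂ)
  set s := ((Real.sin (Real.pi*x) : ℝ):ℂ)
  have hw : (-(1/2) - (Complex.I/2) * (c/s)) = -(s + Complex.I*c)/(2*s) := by
    field_simp; ring
  have h2 : (c + s*Complex.I)*(c + s*Complex.I) - 1 = -2*s^2 + 2*c*s*Complex.I := by
    linear_combination s^2*Complex.I_sq + pyth
  rw [hw, h2]
  field_simp
  linear_combination pyth - c^2*Complex.I_sq

open Real Set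

lemma vdc_norm_one (t : ℝ) : ‖Complex.exp (2*(π:ℂ)*Complex.I*(t:ℂ))‖ = 1 := by
  have h : (2*(π:ℂ)*Complex.I*(t:ℂ)) = ((2*π*t : ℝ):ℂ)*Complex.I := by push_cast; ring
  rw [h, Complex.norm_exp_ofReal_mul_I]

set_option maxHeartbeats 1000000 in
lemma vdc_key (u v θ : ℝ) (f : ℝ → ℝ)
    (hθ : θ ∈ Set.Ioo (0:ℝ) (1/2))
    (hf : ContDiffOn ℝ 2 f (Set.Icc u v))
    (hd1 : ∀ y ∈ Set.Icc u v, θ ≤ deriv f y ∧ deriv f y ≤ 1 - θ)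
    (hd2 : ∀ y ∈ Set.Icc u v, deriv (deriv f) y ≠ 0) :
    ‖∑ n ∈ Finset.Ico ⌈u⌉ ⌈v⌉, Complex.exp (2 * π * Complex.I * ((f n : ℝ) : ℂ))‖ ≤ 2/θ := by
  obtain ⟨hθ0, hθ2⟩ := hθ
  set a := ⌈u⌉ with ha
  set b := ⌈v⌉ with hb
  set E : ℤ → ℂ := fun n => Complex.exp (2 * (π:ℂ) * Complex.I * ((f n : ℝ) : ℂ)) with hE
  have hEnorm : ∀ n : ℤ, ‖E n‖ = 1 := fun n => vdc_norm_one _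
  -- trivial cases
  rcases le_or_gt b a with hba | hab
  · rw [Finset.Ico_eq_empty (by exact_mod_cast not_lt.2 hba)]
    simp; positivity
  rcases le_or_gt b (a+1) with hba1 | hab2
  · have : b = a + 1 := le_antisymm hba1 hab
    have hsing : Finset.Ico a (a+1) = {a} := by
      ext n; simp only [Finset.mem_Ico, Finset.mem_singleton]; omega
    rw [this, hsing, Finset.sum_singleton, hEnorm]
    rw [div_eq_mul_inv]
    nlinarith [inv_pos.2 hθ0, ((one_lt_inv₀ hθ0).2 (by linarith)).le]
  -- main case: a + 2 ≤ b
  have hab2' : a + 2 ≤ b := by omega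
  have hua : u ≤ (a:ℝ) := Int.le_ceil u
  have hbv : (b:ℝ) - 1 < v := by
    have h := Int.ceil_lt_add_one v
    have : (b:ℝ) < v + 1 := by exact_mod_cast h
    linarith
  have hcast : ((a:ℝ)) + 2 ≤ (b:ℝ) := by exact_mod_cast hab2'
  have huv : u < v := by linarith
  have hπ := Real.pi_pos
  have hdiff : DifferentiableOn ℝ f (Set.Icc u v) := hf.differentiableOn (by norm_num)
  have hfd : ∀ x ∈ Set.Ioo u v, HasDerivAt f (deriv f x) x := by
    intro x hx
    exact ((hdiff x (Set.Ioo_subset_Icc_self hx)).differentiableAt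
      (Icc_mem_nhds hx.1 hx.2)).hasDerivAt
  have hf'd : ∀ y ∈ Set.Icc u v, DifferentiableAt ℝ (deriv f) y := by
    intro y hy
    by_contra h
    exact hd2 y hy (deriv_zero_of_not_differentiableAt h)
  have hf'c : ContinuousOn (deriv f) (Set.Icc u v) :=
    fun y hy => ((hf'd y hy).continuousAt).continuousWithinAt
  have hsign : (∀ x ∈ Set.Icc u v, deriv (deriv f) x < 0) ∨
      (∀ x ∈ Set.Icc u v, 0 < deriv (deriv f) x) :=
    hasDerivWithinAt_forall_lt_or_forall_gt_of_forall_ne (convex_Icc u v)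
      (fun x hx => ((hf'd x hx).hasDerivAt).hasDerivWithinAt) hd2
  have hmono : MonotoneOn (deriv f) (Set.Icc u v) ∨ AntitoneOn (deriv f) (Set.Icc u v) := by
    rcases hsign with h | h
    · right
      exact (strictAntiOn_of_deriv_neg (convex_Icc u v) hf'c
        (fun x hx => h x (interior_subset hx))).antitoneOn
    · left
      exact (strictMonoOn_of_deriv_pos (convex_Icc u v) hf'c
        (fun x hx => h x (interior_subset hx))).monotoneOn
  set g : ℤ → ℝ := fun n => f ((n:ℝ)+1) - f (n:ℝ) with hgdef
  have hmvt : ∀ n : ℤ, a ≤ n → n ≤ b-2 → ∃ ξ ∈ Set.Ioo ((n:ℝ)) ((n:ℝ)+1), deriv f ξ = g n := by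
    intro n h1 h2
    have hn1 : u ≤ (n:ℝ) := le_trans hua (by exact_mod_cast h1)
    have hn2 : (n:ℝ)+1 ≤ v := by
      have h3 : (n:ℝ) ≤ (b:ℝ) - 2 := by
        have : ((n:ℝ)) ≤ ((b-2 : ℤ) : ℝ) := by exact_mod_cast h2
        push_cast at this; linarith
      linarith
    obtain ⟨c, hc1, hc2⟩ := exists_hasDerivAt_eq_slope f (deriv f)
      (by linarith : (n:ℝ) < (n:ℝ)+1)
      (hf.continuousOn.mono (Set.Icc_subset_Icc hn1 hn2))
      (fun x hx => hfd x ⟨lt_of_le_of_lt hn1 hx.1, lt_of_lt_of_le hx.2 hn2⟩)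
    refine ⟨c, hc1, ?_⟩
    rw [hc2, add_sub_cancel_left, div_one]
  have hmvt' : ∀ n : ℤ, ∃ ξ : ℝ, (a ≤ n ∧ n ≤ b-2) →
      (ξ ∈ Set.Ioo ((n:ℝ)) ((n:ℝ)+1) ∧ deriv f ξ = g n) := by
    intro n
    by_cases h : a ≤ n ∧ n ≤ b-2
    · obtain ⟨ξ, h1, h2⟩ := hmvt n h.1 h.2
      exact ⟨ξ, fun _ => ⟨h1, h2⟩⟩
    · exact ⟨0, fun hc => absurd hc h⟩
  choose ξ hξ using hmvt'
  have hξIcc : ∀ n : ℤ, a ≤ n → n ≤ b-2 → ξ n ∈ Set.Icc u v := by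
    intro n h1 h2
    obtain ⟨hm, _⟩ := hξ n ⟨h1, h2⟩
    have hn1 : u ≤ (n:ℝ) := le_trans hua (by exact_mod_cast h1)
    have hn2 : (n:ℝ)+1 ≤ v := by
      have : ((n:ℝ)) ≤ ((b-2 : ℤ) : ℝ) := by exact_mod_cast h2
      push_cast at this; linarith
    exact ⟨le_trans hn1 hm.1.le, le_trans hm.2.le hn2⟩
  have hgmem : ∀ n : ℤ, a ≤ n → n ≤ b-2 → g n ∈ Set.Icc θ (1-θ) := by
    intro n h1 h2
    obtain ⟨_, he⟩ := hξ n ⟨h1, h2⟩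
    rw [← he]
    exact ⟨(hd1 _ (hξIcc n h1 h2)).1, (hd1 _ (hξIcc n h1 h2)).2⟩
  have hgm : (∀ n : ℤ, a ≤ n → n+1 ≤ b-2 → g n ≤ g (n+1)) ∨
      (∀ n : ℤ, a ≤ n → n+1 ≤ b-2 → g (n+1) ≤ g n) := by
    have hord : ∀ n : ℤ, a ≤ n → n+1 ≤ b-2 → ξ n ≤ ξ (n+1) := by
      intro n h1 h2
      obtain ⟨hm1, _⟩ := hξ n ⟨h1, by omega⟩
      obtain ⟨hm2, _⟩ := hξ (n+1) ⟨by omega, h2⟩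
      push_cast at hm2
      linarith [hm1.2, hm2.1]
    rcases hmono with h | h
    · left; intro n h1 h2
      obtain ⟨_, he1⟩ := hξ n ⟨h1, by omega⟩
      obtain ⟨_, he2⟩ := hξ (n+1) ⟨by omega, h2⟩
      rw [← he1, ← he2]
      exact h (hξIcc n h1 (by omega)) (hξIcc (n+1) (by omega) h2) (hord n h1 h2)
    · right; intro n h1 h2
      obtain ⟨_, he1⟩ := hξ n ⟨h1, by omega⟩
      obtain ⟨_, he2⟩ := hξ (n+1) ⟨by omega, h2⟩
      rw [← he1, ← he2]
      exact h (hξIcc n h1 (by omega)) (hξIcc (n+1) (by omega) h2) (hord n h1 h2)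
  -- analytic quantities
  set c : ℤ → ℝ := fun n => Real.cos (π * g n) / Real.sin (π * g n) with hcdef
  set W : ℤ → ℂ := fun n =>
    -(1/2) - (Complex.I/2) * (((Real.cos (π * g n) : ℝ) : ℂ)/((Real.sin (π * g n) : ℝ) : ℂ))
    with hWdef
  have hsin : ∀ n : ℤ, a ≤ n → n ≤ b-2 → 2*θ ≤ Real.sin (π * g n) :=
    fun n h1 h2 => vdc_sin_lb hθ0 hθ2 (hgmem n h1 h2)
  have hsinne : ∀ n : ℤ, a ≤ n → n ≤ b-2 → Real.sin (π * g n) ≠ 0 :=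
    fun n h1 h2 => ne_of_gt (lt_of_lt_of_le (by positivity) (hsin n h1 h2))
  have hcb : ∀ n : ℤ, a ≤ n → n ≤ b-2 → |c n| ≤ 1/(2*θ) :=
    fun n h1 h2 => vdc_cot_bound hθ0 hθ2 (hgmem n h1 h2)
  have hWc : ∀ n : ℤ, W n = -(1/2) - (Complex.I/2) * ((c n : ℝ) : ℂ) := by
    intro n
    simp only [hWdef, hcdef]
    push_cast
    ring
  have hWnorm : ∀ n : ℤ, a ≤ n → n ≤ b-2 → ‖W n‖ ≤ 1/(2*θ) := by
    intro n h1 h2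
    rw [hWc n]
    have h3 : ‖-(1/2 : ℂ) - (Complex.I/2) * ((c n : ℝ) : ℂ)‖
        ≤ ‖-(1/2 : ℂ)‖ + ‖(Complex.I/2) * ((c n : ℝ) : ℂ)‖ := norm_sub_le _ _
    have h4 : ‖-(1/2 : ℂ)‖ = 1/2 := by simp
    have h5 : ‖(Complex.I/2) * ((c n : ℝ) : ℂ)‖ = (1/2) * |c n| := by
      rw [norm_mul, norm_div, Complex.norm_I, Complex.norm_real]
      simp [Real.norm_eq_abs]
    have := hcb n h1 h2
    rw [h4, h5] at h3
    have h7 : |c n| * (2*θ) ≤ 1 := (le_div_iff₀ (by positivity)).1 (hcb n h1 h2)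
    have h6 : (1:ℝ)/2 + (1/2) * |c n| ≤ 1/(2*θ) := by
      rw [le_div_iff₀ (by positivity)]
      nlinarith [abs_nonneg (c n)]
    linarith
  have hkey : ∀ n : ℤ, a ≤ n → n ≤ b-2 → E n = (E (n+1) - E n) * W n := by
    intro n h1 h2
    have hstep : E (n+1) = E n * Complex.exp (2*(π:ℂ)*Complex.I*((g n : ℝ):ℂ)) := by
      simp only [hE]
      rw [← Complex.exp_add]
      congr 1
      simp only [hgdef]
      push_cast
      ring
    have hid : (Complex.exp (2*(π:ℂ)*Complex.I*((g n : ℝ):ℂ)) - 1) * W n = 1 := by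
      rw [hWc n]
      convert vdc_w_id (g n) (hsinne n h1 h2) using 2
      simp only [hcdef]
      push_cast
      ring
    calc E n = E n * ((Complex.exp (2*(π:ℂ)*Complex.I*((g n : ℝ):ℂ)) - 1) * W n) := by
          rw [hid, mul_one]
      _ = (E (n+1) - E n) * W n := by rw [hstep]; ring
  -- Abel summation
  have hsplit : ∑ n ∈ Finset.Ico a b, E n = ∑ n ∈ Finset.Ico a (b-1), E n + E (b-1) := by
    have h1 : Finset.Ico a b = insert (b-1) (Finset.Ico a (b-1)) := by
      ext n; simp only [Finset.mem_Ico, Finset.mem_insert]; omega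
    rw [h1, Finset.sum_insert (by simp [Finset.mem_Ico])]
    ring
  have habel : ∑ n ∈ Finset.Ico a (b-1), E n
      = ∑ n ∈ Finset.Ico (a+1) (b-1), E n * (W (n-1) - W n) + E (b-1) * W (b-2) - E a * W a := by
    have h0 : ∑ n ∈ Finset.Ico a (b-1), E n = ∑ n ∈ Finset.Ico a (b-1), (E (n+1) - E n) * W n :=
      Finset.sum_congr rfl (fun n hn => by
        simp only [Finset.mem_Ico] at hn
        exact hkey n hn.1 (by omega))
    have h2 : ∑ n ∈ Finset.Ico a (b-1), E (n+1) * W n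
        = ∑ n ∈ Finset.Ico (a+1) (b-1+1), E n * W (n-1) := by
      rw [← Finset.sum_Ico_add' (fun x => E x * W (x-1)) a (b-1) 1]
      apply Finset.sum_congr rfl
      intro n hn
      simp only [add_sub_cancel_right]
    have h3 : Finset.Ico (a+1) (b-1+1) = insert (b-1) (Finset.Ico (a+1) (b-1)) := by
      ext n; simp only [Finset.mem_Ico, Finset.mem_insert]; omega
    have h4 : Finset.Ico a (b-1) = insert a (Finset.Ico (a+1) (b-1)) := by
      ext n; simp only [Finset.mem_Ico, Finset.mem_insert]; omega
    have h5 : ∑ n ∈ Finset.Ico (a+1) (b-1), E n * (W (n-1) - W n)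
        = ∑ n ∈ Finset.Ico (a+1) (b-1), E n * W (n-1)
          - ∑ n ∈ Finset.Ico (a+1) (b-1), E n * W n := by
      rw [← Finset.sum_sub_distrib]
      apply Finset.sum_congr rfl
      intros; ring
    calc ∑ n ∈ Finset.Ico a (b-1), E n
        = ∑ n ∈ Finset.Ico a (b-1), (E (n+1) - E n) * W n := h0
      _ = ∑ n ∈ Finset.Ico a (b-1), E (n+1) * W n - ∑ n ∈ Finset.Ico a (b-1), E n * W n := by
          rw [← Finset.sum_sub_distrib]
          apply Finset.sum_congr rfl
          intros; ring
      _ = (∑ n ∈ Finset.Ico (a+1) (b-1), E n * W (n-1) + E (b-1) * W (b-1-1))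
          - (E a * W a + ∑ n ∈ Finset.Ico (a+1) (b-1), E n * W n) := by
          rw [h2, h3, h4, Finset.sum_insert (by simp [Finset.mem_Ico]),
            Finset.sum_insert (by simp [Finset.mem_Ico])]
          ring
      _ = ∑ n ∈ Finset.Ico (a+1) (b-1), E n * (W (n-1) - W n) + E (b-1) * W (b-2) - E a * W a := by
          rw [h5, show b-1-1 = b-2 from by ring]
          ring
  -- norm bounds
  have hWd : ∀ n : ℤ, ‖W n - W (n+1)‖ = (1/2) * |c (n+1) - c n| := by
    intro n
    have h1 : W n - W (n+1) = (Complex.I/2) * (((c (n+1) - c n : ℝ)) : ℂ) := by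
      rw [hWc n, hWc (n+1)]
      push_cast
      ring
    rw [h1, norm_mul, norm_div, Complex.norm_I, Complex.norm_real]
    simp [Real.norm_eq_abs]
  have h6 : ∑ n ∈ Finset.Ico (a+1) (b-1), ‖W (n-1) - W n‖
      = ∑ n ∈ Finset.Ico a (b-2), ‖W n - W (n+1)‖ := by
    rw [show b-1 = b-2+1 from by ring,
      ← Finset.sum_Ico_add' (fun x => ‖W (x-1) - W x‖) a (b-2) 1]
    apply Finset.sum_congr rfl
    intro n hn
    simp only [add_sub_cancel_right]
  have htel : ∑ n ∈ Finset.Ico a (b-2), ‖W n - W (n+1)‖ ≤ (1/2) * (|c a| + |c (b-2)|) := by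
    have h7 : ∑ n ∈ Finset.Ico a (b-2), ‖W n - W (n+1)‖
        = (1/2) * ∑ n ∈ Finset.Ico a (b-2), |c (n+1) - c n| := by
      rw [Finset.mul_sum]
      exact Finset.sum_congr rfl (fun n _ => hWd n)
    rw [h7]
    have h8 : ∑ n ∈ Finset.Ico a (b-2), |c (n+1) - c n| ≤ |c a| + |c (b-2)| := by
      apply vdc_tel_abs c a (b-2) (by omega)
      rcases hgm with h | h
      · right
        intro n h1 h2
        exact vdc_cot_anti hθ0 hθ2 (hgmem n h1 (by omega)) (hgmem (n+1) (by omega) (by omega))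
          (h n h1 (by omega))
      · left
        intro n h1 h2
        exact vdc_cot_anti hθ0 hθ2 (hgmem (n+1) (by omega) (by omega)) (hgmem n h1 (by omega))
          (h n h1 (by omega))
    linarith
  have hS1 : ‖∑ n ∈ Finset.Ico a (b-1), E n‖ ≤ 3/(2*θ) := by
    rw [habel]
    have n1 : ‖∑ n ∈ Finset.Ico (a+1) (b-1), E n * (W (n-1) - W n)‖
        ≤ ∑ n ∈ Finset.Ico (a+1) (b-1), ‖W (n-1) - W n‖ := by
      refine le_trans (norm_sum_le _ _) ?_
      apply Finset.sum_le_sum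
      intro n _
      rw [norm_mul, hEnorm, one_mul]
    have n2 : ‖E (b-1) * W (b-2)‖ ≤ 1/(2*θ) := by
      rw [norm_mul, hEnorm, one_mul]
      exact hWnorm (b-2) (by omega) (by omega)
    have n3 : ‖E a * W a‖ ≤ 1/(2*θ) := by
      rw [norm_mul, hEnorm, one_mul]
      exact hWnorm a (by omega) (by omega)
    have n4 : ∑ n ∈ Finset.Ico (a+1) (b-1), ‖W (n-1) - W n‖ ≤ 1/(2*θ) := by
      rw [h6]
      refine le_trans htel ?_
      have := hcb a (by omega) (by omega)
      have := hcb (b-2) (by omega) (by omega)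
      linarith
    calc ‖∑ n ∈ Finset.Ico (a+1) (b-1), E n * (W (n-1) - W n) + E (b-1) * W (b-2) - E a * W a‖
        ≤ ‖∑ n ∈ Finset.Ico (a+1) (b-1), E n * (W (n-1) - W n) + E (b-1) * W (b-2)‖
          + ‖E a * W a‖ := norm_sub_le _ _
      _ ≤ ‖∑ n ∈ Finset.Ico (a+1) (b-1), E n * (W (n-1) - W n)‖ + ‖E (b-1) * W (b-2)‖
          + ‖E a * W a‖ := by gcongr; exact norm_add_le _ _
      _ ≤ 1/(2*θ) + 1/(2*θ) + 1/(2*θ) := by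
          exact add_le_add (add_le_add (le_trans n1 n4) n2) n3
      _ = 3/(2*θ) := by ring
  calc ‖∑ n ∈ Finset.Ico a b, E n‖
      = ‖∑ n ∈ Finset.Ico a (b-1), E n + E (b-1)‖ := by rw [hsplit]
    _ ≤ ‖∑ n ∈ Finset.Ico a (b-1), E n‖ + ‖E (b-1)‖ := norm_add_le _ _
    _ ≤ 3/(2*θ) + 1 := by rw [hEnorm]; gcongr
    _ ≤ 2/θ := by
        rw [div_add' _ _ _ (by positivity), div_le_div_iff₀ (by positivity) (by positivity)]
        nlinarith

open Complex in
theorem stmt7 :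
    ∃ C > 0, ∀ (u v θ : ℝ) (f : ℝ → ℝ),
      θ ∈ Set.Ioo (0:ℝ) (1/2) →
      ContDiffOn ℝ 2 f (Set.Icc u v) →
      (∀ y ∈ Set.Icc u v, θ ≤ |deriv f y| ∧ |deriv f y| ≤ 1 - θ) →
      (∀ y ∈ Set.Icc u v, deriv (deriv f) y ≠ 0) →
      ‖∑ n ∈ Finset.Ico ⌈u⌉ ⌈v⌉, Complex.exp (2 * Real.pi * I * ((f n : ℝ) : ℂ))‖ ≤
        C * θ⁻¹ := by
  refine ⟨2, by norm_num, ?_⟩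
  intro u v θ f hθ hf hd1 hd2
  have hθ0 := hθ.1
  have hθ2 := hθ.2
  have h2θ : (2:ℝ)/θ = 2 * θ⁻¹ := by rw [div_eq_mul_inv]
  rcases lt_or_ge v u with hvu | huv
  · have hle : ⌈v⌉ ≤ ⌈u⌉ := Int.ceil_le_ceil hvu.le
    rw [Finset.Ico_eq_empty (by exact_mod_cast not_lt.2 hle)]
    simp
    positivity
  have hne0 : ∀ y ∈ Set.Icc u v, deriv f y ≠ 0 := by
    intro y hy h0
    have := (hd1 y hy).1
    rw [h0] at this
    simp at this
    linarith
  have hf'd : ∀ y ∈ Set.Icc u v, DifferentiableAt ℝ (deriv f) y := by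
    intro y hy
    by_contra h
    exact hd2 y hy (deriv_zero_of_not_differentiableAt h)
  have hf'c : ContinuousOn (deriv f) (Set.Icc u v) :=
    fun y hy => ((hf'd y hy).continuousAt).continuousWithinAt
  by_cases hpos : ∀ y ∈ Set.Icc u v, 0 < deriv f y
  · have hkey := vdc_key u v θ f hθ hf (fun y hy => by
      have h1 := (hd1 y hy).1
      have h2 := (hd1 y hy).2
      rw [abs_of_pos (hpos y hy)] at h1 h2
      exact ⟨h1, h2⟩) hd2
    rw [h2θ] at hkey
    exact hkey
  · push_neg at hpos
    obtain ⟨y0, hy0, hy0n⟩ := hpos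
    have hy0n' : deriv f y0 < 0 := lt_of_le_of_ne hy0n (hne0 y0 hy0)
    have hneg : ∀ y ∈ Set.Icc u v, deriv f y < 0 := by
      intro y hy
      by_contra hge
      push_neg at hge
      have hgt : 0 < deriv f y := lt_of_le_of_ne hge (Ne.symm (hne0 y hy))
      have hsub : Set.uIcc y0 y ⊆ Set.Icc u v :=
        (Set.ordConnected_Icc).uIcc_subset hy0 hy
      have hiv := intermediate_value_uIcc (hf'c.mono hsub)
      have h0mem : (0:ℝ) ∈ Set.uIcc (deriv f y0) (deriv f y) := by
        rw [Set.mem_uIcc]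
        left
        exact ⟨hy0n'.le, hgt.le⟩
      obtain ⟨z, hz, hz0⟩ := hiv h0mem
      exact hne0 z (hsub hz) hz0
    have hFd1 : ∀ y ∈ Set.Icc u v, θ ≤ deriv (fun x => -f x) y ∧ deriv (fun x => -f x) y ≤ 1 - θ := by
      intro y hy
      rw [deriv.fun_neg]
      have h1 := (hd1 y hy).1
      have h2 := (hd1 y hy).2
      rw [abs_of_neg (hneg y hy)] at h1 h2
      exact ⟨h1, h2⟩
    have hFd2 : ∀ y ∈ Set.Icc u v, deriv (deriv (fun x => -f x)) y ≠ 0 := by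
      intro y hy
      rw [deriv.fun_neg', deriv.fun_neg]
      simpa using hd2 y hy
    have hkey := vdc_key u v θ (fun x => -f x) hθ hf.neg hFd1 hFd2
    have hconj : ∑ n ∈ Finset.Ico ⌈u⌉ ⌈v⌉,
        Complex.exp (2 * (Real.pi:ℂ) * Complex.I * (((fun x => -f x) (n:ℝ) : ℝ) : ℂ))
        = (starRingEnd ℂ) (∑ n ∈ Finset.Ico ⌈u⌉ ⌈v⌉,
            Complex.exp (2 * (Real.pi:ℂ) * Complex.I * ((f (n:ℝ) : ℝ) : ℂ))) := by
      rw [map_sum]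
      apply Finset.sum_congr rfl
      intro n _
      rw [← Complex.exp_conj]
      congr 1
      simp only [map_mul, Complex.conj_I, Complex.conj_ofReal, map_ofNat]
      push_cast
      ring
    rw [hconj, RCLike.norm_conj] at hkey
    rw [h2θ] at hkey
    exact hkey
end

section
/- Let α ∈ (0,1) be real. Suppose {c_k} is a sequence of positive reals with c_k ≤ A·c_l for all k ≥ l (A > 0 a constant). If the series ∑_{k=1}^∞ c_k·sin(k^α·x) converges at some point x ≠ 0, then c_k·k^{1−α} → 0 as k → ∞. -/
open Filter Real Finset

private lemma incr_le {α : ℝ} (h0 : 0 < α) (h1 : α < 1) {t : ℝ} (ht : 1 ≤ t) :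
    (t + 1) ^ α ≤ t ^ α + α * t ^ (α - 1) := by
  have ht0 : 0 < t := lt_of_lt_of_le one_pos ht
  have hinv : (0:ℝ) < 1 / t := by positivity
  have key : (1 + 1 / t) ^ α ≤ 1 + α * (1 / t) :=
    rpow_one_add_le_one_add_mul_self (by linarith) h0.le h1.le
  have h2 : (t + 1) ^ α = t ^ α * (1 + 1 / t) ^ α := by
    rw [← Real.mul_rpow ht0.le (by positivity)]
    congr 1
    field_simp
  rw [h2]
  have h3 : t ^ α * (1 + α * (1 / t)) = t ^ α + α * t ^ (α - 1) := by
    rw [Real.rpow_sub ht0, Real.rpow_one]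
    field_simp
  calc t ^ α * (1 + 1 / t) ^ α ≤ t ^ α * (1 + α * (1 / t)) :=
        mul_le_mul_of_nonneg_left key (Real.rpow_nonneg ht0.le α)
    _ = _ := h3

private lemma sin_lb {θ : ℝ} (h1 : π / 4 ≤ θ) (h2 : θ ≤ 3 * π / 4) :
    Real.sqrt 2 / 2 ≤ Real.sin θ := by
  have hπ := Real.pi_pos
  rcases le_total θ (π / 2) with h | h
  · rw [← Real.sin_pi_div_four]
    exact Real.strictMonoOn_sin.monotoneOn ⟨by linarith, by linarith⟩ ⟨by linarith, h⟩ h1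
  · rw [← Real.sin_pi_sub, ← Real.sin_pi_div_four]
    exact Real.strictMonoOn_sin.monotoneOn ⟨by linarith, by linarith⟩ ⟨by linarith, by linarith⟩
      (by linarith)

set_option maxHeartbeats 1000000 in
private lemma key_pos (α : ℝ) (hα : α ∈ Set.Ioo (0:ℝ) 1) (c : ℕ → ℝ) (A : ℝ) (hA : 0 < A)
    (hc : ∀ k, 0 < c k) (hcm : ∀ k l, l ≤ k → c k ≤ A * c l)
    (x : ℝ) (hx : 0 < x) (s : ℝ)
    (hconv : Filter.Tendsto (fun N => ∑ k ∈ Finset.Icc 1 N, c k * Real.sin ((k : ℝ) ^ α * x))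
      Filter.atTop (nhds s)) :
    Filter.Tendsto (fun k => c k * (k : ℝ) ^ (1 - α)) Filter.atTop (nhds 0) := by
  classical
  obtain ⟨hα0, hα1⟩ := hα
  have hπ := Real.pi_pos
  set g : ℕ → ℝ := fun k => c k * Real.sin ((k : ℝ) ^ α * x) with hgdef
  set f : ℕ → ℝ := fun k => (k : ℝ) ^ α * x with hfdef
  have hconv' : Filter.Tendsto (fun N => ∑ k ∈ Finset.Icc 1 N, g k) atTop (nhds s) := hconv
  -- f tendsto atTop
  have hftop : Tendsto f atTop atTop := by
    apply Tendsto.atTop_mul_const hx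
    exact (tendsto_rpow_atTop hα0).comp tendsto_natCast_atTop_atTop
  have hfmono : ∀ {a b : ℕ}, a ≤ b → f a ≤ f b := by
    intro a b hab
    exact mul_le_mul_of_nonneg_right
      (Real.rpow_le_rpow (Nat.cast_nonneg a) (Nat.cast_le.2 hab) hα0.le) hx.le
  -- Cauchy property
  have hcauchy : ∀ ε > 0, ∃ K : ℕ, ∀ a b : ℕ, K ≤ a → a ≤ b →
      |∑ k ∈ Finset.Ioc a b, g k| < ε := by
    intro ε hε
    have hC : CauchySeq (fun N => ∑ k ∈ Finset.Icc 1 N, g k) := hconv'.cauchySeq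
    rw [Metric.cauchySeq_iff] at hC
    obtain ⟨K, hK⟩ := hC ε hε
    refine ⟨K, fun a b ha hab => ?_⟩
    have hd := hK b (le_trans ha hab) a ha
    have hsum : ∑ k ∈ Finset.Icc 1 b, g k - ∑ k ∈ Finset.Icc 1 a, g k
        = ∑ k ∈ Finset.Ioc a b, g k := by
      rw [show Finset.Icc 1 b = Finset.Ioc 0 b from Finset.Icc_add_one_left_eq_Ioc 0 b,
          show Finset.Icc 1 a = Finset.Ioc 0 a from Finset.Icc_add_one_left_eq_Ioc 0 a,
          ← Finset.sum_Ioc_consecutive g (Nat.zero_le a) hab]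
      ring
    rw [Real.dist_eq, hsum] at hd
    exact hd
  rw [NormedAddCommGroup.tendsto_nhds_zero]
  intro ε' hε'
  set ε : ℝ := ε' * π / (25 * α * x * A) with hεdef
  have hε : 0 < ε := by positivity
  obtain ⟨K, hK⟩ := hcauchy ε hε
  -- eventually facts
  have hn2top : Tendsto (fun N : ℕ => ((N / 2 : ℕ) : ℝ)) atTop atTop := by
    apply tendsto_natCast_atTop_atTop.comp
    apply Filter.tendsto_atTop.2
    intro b
    filter_upwards [eventually_ge_atTop (2 * b)] with N hN
    omega
  have E2 : ∀ᶠ N : ℕ in atTop, α * x * ((N / 2 : ℕ) : ℝ) ^ (α - 1) ≤ π / 4 := by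
    have h0 : Tendsto (fun N : ℕ => α * x * ((N / 2 : ℕ) : ℝ) ^ (α - 1)) atTop
        (nhds (α * x * 0)) := by
      apply Tendsto.const_mul
      have hexp : α - 1 = -(1 - α) := by ring
      rw [hexp]
      exact (tendsto_rpow_neg_atTop (by linarith : (0:ℝ) < 1 - α)).comp hn2top
    rw [mul_zero] at h0
    filter_upwards [h0.eventually (eventually_le_nhds (by positivity : (0:ℝ) < π / 4))] with N hN
    exact hN
  have E3 : ∀ᶠ N : ℕ in atTop, ((N / 2 : ℕ) : ℝ) ^ α + 3 * π / x ≤ (N : ℝ) ^ α := by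
    have hgrow : Tendsto (fun N : ℕ => (N:ℝ) ^ α * (1 - (1/2 : ℝ) ^ α)) atTop atTop := by
      apply Tendsto.atTop_mul_const
      · have : (1/2 : ℝ) ^ α < 1 := Real.rpow_lt_one (by norm_num) (by norm_num) hα0
        linarith
      · exact (tendsto_rpow_atTop hα0).comp tendsto_natCast_atTop_atTop
    filter_upwards [hgrow.eventually_ge_atTop (3 * π / x)] with N hN
    have h1 : ((N / 2 : ℕ) : ℝ) ≤ (N : ℝ) / 2 := Nat.cast_div_le
    have h2 : ((N / 2 : ℕ) : ℝ) ^ α ≤ ((N:ℝ) / 2) ^ α :=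
      Real.rpow_le_rpow (Nat.cast_nonneg _) h1 hα0.le
    have h3 : ((N:ℝ) / 2) ^ α = (N:ℝ) ^ α * (1/2 : ℝ) ^ α := by
      rw [show (N:ℝ) / 2 = (N:ℝ) * (1/2) by ring,
        Real.mul_rpow (Nat.cast_nonneg N) (by norm_num)]
    rw [h3] at h2
    nlinarith
  filter_upwards [eventually_ge_atTop (2 * K), eventually_ge_atTop 2, E2, E3]
    with N hNK hN2 hE2 hE3
  set n₀ : ℕ := N / 2 with hn₀def
  have hn₀1 : 1 ≤ n₀ := by omega
  have hn₀K : K ≤ n₀ := by omega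
  have hn₀pos : (0:ℝ) < (n₀ : ℝ) := by exact_mod_cast hn₀1
  set δ : ℝ := α * x * (n₀ : ℝ) ^ (α - 1) with hδdef
  have hδpos : 0 < δ := by positivity
  have hδ4 : δ ≤ π / 4 := hE2
  -- step bound
  have hstep : ∀ k : ℕ, n₀ ≤ k → f (k + 1) ≤ f k + δ := by
    intro k hk
    have hk1 : (1:ℝ) ≤ (k:ℝ) := by exact_mod_cast le_trans hn₀1 hk
    have hi := incr_le hα0 hα1 hk1
    have hmon : ((k:ℝ)) ^ (α - 1) ≤ (n₀:ℝ) ^ (α - 1) :=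
      Real.rpow_le_rpow_of_nonpos hn₀pos (Nat.cast_le.2 hk) (by linarith)
    show ((k + 1 : ℕ) : ℝ) ^ α * x ≤ (k:ℝ) ^ α * x + δ
    push_cast
    have h1 : ((k:ℝ) + 1) ^ α * x ≤ ((k:ℝ) ^ α + α * (k:ℝ) ^ (α - 1)) * x :=
      mul_le_mul_of_nonneg_right hi hx.le
    have h2 : α * (k:ℝ) ^ (α - 1) * x ≤ δ := by
      rw [hδdef]
      nlinarith [mul_le_mul_of_nonneg_left hmon (mul_nonneg hα0.le hx.le)]
    nlinarith
  -- telescoping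
  have htel : ∀ i : ℕ, ∀ mm : ℕ, n₀ ≤ mm → f (mm + i) ≤ f mm + i * δ := by
    intro i
    induction i with
    | zero => intro mm _; simp
    | succ i ih =>
      intro mm hmm
      have h1 : f (mm + i + 1) ≤ f (mm + i) + δ := hstep _ (le_trans hmm (Nat.le_add_right _ _))
      have h2 := ih mm hmm
      have h3 : mm + (i + 1) = mm + i + 1 := by omega
      rw [h3]
      push_cast
      push_cast at h2
      linarith
  -- the target T
  set j : ℤ := ⌊f n₀ / (2 * π)⌋ + 1 with hjdef
  set T : ℝ := (j : ℝ) * (2 * π) + π / 4 with hTdef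
  have h2π : (0:ℝ) < 2 * π := by linarith
  have hTgt : f n₀ < T := by
    have h1 : f n₀ / (2 * π) < (j : ℝ) := by
      rw [hjdef]
      push_cast
      linarith [Int.lt_floor_add_one (f n₀ / (2 * π))]
    have := (div_lt_iff₀ h2π).1 h1
    rw [hTdef]; linarith
  have hTle : T ≤ f n₀ + 2 * π + π / 4 := by
    have h1 := mul_le_mul_of_nonneg_right (Int.floor_le (f n₀ / (2 * π))) h2π.le
    rw [div_mul_cancel₀ _ h2π.ne'] at h1
    rw [hTdef, hjdef]
    push_cast
    linarith
  -- find m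
  have hex : ∃ k, n₀ ≤ k ∧ T ≤ f k :=
    ((eventually_ge_atTop n₀).and (hftop.eventually_ge_atTop T)).exists
  set m := Nat.find hex with hmdef
  obtain ⟨hmn₀, hmT⟩ := Nat.find_spec hex
  rw [← hmdef] at hmn₀ hmT
  have hmgt : n₀ < m := by
    rcases Nat.lt_or_ge n₀ m with h | h
    · exact h
    · exfalso
      have heq : f n₀ = f m := congrArg f (le_antisymm hmn₀ h)
      linarith
  have hm1 : m - 1 + 1 = m := by omega
  have hfm1 : f (m - 1) < T := by
    by_contra h
    push_neg at h
    exact Nat.find_min hex (by omega : m - 1 < m) ⟨by omega, h⟩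
  have hfmlt : f m < T + δ := by
    have := hstep (m - 1) (by omega)
    rw [hm1] at this
    linarith
  -- block size n
  set n : ℕ := ⌈π / (4 * δ)⌉₊ with hndef
  have hnr : (0:ℝ) < π / (4 * δ) := by positivity
  have hnpos : 0 < n := Nat.ceil_pos.2 hnr
  have hnge : π / (4 * δ) ≤ (n:ℝ) := Nat.le_ceil _
  have hnle : (n:ℝ) < π / (4 * δ) + 1 := Nat.ceil_lt_add_one hnr.le
  clear_value n₀ δ j T m n
  -- block bounds
  have hblock : ∀ k, m ≤ k → k ≤ m - 1 + n → T ≤ f k ∧ f k ≤ T + π / 2 := by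
    intro k hk1 hk2
    refine ⟨le_trans hmT (hfmono hk1), ?_⟩
    have hkm : k = m + (k - m) := by omega
    have h1 : f k ≤ f m + ((k - m : ℕ) : ℝ) * δ := by
      have ht2 := htel (k - m) m hmgt.le
      rw [← hkm] at ht2
      exact ht2
    have h2 : ((k - m : ℕ) : ℝ) ≤ (n:ℝ) - 1 := by
      have hnat : k - m ≤ n - 1 := by omega
      have h2' : ((k - m : ℕ):ℝ) ≤ ((n - 1 : ℕ):ℝ) := Nat.cast_le.2 hnat
      rw [Nat.cast_sub hnpos] at h2'
      simpa using h2'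
    have hδn : (n:ℝ) * δ ≤ π / 2 := by
      have h4 : (n:ℝ) * δ < (π / (4 * δ) + 1) * δ := mul_lt_mul_of_pos_right hnle hδpos
      have h5 : (π / (4 * δ) + 1) * δ = π / 4 + δ := by field_simp
      linarith
    have h6 : ((k - m : ℕ) : ℝ) * δ ≤ ((n:ℝ) - 1) * δ := mul_le_mul_of_nonneg_right h2 hδpos.le
    linarith
  -- sin lower bound on block
  have hsinb : ∀ k, m ≤ k → k ≤ m - 1 + n → Real.sqrt 2 / 2 ≤ Real.sin (f k) := by
    intro k h1 h2
    obtain ⟨hL, hU⟩ := hblock k h1 h2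
    have heq : Real.sin (f k) = Real.sin (f k - (j:ℝ) * (2 * π)) := by
      rw [← Real.sin_add_int_mul_two_pi (f k - (j:ℝ) * (2 * π)) j]
      ring_nf
    rw [heq]
    apply sin_lb
    · rw [hTdef] at hL; linarith
    · rw [hTdef] at hU; linarith
  -- block end ≤ N
  have hendN : m - 1 + n ≤ N := by
    have hend := (hblock (m - 1 + n) (by omega) le_rfl).2
    have h1 : f (m - 1 + n) ≤ f n₀ + 3 * π := by linarith
    have h2 : ((m - 1 + n : ℕ) : ℝ) ^ α ≤ (n₀:ℝ) ^ α + 3 * π / x := by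
      have h3 : ((m - 1 + n : ℕ) : ℝ) ^ α * x ≤ ((n₀:ℝ) ^ α + 3 * π / x) * x := by
        rw [add_mul, div_mul_cancel₀ _ hx.ne']
        exact h1
      exact le_of_mul_le_mul_right h3 hx
    have h4 : ((m - 1 + n : ℕ) : ℝ) ^ α ≤ (N:ℝ) ^ α := le_trans h2 hE3
    by_contra hcon
    push_neg at hcon
    have : (N:ℝ) ^ α < ((m - 1 + n : ℕ) : ℝ) ^ α :=
      Real.rpow_lt_rpow (Nat.cast_nonneg N) (by exact_mod_cast hcon) hα0
    linarith
  -- sum lower bound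
  have hcard : (Finset.Ioc (m - 1) (m - 1 + n)).card = n := by
    rw [Nat.card_Ioc]; omega
  have hsum_lb : (n:ℝ) * (c N / A * (Real.sqrt 2 / 2)) ≤
      ∑ k ∈ Finset.Ioc (m - 1) (m - 1 + n), g k := by
    have hconst : ∑ _k ∈ Finset.Ioc (m - 1) (m - 1 + n), (c N / A * (Real.sqrt 2 / 2))
        = (n:ℝ) * (c N / A * (Real.sqrt 2 / 2)) := by
      rw [Finset.sum_const, hcard, nsmul_eq_mul]
    rw [← hconst]
    apply Finset.sum_le_sum
    intro k hk
    simp only [Finset.mem_Ioc] at hk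
    have hkm : m ≤ k := by omega
    have hsk := hsinb k hkm hk.2
    have hck : c N / A ≤ c k := by
      have := hcm N k (le_trans hk.2 hendN)
      rw [div_le_iff₀ hA]
      linarith
    have h0 : (0:ℝ) ≤ Real.sqrt 2 / 2 := by positivity
    calc c N / A * (Real.sqrt 2 / 2) ≤ c k * (Real.sqrt 2 / 2) :=
          mul_le_mul_of_nonneg_right hck h0
      _ ≤ c k * Real.sin (f k) := mul_le_mul_of_nonneg_left hsk (hc k).le
  -- Cauchy bound
  have hlt : |∑ k ∈ Finset.Ioc (m - 1) (m - 1 + n), g k| < ε :=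
    hK (m - 1) (m - 1 + n) (by omega) (by omega)
  have hsumlt : (n:ℝ) * (c N / A * (Real.sqrt 2 / 2)) < ε :=
    lt_of_le_of_lt (le_trans hsum_lb (le_abs_self _)) hlt
  -- final computation
  have h1s : (1:ℝ) ≤ Real.sqrt 2 := by
    rw [show (1:ℝ) = Real.sqrt 1 by simp]
    exact Real.sqrt_le_sqrt (by norm_num)
  have h8 : (n:ℝ) * c N < 2 * A * ε := by
    have hcNA : 0 < c N / A := div_pos (hc N) hA
    have hstep1 : (n:ℝ) * (c N / A * (1/2)) ≤ (n:ℝ) * (c N / A * (Real.sqrt 2 / 2)) := by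
      apply mul_le_mul_of_nonneg_left _ (Nat.cast_nonneg n)
      apply mul_le_mul_of_nonneg_left _ hcNA.le
      linarith
    have h9 : (n:ℝ) * (c N / A * (1/2)) < ε := lt_of_le_of_lt hstep1 hsumlt
    have h10 : (n:ℝ) * c N = ((n:ℝ) * (c N / A * (1/2))) * (2 * A) := by
      field_simp
    rw [h10]
    calc ((n:ℝ) * (c N / A * (1/2))) * (2 * A) < ε * (2 * A) := by
          apply mul_lt_mul_of_pos_right h9 (by positivity)
      _ = 2 * A * ε := by ring
  have hprod : (n₀:ℝ) ^ (1 - α) * (n₀:ℝ) ^ (α - 1) = 1 := by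
    rw [← Real.rpow_add hn₀pos]
    norm_num
  have h6 : c N * (n₀:ℝ) ^ (1 - α) * δ = α * x * c N := by
    rw [hδdef]
    linear_combination α * x * c N * hprod
  have h7 : π ≤ 4 * (n:ℝ) * δ := by
    have := mul_le_mul_of_nonneg_right hnge (by positivity : (0:ℝ) ≤ 4 * δ)
    rw [div_mul_cancel₀ _ (by positivity : (4 * δ : ℝ) ≠ 0)] at this
    linarith
  have hN3n : (N:ℝ) ≤ 3 * (n₀:ℝ) := by
    have : N ≤ 3 * n₀ := by omega
    exact_mod_cast this
  have h2a : (N:ℝ) ^ (1 - α) ≤ 3 * (n₀:ℝ) ^ (1 - α) := by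
    calc (N:ℝ) ^ (1 - α) ≤ (3 * (n₀:ℝ)) ^ (1 - α) :=
          Real.rpow_le_rpow (Nat.cast_nonneg N) hN3n (by linarith)
      _ = (3:ℝ) ^ (1 - α) * (n₀:ℝ) ^ (1 - α) := Real.mul_rpow (by norm_num) (Nat.cast_nonneg n₀)
      _ ≤ 3 * (n₀:ℝ) ^ (1 - α) := by
          have h3a : (3:ℝ) ^ (1 - α) ≤ (3:ℝ) ^ (1:ℝ) :=
            Real.rpow_le_rpow_of_exponent_le (by norm_num) (by linarith)
          rw [Real.rpow_one] at h3a
          exact mul_le_mul_of_nonneg_right h3a (Real.rpow_nonneg (Nat.cast_nonneg n₀) _)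
  have hc5 : c N * (N:ℝ) ^ (1 - α) ≤ 3 * (c N * (n₀:ℝ) ^ (1 - α)) := by
    have := mul_le_mul_of_nonneg_left h2a (hc N).le
    linarith
  have h9 : c N * (n₀:ℝ) ^ (1 - α) = α * x * c N / δ := by
    rw [eq_div_iff hδpos.ne']
    exact h6
  have h10 : α * x * c N / δ ≤ 4 * α * x * ((n:ℝ) * c N) / π := by
    rw [div_le_div_iff₀ hδpos hπ]
    nlinarith [mul_le_mul_of_nonneg_left h7 (mul_nonneg (mul_nonneg hα0.le hx.le) (hc N).le)]
  have h11 : 4 * α * x * ((n:ℝ) * c N) < 4 * α * x * (2 * A * ε) := by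
    have hpos4 : (0:ℝ) < 4 * α * x := by positivity
    nlinarith [mul_lt_mul_of_pos_left h8 hpos4]
  have d4 : 4 * α * x * ((n:ℝ) * c N) / π < 4 * α * x * (2 * A * ε) / π := by
    rw [div_lt_div_iff₀ hπ hπ]
    nlinarith [mul_lt_mul_of_pos_right h11 hπ]
  have h12 : 3 * (4 * α * x * (2 * A * ε) / π) = 24 / 25 * ε' := by
    rw [hεdef]
    field_simp
    ring
  have hNpos : (0:ℝ) < (N:ℝ) := by
    have : 0 < N := by omega
    exact_mod_cast this
  rw [Real.norm_eq_abs, abs_of_pos (mul_pos (hc N) (Real.rpow_pos_of_pos hNpos _))]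
  linarith

theorem stmt8 (α : ℝ) (hα : α ∈ Set.Ioo (0:ℝ) 1) (c : ℕ → ℝ) (A : ℝ) (hA : 0 < A)
    (hc : ∀ k, 0 < c k) (hcm : ∀ k l, l ≤ k → c k ≤ A * c l)
    (x : ℝ) (hx : x ≠ 0) (s : ℝ)
    (hconv : Filter.Tendsto (fun N => ∑ k ∈ Finset.Icc 1 N, c k * Real.sin ((k : ℝ) ^ α * x))
      Filter.atTop (nhds s)) :
    Filter.Tendsto (fun k => c k * (k : ℝ) ^ (1 - α)) Filter.atTop (nhds 0) := by
  rcases lt_or_gt_of_ne hx with hneg | hpos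
  · have hpos' : 0 < -x := by linarith
    have hconv' : Filter.Tendsto
        (fun N => ∑ k ∈ Finset.Icc 1 N, c k * Real.sin ((k : ℝ) ^ α * (-x)))
        Filter.atTop (nhds (-s)) := by
      have heq : (fun N => ∑ k ∈ Finset.Icc 1 N, c k * Real.sin ((k : ℝ) ^ α * (-x)))
          = fun N => -(∑ k ∈ Finset.Icc 1 N, c k * Real.sin ((k : ℝ) ^ α * x)) := by
        funext N
        rw [← Finset.sum_neg_distrib]
        apply Finset.sum_congr rfl
        intro k _
        rw [mul_neg, Real.sin_neg]
        ring
      rw [heq]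
      exact hconv.neg
    exact key_pos α hα c A hA hc hcm (-x) hpos' (-s) hconv'
  · exact key_pos α hα c A hA hc hcm x hpos s hconv
end

section
/- Let α ∈ (0,1) be real. Suppose {c_k} is a sequence of positive reals with c_k ≤ A·c_l for all k ≥ l. If the series ∑_{k=1}^∞ c_k·cos(k^α·x) converges at some point x ≠ 0, then c_k·k^{1−α} → 0 as k → ∞. -/
open Filter Real

lemma stmt9_bern {u v p : ℝ} (hu : 0 < u) (huv : u ≤ v) (hp : 1 ≤ p) :
    u ^ p + p * u ^ (p - 1) * (v - u) ≤ v ^ p := by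
  have hs0 : 0 ≤ (v - u) / u := div_nonneg (by linarith) hu.le
  have hs : (-1 : ℝ) ≤ (v - u) / u := by linarith
  have h := one_add_mul_self_le_rpow_one_add hs hp
  have hveq : u * (1 + (v - u) / u) = v := by field_simp; ring
  calc u ^ p + p * u ^ (p - 1) * (v - u)
      = u ^ p * (1 + p * ((v - u) / u)) := by
        rw [Real.rpow_sub_one hu.ne']
        field_simp
    _ ≤ u ^ p * (1 + (v - u) / u) ^ p :=
        mul_le_mul_of_nonneg_left h (Real.rpow_nonneg hu.le p)
    _ = v ^ p := by
        rw [← Real.mul_rpow hu.le (by linarith), hveq]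

set_option maxHeartbeats 1000000 in
lemma stmt9_aux (α : ℝ) (hα : α ∈ Set.Ioo (0:ℝ) 1) (c : ℕ → ℝ) (A : ℝ) (hA : 0 < A)
    (hc : ∀ k, 0 < c k) (hcm : ∀ k l, l ≤ k → c k ≤ A * c l)
    (x : ℝ) (hx : 0 < x) (s : ℝ)
    (hconv : Filter.Tendsto (fun N => ∑ k ∈ Finset.Icc 1 N, c k * Real.cos ((k : ℝ) ^ α * x))
      Filter.atTop (nhds s)) :
    Filter.Tendsto (fun k => c k * (k : ℝ) ^ (1 - α)) Filter.atTop (nhds 0) := by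
  obtain ⟨hα0, hα1⟩ := hα
  have hπ := Real.pi_pos
  set p : ℝ := 1 / α with hp
  have hp1 : 1 < p := (one_lt_div hα0).2 hα1
  have hp0 : 0 < p := by linarith
  have hpα : p * α = 1 := by rw [hp]; field_simp
  set f : ℕ → ℝ := fun N => ∑ k ∈ Finset.Icc 1 N, c k * Real.cos ((k : ℝ) ^ α * x) with hf
  set v : ℕ → ℝ := fun m => (2 * π * m + π / 3) / x with hv
  set u : ℕ → ℝ := fun m => (2 * π * m - π / 3) / x with hu
  set b : ℕ → ℝ := fun m => (v m) ^ p with hb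
  set a : ℕ → ℝ := fun m => (u m) ^ p with ha
  set K : ℕ → ℕ := fun m => ⌊b m⌋₊ with hK
  set L : ℕ → ℕ := fun m => ⌈a m⌉₊ with hL
  set δ : ℝ := p * (2 * π / 3 / x) * (1 / 2 : ℝ) ^ (p - 1) with hδ
  have hδ0 : 0 < δ := by positivity
  -- basic positivity facts
  have hv0 : ∀ m : ℕ, 0 < v m := by
    intro m
    have : (0:ℝ) ≤ m := Nat.cast_nonneg m
    have : 0 < 2 * π * m + π / 3 := by nlinarith
    positivity
  have hu0 : ∀ m : ℕ, 1 ≤ m → 0 < u m := by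
    intro m hm
    have h1 : (1:ℝ) ≤ m := by exact_mod_cast hm
    have : 0 < 2 * π * m - π / 3 := by nlinarith
    positivity
  have huv : ∀ m : ℕ, u m < v m := by
    intro m
    have : u m < v m ↔ 2 * π * m - π / 3 < 2 * π * m + π / 3 := div_lt_div_iff_of_pos_right hx
    rw [this]; linarith
  have hvu : ∀ m : ℕ, v m - u m = 2 * π / 3 / x := by
    intro m; simp only [hv, hu]; field_simp; ring
  have hv2u : ∀ m : ℕ, 1 ≤ m → v m ≤ 2 * u m := by
    intro m hm
    have h1 : (1:ℝ) ≤ m := by exact_mod_cast hm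
    have h2 : 2 * π / 3 / x ≤ u m :=
      div_le_div_of_nonneg_right (by nlinarith) hx.le
    linarith [hvu m]
  -- gap lower bound
  have hbma : ∀ m : ℕ, 1 ≤ m → δ * (b m) ^ (1 - α) ≤ b m - a m := by
    intro m hm
    have hum := hu0 m hm
    have key := stmt9_bern hum (huv m).le hp1.le
    have h1 : p * (u m) ^ (p - 1) * (2 * π / 3 / x) ≤ b m - a m := by
      rw [← hvu m]
      simp only [hb, ha]
      linarith [key]
    have h2 : (1 / 2 : ℝ) ^ (p - 1) * (v m) ^ (p - 1) ≤ (u m) ^ (p - 1) := by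
      have h : ((1 / 2 : ℝ) * v m) ^ (p - 1) ≤ (u m) ^ (p - 1) :=
        Real.rpow_le_rpow (by positivity) (by linarith [hv2u m hm]) (by linarith)
      rwa [Real.mul_rpow (by norm_num) (hv0 m).le] at h
    have h3 : (b m) ^ (1 - α) = (v m) ^ (p - 1) := by
      have hep : p * (1 - α) = p - 1 := by rw [mul_one_sub, hpα]
      simp only [hb]
      rw [← Real.rpow_mul (hv0 m).le, hep]
    rw [h3]
    calc δ * (v m) ^ (p - 1)
        = p * (2 * π / 3 / x) * ((1 / 2 : ℝ) ^ (p - 1) * (v m) ^ (p - 1)) := by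
          rw [hδ]; ring
      _ ≤ p * (2 * π / 3 / x) * (u m) ^ (p - 1) :=
          mul_le_mul_of_nonneg_left h2 (by positivity)
      _ = p * (u m) ^ (p - 1) * (2 * π / 3 / x) := by ring
      _ ≤ b m - a m := h1
  -- tendsto facts
  have haff : ∀ (r : ℝ), Tendsto (fun m : ℕ => (2 * π * m + r) / x) atTop atTop := by
    intro r
    apply Tendsto.atTop_div_const hx
    exact tendsto_atTop_add_const_right _ r
      (tendsto_natCast_atTop_atTop.const_mul_atTop (by positivity))
  have hvt : Tendsto v atTop atTop := haff (π / 3)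
  have hut : Tendsto u atTop atTop := by
    have h := haff (-(π / 3))
    simp only [hu, sub_eq_add_neg]
    exact h
  have hbt : Tendsto b atTop atTop := (tendsto_rpow_atTop hp0).comp hvt
  have hat : Tendsto a atTop atTop := (tendsto_rpow_atTop hp0).comp hut
  have hKt : Tendsto K atTop atTop := tendsto_nat_floor_atTop.comp hbt
  have hLt : Tendsto L atTop atTop := by
    apply tendsto_atTop_mono (fun m => Nat.floor_le_ceil (a m))
    exact tendsto_nat_floor_atTop.comp hat
  have hgapt : Tendsto (fun m => b m - a m) atTop atTop := by
    apply tendsto_atTop_mono' atTop ?_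
      (((tendsto_rpow_atTop (by linarith : (0:ℝ) < 1 - α)).comp hbt).const_mul_atTop hδ0)
    filter_upwards [eventually_ge_atTop 1] with m hm
    exact hbma m hm
  -- cosine lower bound on blocks
  have hcos : ∀ m : ℕ, 1 ≤ m → ∀ n ∈ Finset.Icc (L m) (K m),
      (1/2 : ℝ) ≤ Real.cos ((n:ℝ) ^ α * x) := by
    intro m hm n hn
    rw [Finset.mem_Icc] at hn
    have hum := hu0 m hm
    have ha0 : 0 < a m := Real.rpow_pos_of_pos hum p
    have hb0 : 0 < b m := Real.rpow_pos_of_pos (hv0 m) p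
    have hna : a m ≤ (n:ℝ) := le_trans (Nat.le_ceil _) (by exact_mod_cast hn.1)
    have hnb : (n:ℝ) ≤ b m := le_trans (by exact_mod_cast hn.2) (Nat.floor_le hb0.le)
    have hnu : u m ≤ (n:ℝ) ^ α := by
      have h := Real.rpow_le_rpow ha0.le hna hα0.le
      simp only [ha] at h
      rwa [← Real.rpow_mul hum.le, hpα, Real.rpow_one] at h
    have hnv : (n:ℝ) ^ α ≤ v m := by
      have h := Real.rpow_le_rpow (by positivity : (0:ℝ) ≤ (n:ℝ)) hnb hα0.le
      simp only [hb] at h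
      rwa [← Real.rpow_mul (hv0 m).le, hpα, Real.rpow_one] at h
    have hux : u m * x = 2 * π * m - π / 3 := by rw [hu]; field_simp
    have hvx : v m * x = 2 * π * m + π / 3 := by rw [hv]; field_simp
    have h1 : 2 * π * m - π / 3 ≤ (n:ℝ)^α * x := by
      rw [← hux]; exact mul_le_mul_of_nonneg_right hnu hx.le
    have h2 : (n:ℝ)^α * x ≤ 2 * π * m + π / 3 := by
      rw [← hvx]; exact mul_le_mul_of_nonneg_right hnv hx.le
    set t : ℝ := (n:ℝ)^α * x - 2 * π * m with ht
    have hcoseq : Real.cos ((n:ℝ)^α * x) = Real.cos t := by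
      have he : (n:ℝ)^α * x = t + ((m:ℤ) : ℝ) * (2 * π) := by push_cast; ring
      rw [he, Real.cos_add_int_mul_two_pi]
    rw [hcoseq, ← Real.cos_abs]
    have habs : |t| ≤ π / 3 := abs_le.2 ⟨by simp only [ht]; linarith, by simp only [ht]; linarith⟩
    calc (1/2 : ℝ) = Real.cos (π / 3) := (Real.cos_pi_div_three).symm
      _ ≤ Real.cos |t| := Real.cos_le_cos_of_nonneg_of_le_pi (abs_nonneg t) (by linarith) habs
  -- main per-m estimate
  have hmain : ∀ m : ℕ, 1 ≤ m → 2 ≤ b m - a m →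
      δ * (c (K m) * (K m : ℝ) ^ (1 - α)) ≤ 4 * A * (f (K m) - f (L m - 1)) := by
    intro m hm hgap
    have hum := hu0 m hm
    have ha0 : 0 < a m := Real.rpow_pos_of_pos hum p
    have hb0 : 0 < b m := Real.rpow_pos_of_pos (hv0 m) p
    have hL1 : 1 ≤ L m := Nat.one_le_ceil_iff.2 ha0
    have hLa : (L m : ℝ) < a m + 1 := Nat.ceil_lt_add_one ha0.le
    have hKb : b m - 1 < (K m : ℝ) := by
      have := Nat.lt_floor_add_one (b m); linarith
    have hKb' : (K m : ℝ) ≤ b m := Nat.floor_le hb0.le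
    have hLK : L m ≤ K m := by
      have h : (L m : ℝ) ≤ (K m : ℝ) := by linarith
      exact_mod_cast h
    have hcard : ((Finset.Icc (L m) (K m)).card : ℝ) = (K m : ℝ) + 1 - L m := by
      rw [Nat.card_Icc, Nat.cast_sub (by omega)]
      push_cast; ring
    have hcard2 : (b m - a m) / 2 ≤ ((Finset.Icc (L m) (K m)).card : ℝ) := by
      rw [hcard]; linarith
    have hterm : ∀ n ∈ Finset.Icc (L m) (K m),
        c (K m) ≤ 2 * A * (c n * Real.cos ((n:ℝ)^α * x)) := by
      intro n hn
      have h1 := hcos m hm n hn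
      have hn2 : n ≤ K m := (Finset.mem_Icc.1 hn).2
      have h2 : c (K m) ≤ A * c n := hcm (K m) n hn2
      have h3 : c n * (1/2) ≤ c n * Real.cos ((n:ℝ)^α * x) :=
        mul_le_mul_of_nonneg_left h1 (hc n).le
      have h3' := mul_le_mul_of_nonneg_left h3 (by positivity : (0:ℝ) ≤ 2*A)
      have h4 : 2*A*(c n*(1/2)) = A * c n := by ring
      linarith [h3', h4, h2]
    have hsum : ((Finset.Icc (L m) (K m)).card : ℝ) * c (K m) ≤
        2 * A * ∑ n ∈ Finset.Icc (L m) (K m), c n * Real.cos ((n:ℝ)^α * x) := by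
      have h := Finset.card_nsmul_le_sum (Finset.Icc (L m) (K m)) _ _ hterm
      rw [← Finset.mul_sum] at h
      simpa [nsmul_eq_mul] using h
    have hdiff : ∑ n ∈ Finset.Icc (L m) (K m), c n * Real.cos ((n:ℝ)^α * x)
        = f (K m) - f (L m - 1) := by
      have h0 : L m - 1 ≤ K m := le_trans (Nat.sub_le _ _) hLK
      have hIoc := Finset.sum_Ioc_consecutive (fun n : ℕ => c n * Real.cos ((n:ℝ)^α * x))
        (Nat.zero_le (L m - 1)) h0
      have e1 : Finset.Ioc (L m - 1) (K m) = Finset.Icc (L m) (K m) := by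
        rw [← Finset.Icc_add_one_left_eq_Ioc]
        congr 1
        omega
      have e2 : ∀ N, f N = ∑ n ∈ Finset.Ioc 0 N, c n * Real.cos ((n:ℝ)^α * x) := by
        intro N
        simp only [hf]
        rw [show Finset.Icc 1 N = Finset.Ioc 0 N from Finset.Icc_add_one_left_eq_Ioc 0 N]
      rw [e2, e2, ← hIoc, e1]
      ring
    have hKb1 : (K m : ℝ) ^ (1-α) ≤ (b m) ^ (1-α) :=
      Real.rpow_le_rpow (Nat.cast_nonneg _) hKb' (by linarith)
    have s1 : δ * (c (K m) * (K m : ℝ) ^ (1-α)) ≤ δ * (c (K m) * (b m) ^ (1-α)) :=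
      mul_le_mul_of_nonneg_left (mul_le_mul_of_nonneg_left hKb1 (hc _).le) hδ0.le
    have s2 : δ * (c (K m) * (b m) ^ (1-α)) = c (K m) * (δ * (b m) ^ (1-α)) := by ring
    have s3 : c (K m) * (δ * (b m) ^ (1-α)) ≤ c (K m) * (b m - a m) :=
      mul_le_mul_of_nonneg_left (hbma m hm) (hc _).le
    have s5' := mul_le_mul_of_nonneg_right hcard2 (hc (K m)).le
    have s6 := hsum
    rw [hdiff] at s6
    linarith [s1, s2, s3, s5', s6, mul_comm (c (K m)) (b m - a m)]
  -- subsequence tendsto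
  have hsubseq : Tendsto (fun m => c (K m) * (K m : ℝ) ^ (1 - α)) atTop (nhds 0) := by
    have t1 : Tendsto (fun m => f (K m)) atTop (nhds s) := hconv.comp hKt
    have t2 : Tendsto (fun m => f (L m - 1)) atTop (nhds s) :=
      hconv.comp ((tendsto_sub_atTop_nat 1).comp hLt)
    have t3 : Tendsto (fun m => 4*A/δ * (f (K m) - f (L m - 1))) atTop (nhds 0) := by
      have h := (t1.sub t2).const_mul (4*A/δ)
      simpa using h
    apply squeeze_zero' ?_ ?_ t3
    · filter_upwards with m
      exact mul_nonneg (hc _).le (Real.rpow_nonneg (Nat.cast_nonneg _) _)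
    · filter_upwards [eventually_ge_atTop 1, hgapt.eventually_ge_atTop 2] with m h1 h2
      have h := hmain m h1 h2
      rw [div_mul_eq_mul_div, le_div_iff₀ hδ0]
      linarith [h, mul_comm (c (K m) * (K m:ℝ)^(1-α)) δ]
  -- monotonicity of K
  have hvmono : Monotone v := by
    intro i j hij
    have hij' : (i:ℝ) ≤ j := by exact_mod_cast hij
    exact div_le_div_of_nonneg_right (by nlinarith) hx.le
  have hbmono : Monotone b := fun i j hij =>
    Real.rpow_le_rpow (hv0 i).le (hvmono hij) hp0.le
  have hKmono : Monotone K := fun i j hij => Nat.floor_le_floor (hbmono hij)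
  -- consecutive ratio bound
  have hbrat : ∀ m : ℕ, 1 ≤ m → b (m+1) ≤ (2:ℝ)^p * b m := by
    intro m hm
    have h1 : (1:ℝ) ≤ m := by exact_mod_cast hm
    have hvr : v (m+1) ≤ 2 * v m := by
      simp only [hv]
      have h2 : (2 * π * (↑(m+1):ℝ) + π/3) ≤ 2 * (2*π*m + π/3) := by push_cast; nlinarith
      calc (2 * π * (↑(m+1):ℝ) + π/3)/x ≤ (2 * (2*π*m + π/3))/x :=
            div_le_div_of_nonneg_right h2 hx.le
        _ = 2 * ((2*π*m + π/3)/x) := by ring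
    calc b (m+1) ≤ (2 * v m) ^ p := by
          simp only [hb]
          exact Real.rpow_le_rpow (hv0 (m+1)).le hvr hp0.le
      _ = (2:ℝ)^p * (v m)^p := Real.mul_rpow (by norm_num) (hv0 m).le
      _ = (2:ℝ)^p * b m := by simp only [hb]
  -- final epsilon argument
  rw [NormedAddCommGroup.tendsto_nhds_zero]
  intro ε hε
  set C : ℝ := (2:ℝ)^((p+1)*(1-α)) with hC
  have hC0 : 0 < C := Real.rpow_pos_of_pos (by norm_num) _
  have hAC0 : 0 < A * C := mul_pos hA hC0
  have hε' : 0 < ε / (A*C) := div_pos hε hAC0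
  obtain ⟨M, hM⟩ := eventually_atTop.1
    (((hsubseq.eventually_lt_const hε').and (hbt.eventually_ge_atTop 2)).and
      (eventually_ge_atTop 1))
  rw [eventually_atTop]
  refine ⟨K M, fun k hk => ?_⟩
  obtain ⟨M', hM'⟩ := eventually_atTop.1 (hKt.eventually_gt_atTop k)
  set M'' := max M' (M+1) with hM''
  have hKM'' : k < K M'' := hM' M'' (le_max_left _ _)
  have hMM'' : M ≤ M'' := le_trans (Nat.le_succ M) (le_max_right _ _)
  have hk' : K M ≤ k := hk
  set m := Nat.findGreatest (fun j => K j ≤ k) M'' with hmdef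
  have hPm : K m ≤ k :=
    Nat.findGreatest_spec (P := fun j => K j ≤ k) hMM'' hk'
  have hMm : M ≤ m := Nat.le_findGreatest hMM'' hk'
  have hmle : m ≤ M'' := Nat.findGreatest_le M''
  have hmlt : m < M'' := lt_of_le_of_ne hmle (by
    intro h
    rw [h] at hPm
    exact absurd hPm (not_le.2 hKM''))
  have hnot : ¬ (K (m+1) ≤ k) :=
    Nat.findGreatest_is_greatest (P := fun j => K j ≤ k) (Nat.lt_succ_self m) hmlt
  have hkK1 : k < K (m+1) := not_le.1 hnot
  obtain ⟨⟨hεm, hbm2⟩, hm1⟩ := hM m hMm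
  have hb0m : 0 < b m := Real.rpow_pos_of_pos (hv0 m) p
  have hb0m1 : 0 < b (m+1) := Real.rpow_pos_of_pos (hv0 (m+1)) p
  have hK1 : 1 ≤ K m := Nat.le_floor (by exact_mod_cast (by linarith : (1:ℝ) ≤ b m))
  have hK1' : (1:ℝ) ≤ (K m : ℝ) := by exact_mod_cast hK1
  have hbK : b m ≤ (K m:ℝ) + 1 := (Nat.lt_floor_add_one (b m)).le
  have h2K : b m ≤ 2 * K m := by linarith
  have hkb : (k:ℝ) < b (m+1) := by
    have h1 : (k:ℝ) < K (m+1) := by exact_mod_cast hkK1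
    have h2 : (K (m+1):ℝ) ≤ b (m+1) := Nat.floor_le hb0m1.le
    linarith
  have h2p0 : (0:ℝ) < (2:ℝ)^p := Real.rpow_pos_of_pos (by norm_num) p
  have hkB : (k:ℝ) ≤ (2:ℝ)^(p+1) * K m := by
    rw [Real.rpow_add_one (by norm_num : (2:ℝ) ≠ 0) p]
    have h1 : b (m+1) ≤ (2:ℝ)^p * b m := hbrat m hm1
    have h2 : (2:ℝ)^p * b m ≤ (2:ℝ)^p * (2 * K m) :=
      mul_le_mul_of_nonneg_left h2K h2p0.le
    calc (k:ℝ) ≤ (2:ℝ)^p * (2 * K m) := by linarith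
      _ = (2:ℝ)^p * 2 * K m := by ring
  have hkpow : (k:ℝ)^(1-α) ≤ C * (K m:ℝ)^(1-α) := by
    have h := Real.rpow_le_rpow (Nat.cast_nonneg k) hkB (by linarith : (0:ℝ) ≤ 1-α)
    rwa [Real.mul_rpow (Real.rpow_nonneg (by norm_num) _) (Nat.cast_nonneg _),
      ← Real.rpow_mul (by norm_num : (0:ℝ) ≤ 2)] at h
  have hck : c k ≤ A * c (K m) := hcm k (K m) hPm
  rw [Real.norm_of_nonneg (mul_nonneg (hc k).le (Real.rpow_nonneg (Nat.cast_nonneg k) _))]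
  calc c k * (k:ℝ)^(1-α) ≤ (A * c (K m)) * (C * (K m:ℝ)^(1-α)) :=
        mul_le_mul hck hkpow (Real.rpow_nonneg (Nat.cast_nonneg k) _)
          (mul_nonneg hA.le (hc _).le)
    _ = (A*C) * (c (K m) * (K m:ℝ)^(1-α)) := by ring
    _ < (A*C) * (ε/(A*C)) := mul_lt_mul_of_pos_left hεm hAC0
    _ = ε := by rw [mul_comm, div_mul_cancel₀ ε hAC0.ne']

theorem stmt9 (α : ℝ) (hα : α ∈ Set.Ioo (0:ℝ) 1) (c : ℕ → ℝ) (A : ℝ) (hA : 0 < A)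
    (hc : ∀ k, 0 < c k) (hcm : ∀ k l, l ≤ k → c k ≤ A * c l)
    (x : ℝ) (hx : x ≠ 0) (s : ℝ)
    (hconv : Filter.Tendsto (fun N => ∑ k ∈ Finset.Icc 1 N, c k * Real.cos ((k : ℝ) ^ α * x))
      Filter.atTop (nhds s)) :
    Filter.Tendsto (fun k => c k * (k : ℝ) ^ (1 - α)) Filter.atTop (nhds 0) := by
  have hy : 0 < |x| := abs_pos.2 hx
  have hcoseq : ∀ k : ℕ, Real.cos ((k:ℝ) ^ α * |x|) = Real.cos ((k:ℝ) ^ α * x) := by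
    intro k
    rw [show (k:ℝ) ^ α * |x| = |(k:ℝ) ^ α * x| by
        rw [abs_mul, abs_of_nonneg (Real.rpow_nonneg (Nat.cast_nonneg k) α)],
      Real.cos_abs]
  have hconv' : Filter.Tendsto
      (fun N => ∑ k ∈ Finset.Icc 1 N, c k * Real.cos ((k : ℝ) ^ α * |x|))
      Filter.atTop (nhds s) := by
    simpa only [hcoseq] using hconv
  exact stmt9_aux α hα c A hA hc hcm |x| hy s hconv'
end

section
/- For any real σ ≠ 0 and any α ∈ (0,1), the sequence (σ·n^α)_{n≥1} is equidistributed modulo 1. -/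
open Finset Filter Real Set

noncomputable def gg (σ α y : ℝ) : ℝ := y ^ (1/α) / σ ^ (1/α)

lemma gg_mono {σ α : ℝ} (hσ : 0 < σ) (hα : 0 < α) {x y : ℝ} (hx : 0 ≤ x) (hxy : x ≤ y) :
    gg σ α x ≤ gg σ α y := by
  unfold gg
  have h1 : (0:ℝ) < σ ^ (1/α) := Real.rpow_pos_of_pos hσ _
  exact div_le_div_of_nonneg_right (c := σ ^ (1/α)) (Real.rpow_le_rpow hx hxy (by positivity)) h1.le

lemma gg_lt {σ α : ℝ} (hσ : 0 < σ) (hα : 0 < α) {x y : ℝ} (hx : 0 ≤ x) (hxy : x < y) :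
    gg σ α x < gg σ α y := by
  unfold gg
  have h1 : (0:ℝ) < σ ^ (1/α) := Real.rpow_pos_of_pos hσ _
  exact div_lt_div_of_pos_right (Real.rpow_lt_rpow hx hxy (by positivity)) h1

lemma gg_nonneg {σ α : ℝ} (hσ : 0 < σ) {y : ℝ} (hy : 0 ≤ y) : 0 ≤ gg σ α y := by
  unfold gg
  have h1 : (0:ℝ) < σ ^ (1/α) := Real.rpow_pos_of_pos hσ _
  positivity

lemma f_gg {σ α : ℝ} (hσ : 0 < σ) (hα : 0 < α) {y : ℝ} (hy : 0 ≤ y) :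
    σ * (gg σ α y) ^ α = y := by
  unfold gg
  have h1 : (0:ℝ) < σ ^ (1/α) := Real.rpow_pos_of_pos hσ _
  rw [Real.div_rpow (Real.rpow_nonneg hy _) h1.le, ← Real.rpow_mul hy,
    ← Real.rpow_mul hσ.le, one_div_mul_cancel hα.ne', Real.rpow_one, Real.rpow_one,
    mul_div_cancel₀ _ hσ.ne']

lemma gg_f {σ α : ℝ} (hσ : 0 < σ) (hα : 0 < α) {x : ℝ} (hx : 0 ≤ x) :
    gg σ α (σ * x ^ α) = x := by
  unfold gg
  rw [Real.mul_rpow hσ.le (Real.rpow_nonneg hx _), ← Real.rpow_mul hx,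
    mul_one_div, div_self hα.ne', Real.rpow_one, mul_comm, mul_div_assoc,
    div_self (Real.rpow_pos_of_pos hσ _).ne', mul_one]


lemma gg_convex {σ α : ℝ} (hσ : 0 < σ) (hα0 : 0 < α) (hα1 : α < 1) :
    ConvexOn ℝ (Set.Ici 0) (gg σ α) := by
  have h1 : (1:ℝ) ≤ 1/α := by
    rw [le_one_div (by norm_num) hα0]; simpa using hα1.le
  have := (convexOn_rpow h1).smul (c := (σ ^ (1/α))⁻¹) (by positivity)
  convert this using 2 with y
  · rfl
  · rfl
  simp [gg, div_eq_inv_mul, smul_eq_mul]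

-- four point slope inequality, cross-multiplied form
lemma slope4 {G : ℝ → ℝ} (hG : ConvexOn ℝ (Set.Ici 0) G) {x1 x2 x3 x4 : ℝ}
    (h1 : 0 ≤ x1) (h12 : x1 < x2) (h23 : x2 ≤ x3) (h34 : x3 < x4) :
    (G x2 - G x1) * (x4 - x3) ≤ (G x4 - G x3) * (x2 - x1) := by
  have h2 : (0:ℝ) ≤ x2 := le_of_lt (lt_of_le_of_lt h1 h12)
  have h3 : (0:ℝ) ≤ x3 := le_trans h2 h23
  have h4 : (0:ℝ) ≤ x4 := le_of_lt (lt_of_le_of_lt h3 h34)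
  have key : (G x2 - G x1) / (x2 - x1) ≤ (G x4 - G x3) / (x4 - x3) := by
    rcases eq_or_lt_of_le h23 with rfl | h23'
    · exact hG.slope_mono_adjacent h1 h4 h12 h34
    · calc (G x2 - G x1) / (x2 - x1) ≤ (G x3 - G x1) / (x3 - x1) :=
            hG.secant_mono_aux2 h1 h3 h12 h23'
        _ ≤ (G x4 - G x3) / (x4 - x3) := hG.slope_mono_adjacent h1 h4 (h12.trans h23') h34
  rw [div_le_div_iff₀ (by linarith) (by linarith)] at key
  linarith

lemma lemA {a b : ℝ} (ha : 0 ≤ a) (hab : a ≤ b) :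
    ((Finset.Icc ⌈a⌉₊ ⌊b⌋₊).card : ℝ) ≤ b - a + 1 := by
  rw [Nat.card_Icc]
  rcases le_or_gt (⌈a⌉₊) (⌊b⌋₊) with h | h
  · have e : ((⌊b⌋₊ + 1 - ⌈a⌉₊ : ℕ) : ℝ) = (⌊b⌋₊ : ℝ) + 1 - ⌈a⌉₊ := by
      push_cast [Nat.cast_sub (by omega : ⌈a⌉₊ ≤ ⌊b⌋₊ + 1)]; ring
    have h1 : (⌊b⌋₊ : ℝ) ≤ b := Nat.floor_le (ha.trans hab)
    have h2 : a ≤ (⌈a⌉₊ : ℝ) := Nat.le_ceil a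
    rw [e]; linarith
  · have : (⌊b⌋₊ + 1 - ⌈a⌉₊ : ℕ) = 0 ∨ (⌊b⌋₊ + 1 - ⌈a⌉₊ : ℕ) = 1 := by omega
    rcases this with h' | h' <;> rw [h'] <;> push_cast <;> linarith

lemma lemB {a b : ℝ} (ha : 0 ≤ a) :
    b - a - 1 ≤ ((Finset.Ico ⌈a⌉₊ ⌈b⌉₊).card : ℝ) := by
  rw [Nat.card_Ico]
  have h2 : (⌈a⌉₊ : ℝ) < a + 1 := Nat.ceil_lt_add_one ha
  have h3 : b ≤ (⌈b⌉₊ : ℝ) := Nat.le_ceil b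
  rcases le_or_gt (⌈a⌉₊) (⌈b⌉₊) with h | h
  · have e : ((⌈b⌉₊ - ⌈a⌉₊ : ℕ) : ℝ) = (⌈b⌉₊ : ℝ) - ⌈a⌉₊ := by
      push_cast [Nat.cast_sub h]; ring
    rw [e]; linarith
  · have e : (⌈b⌉₊ - ⌈a⌉₊ : ℕ) = 0 := by omega
    rw [e]
    have : (⌈b⌉₊ : ℝ) ≤ ⌈a⌉₊ := by exact_mod_cast h.le
    push_cast
    linarith


lemma conv_up {σ α c d : ℝ} (hσ : 0 < σ) (hα0 : 0 < α) (hα1 : α < 1)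
    (hc : 0 ≤ c) (hcd : c ≤ d) (hd : d ≤ 1) {k : ℝ} (hk : 0 ≤ k) :
    gg σ α (k+d) - gg σ α (k+c) ≤ (d-c) * (gg σ α (k+2) - gg σ α (k+1)) := by
  rcases eq_or_lt_of_le hcd with rfl | hlt
  · simp
  · have h := slope4 (gg_convex hσ hα0 hα1) (x1 := k+c) (x2 := k+d) (x3 := k+1) (x4 := k+2)
      (by linarith) (by linarith) (by linarith) (by linarith)
    nlinarith [h]

lemma conv_low {σ α c d : ℝ} (hσ : 0 < σ) (hα0 : 0 < α) (hα1 : α < 1)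
    (hc : 0 ≤ c) (hcd : c ≤ d) (hd : d ≤ 1) {k : ℝ} (hk : 1 ≤ k) :
    (d-c) * (gg σ α k - gg σ α (k-1)) ≤ gg σ α (k+d) - gg σ α (k+c) := by
  rcases eq_or_lt_of_le hcd with rfl | hlt
  · simp only [sub_self, zero_mul]
    have := gg_mono hσ hα0 (x := k+c) (y := k+c) (by linarith) le_rfl
    linarith [gg_mono hσ hα0 (x := k+c) (y := k+c) (by linarith) le_rfl]
  · have h := slope4 (gg_convex hσ hα0 hα1) (x1 := k-1) (x2 := k) (x3 := k+c) (x4 := k+d)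
      (by linarith) (by linarith) (by linarith) (by linarith)
    nlinarith [h]

lemma core_up {σ α c d : ℝ} (hσ : 0 < σ) (hα0 : 0 < α) (hα1 : α < 1)
    (hc : 0 ≤ c) (hcd : c ≤ d) (hd : d ≤ 1) (N : ℕ) :
    (((Finset.Icc 1 N).filter
        (fun n : ℕ => Int.fract (σ * (n : ℝ) ^ α) ∈ Set.Icc c d)).card : ℝ) ≤
      (d-c) * gg σ α ((⌈σ * (N:ℝ)^α⌉₊ : ℝ) + 2) + ((⌈σ * (N:ℝ)^α⌉₊ : ℝ) + 1) := by
  classical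
  set K : ℕ := ⌈σ * (N:ℝ)^α⌉₊ with hK
  set s := (Finset.Icc 1 N).filter (fun n : ℕ => Int.fract (σ * (n : ℝ) ^ α) ∈ Set.Icc c d) with hs
  have hmap : ∀ n ∈ s, ⌊σ * (n:ℝ)^α⌋₊ ∈ Finset.range (K+1) := by
    intro n hn
    rw [hs, Finset.mem_filter, Finset.mem_Icc] at hn
    have hnN : (n:ℝ) ≤ N := Nat.cast_le.mpr hn.1.2
    have h1 : σ * (n:ℝ)^α ≤ σ * (N:ℝ)^α := by
      have := Real.rpow_le_rpow (by positivity) hnN hα0.le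
      nlinarith
    rw [Finset.mem_range, Nat.lt_succ_iff]
    exact le_trans (Nat.floor_mono h1) (Nat.floor_le_ceil _)
  rw [Finset.card_eq_sum_card_fiberwise hmap]
  push_cast
  have hφsum : ∑ k ∈ Finset.range (K+1),
      (gg σ α ((k:ℝ)+1+1) - gg σ α ((k:ℝ)+1)) = gg σ α ((K:ℝ)+1+1) - gg σ α ((0:ℕ)+1:ℝ) := by
    have := Finset.sum_range_sub (fun i : ℕ => gg σ α ((i:ℝ)+1)) (K+1)
    simpa using this
  have step : ∀ k ∈ Finset.range (K+1),
      ((s.filter (fun n : ℕ => ⌊σ * (n:ℝ)^α⌋₊ = k)).card : ℝ)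
        ≤ (d-c) * (gg σ α ((k:ℝ)+1+1) - gg σ α ((k:ℝ)+1)) + 1 := by
    intro k _
    have hsub : s.filter (fun n : ℕ => ⌊σ * (n:ℝ)^α⌋₊ = k)
        ⊆ Finset.Icc ⌈gg σ α ((k:ℝ)+c)⌉₊ ⌊gg σ α ((k:ℝ)+d)⌋₊ := by
      intro n hn
      rw [Finset.mem_filter] at hn
      obtain ⟨hns, hfl⟩ := hn
      rw [hs, Finset.mem_filter, Finset.mem_Icc] at hns
      have hfn : (0:ℝ) ≤ σ * (n:ℝ)^α := by positivity
      have hflR : ((k:ℕ):ℝ) = (⌊σ * (n:ℝ)^α⌋ : ℝ) := by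
        rw [← hfl, natCast_floor_eq_intCast_floor hfn]
      have hfr := hns.2
      rw [Set.mem_Icc] at hfr
      have hfr1 : (k:ℝ) + c ≤ σ * (n:ℝ)^α := by
        have := hfr.1; unfold Int.fract at this; rw [← hflR] at this; linarith
      have hfr2 : σ * (n:ℝ)^α ≤ (k:ℝ) + d := by
        have := hfr.2; unfold Int.fract at this; rw [← hflR] at this; linarith
      have hgn : gg σ α (σ * (n:ℝ)^α) = (n:ℝ) := gg_f hσ hα0 (Nat.cast_nonneg n)
      rw [Finset.mem_Icc]
      constructor
      · rw [Nat.ceil_le, ← hgn]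
        exact gg_mono hσ hα0 (add_nonneg (Nat.cast_nonneg k) hc) hfr1
      · rw [Nat.le_floor_iff (gg_nonneg hσ (add_nonneg (Nat.cast_nonneg k) (hc.trans hcd))), ← hgn]
        exact gg_mono hσ hα0 hfn hfr2
    have h1 : ((s.filter (fun n : ℕ => ⌊σ * (n:ℝ)^α⌋₊ = k)).card : ℝ)
        ≤ gg σ α ((k:ℝ)+d) - gg σ α ((k:ℝ)+c) + 1 := by
      refine le_trans ?_ (lemA (gg_nonneg hσ (add_nonneg (Nat.cast_nonneg k) hc))
        (gg_mono hσ hα0 (add_nonneg (Nat.cast_nonneg k) hc) (by linarith)))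
      exact_mod_cast Nat.cast_le.mpr (Finset.card_le_card hsub)
    have h2 := conv_up hσ hα0 hα1 hc hcd hd (k := (k:ℝ)) (Nat.cast_nonneg k)
    have e2 : ((k:ℝ)+1+1) = (k:ℝ)+2 := by ring
    rw [e2]
    linarith
  calc (∑ k ∈ Finset.range (K+1), ((s.filter (fun n : ℕ => ⌊σ * (n:ℝ)^α⌋₊ = k)).card : ℝ))
      ≤ ∑ k ∈ Finset.range (K+1), ((d-c) * (gg σ α ((k:ℝ)+1+1) - gg σ α ((k:ℝ)+1)) + 1) :=
        Finset.sum_le_sum step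
    _ = (d-c) * (gg σ α ((K:ℝ)+1+1) - gg σ α ((0:ℕ)+1:ℝ)) + (K+1) := by
        rw [Finset.sum_add_distrib, ← Finset.mul_sum, hφsum]
        simp
    _ ≤ (d-c) * gg σ α ((K:ℝ)+2) + ((K:ℝ)+1) := by
        have hg1 : 0 ≤ gg σ α ((0:ℕ)+1:ℝ) := gg_nonneg hσ (by norm_num)
        have e3 : ((K:ℝ)+1+1) = (K:ℝ)+2 := by ring
        rw [e3]
        nlinarith

lemma core_low {σ α c d : ℝ} (hσ : 0 < σ) (hα0 : 0 < α) (hα1 : α < 1)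
    (hc : 0 ≤ c) (hcd : c ≤ d) (hd : d ≤ 1) (N : ℕ) (hN : σ + 4 ≤ σ * (N:ℝ)^α) :
    (d-c) * (gg σ α (σ*(N:ℝ)^α - 2) - 1) - σ*(N:ℝ)^α ≤
      (((Finset.Icc 1 N).filter
        (fun n : ℕ => Int.fract (σ * (n : ℝ) ^ α) ∈ Set.Icc c d)).card : ℝ) := by
  classical
  set s := (Finset.Icc 1 N).filter (fun n : ℕ => Int.fract (σ * (n : ℝ) ^ α) ∈ Set.Icc c d)
    with hs
  set k0 : ℕ := ⌈σ⌉₊ with hk0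
  set M : ℕ := ⌊σ * (N:ℝ)^α⌋₊ with hM
  have hfN : (0:ℝ) ≤ σ * (N:ℝ)^α := by positivity
  have hk0σ : σ ≤ (k0:ℝ) := Nat.le_ceil σ
  have hk0σ' : (k0:ℝ) < σ + 1 := Nat.ceil_lt_add_one hσ.le
  have hk0pos : 1 ≤ k0 := Nat.one_le_ceil_iff.mpr hσ
  have hMle : (M:ℝ) ≤ σ * (N:ℝ)^α := Nat.floor_le hfN
  have hMgt : σ * (N:ℝ)^α - 1 < (M:ℝ) := by
    have := Nat.lt_floor_add_one (σ * (N:ℝ)^α); linarith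
  have hk0M : k0 ≤ M := by
    have : (k0:ℝ) < M := by linarith
    exact_mod_cast this.le
  have hgN : gg σ α (σ * (N:ℝ)^α) = (N:ℝ) := gg_f hσ hα0 (Nat.cast_nonneg N)
  have hg1 : gg σ α σ = 1 := by
    have := gg_f hσ hα0 (x := 1) zero_le_one
    simpa using this
  -- the T k
  set T : ℕ → Finset ℕ := fun k => (Finset.Icc 1 N).filter
    (fun n : ℕ => (k:ℝ)+c ≤ σ*(n:ℝ)^α ∧ σ*(n:ℝ)^α < (k:ℝ)+d) with hT
  -- T k ⊆ s
  have hTs : ∀ k ∈ Finset.Ico k0 M, T k ⊆ s := by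
    intro k hk n hn
    rw [hT, Finset.mem_filter] at hn
    obtain ⟨hn1, hn2, hn3⟩ := hn
    rw [hs, Finset.mem_filter]
    refine ⟨hn1, ?_⟩
    have hfloor : ⌊σ*(n:ℝ)^α⌋ = (k:ℤ) := by
      rw [Int.floor_eq_iff]
      constructor
      · push_cast; linarith
      · push_cast; linarith
    rw [Set.mem_Icc, Int.fract, hfloor]
    push_cast
    constructor <;> linarith
  -- disjointness
  have hdisj : ∀ k ∈ Finset.Ico k0 M, ∀ l ∈ Finset.Ico k0 M, k ≠ l → Disjoint (T k) (T l) := by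
    intro k _ l _ hkl
    rw [Finset.disjoint_left]
    intro n hnk hnl
    rw [hT, Finset.mem_filter] at hnk hnl
    obtain ⟨_, h1, h2⟩ := hnk
    obtain ⟨_, h3, h4⟩ := hnl
    rcases lt_or_gt_of_ne hkl with h | h
    · have : (k:ℝ) + 1 ≤ l := by exact_mod_cast h
      linarith
    · have : (l:ℝ) + 1 ≤ k := by exact_mod_cast h
      linarith
  have hsum1 : ∑ k ∈ Finset.Ico k0 M, ((T k).card : ℝ) ≤ (s.card : ℝ) := by
    have h1 : ((Finset.Ico k0 M).biUnion T).card ≤ s.card := by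
      apply Finset.card_le_card
      intro n hn
      rw [Finset.mem_biUnion] at hn
      obtain ⟨k, hk, hnk⟩ := hn
      exact hTs k hk hnk
    have h2 : ∑ k ∈ Finset.Ico k0 M, (T k).card ≤ s.card := by
      rw [← Finset.card_biUnion hdisj]; exact h1
    exact_mod_cast h2
  -- lower bound for each T k
  have hsum2 : ∀ k ∈ Finset.Ico k0 M,
      gg σ α ((k:ℝ)+d) - gg σ α ((k:ℝ)+c) - 1 ≤ ((T k).card : ℝ) := by
    intro k hk
    rw [Finset.mem_Ico] at hk
    have hkσ : σ ≤ (k:ℝ) := le_trans hk0σ (by exact_mod_cast hk.1)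
    have hkM : (k:ℝ) + 1 ≤ M := by exact_mod_cast hk.2
    have hsub : Finset.Ico ⌈gg σ α ((k:ℝ)+c)⌉₊ ⌈gg σ α ((k:ℝ)+d)⌉₊ ⊆ T k := by
      intro m hm
      rw [Finset.mem_Ico] at hm
      have hm1 : gg σ α ((k:ℝ)+c) ≤ (m:ℝ) := Nat.ceil_le.mp hm.1
      have hm2 : (m:ℝ) < gg σ α ((k:ℝ)+d) := Nat.lt_ceil.mp hm.2
      have hkc0 : (0:ℝ) ≤ (k:ℝ)+c := by positivity
      have hkd0 : (0:ℝ) ≤ (k:ℝ)+d := add_nonneg (Nat.cast_nonneg k) (hc.trans hcd)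
      have hm0 : (1:ℝ) ≤ (m:ℝ) := by
        have : gg σ α σ ≤ gg σ α ((k:ℝ)+c) := gg_mono hσ hα0 hσ.le (by linarith)
        rw [hg1] at this; linarith
      have hmN : (m:ℝ) < (N:ℝ) := by
        have h5 : gg σ α ((k:ℝ)+d) ≤ gg σ α (σ * (N:ℝ)^α) :=
          gg_mono hσ hα0 hkd0 (by linarith)
        rw [hgN] at h5; linarith
      rw [hT, Finset.mem_filter, Finset.mem_Icc]
      refine ⟨⟨by exact_mod_cast hm0, by exact_mod_cast hmN.le⟩, ?_, ?_⟩
      · calc (k:ℝ)+c = σ * (gg σ α ((k:ℝ)+c))^α := (f_gg hσ hα0 hkc0).symm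
          _ ≤ σ * (m:ℝ)^α := by
              have := Real.rpow_le_rpow (gg_nonneg hσ hkc0) hm1 hα0.le
              nlinarith
      · calc σ * (m:ℝ)^α < σ * (gg σ α ((k:ℝ)+d))^α := by
              have := Real.rpow_lt_rpow (Nat.cast_nonneg m) hm2 hα0
              nlinarith
          _ = (k:ℝ)+d := f_gg hσ hα0 hkd0
    calc gg σ α ((k:ℝ)+d) - gg σ α ((k:ℝ)+c) - 1
        ≤ ((Finset.Ico ⌈gg σ α ((k:ℝ)+c)⌉₊ ⌈gg σ α ((k:ℝ)+d)⌉₊).card : ℝ) :=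
          lemB (gg_nonneg hσ (by positivity))
      _ ≤ ((T k).card : ℝ) := by exact_mod_cast Finset.card_le_card hsub
  -- telescoping and convexity
  have htel : ∑ k ∈ Finset.Ico k0 M, (gg σ α (k:ℝ) - gg σ α ((k:ℝ)-1))
      = gg σ α ((M:ℝ)-1) - gg σ α ((k0:ℝ)-1) := by
    rw [Finset.sum_Ico_eq_sum_range]
    have he : ∀ i : ℕ, gg σ α ((k0+i : ℕ):ℝ) - gg σ α (((k0+i:ℕ):ℝ)-1)
        = (fun j : ℕ => gg σ α ((k0:ℝ) - 1 + j)) (i+1) - (fun j : ℕ => gg σ α ((k0:ℝ) - 1 + j)) i := by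
      intro i
      simp only
      congr 1 <;> · congr 1; push_cast; ring
    rw [Finset.sum_congr rfl (fun i _ => he i),
      Finset.sum_range_sub (f := fun j : ℕ => gg σ α ((k0:ℝ) - 1 + ↑j))]
    have h1 : ((M - k0 : ℕ):ℝ) = (M:ℝ) - k0 := by
      push_cast [Nat.cast_sub hk0M]; ring_nf
    congr 1
    · rw [h1]; ring
    · simp
  have hconv : ∀ k ∈ Finset.Ico k0 M,
      (d-c) * (gg σ α (k:ℝ) - gg σ α ((k:ℝ)-1)) - 1
        ≤ gg σ α ((k:ℝ)+d) - gg σ α ((k:ℝ)+c) - 1 := by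
    intro k hk
    rw [Finset.mem_Ico] at hk
    have : (1:ℝ) ≤ (k:ℝ) := by exact_mod_cast le_trans hk0pos hk.1
    linarith [conv_low hσ hα0 hα1 hc hcd hd this]
  have hfinal : ∑ k ∈ Finset.Ico k0 M,
      ((d-c) * (gg σ α (k:ℝ) - gg σ α ((k:ℝ)-1)) - 1) ≤ (s.card : ℝ) := by
    refine le_trans (Finset.sum_le_sum (fun k hk => le_trans (hconv k hk) (by linarith [hsum2 k hk]))) hsum1
  rw [Finset.sum_sub_distrib, ← Finset.mul_sum, htel] at hfinal
  simp only [Finset.sum_const, Nat.card_Ico, nsmul_eq_mul, mul_one] at hfinal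
  -- final numeric estimates
  have hMk0 : ((M - k0 : ℕ):ℝ) ≤ σ * (N:ℝ)^α := by
    have : ((M - k0 : ℕ):ℝ) ≤ (M:ℝ) := by exact_mod_cast Nat.sub_le M k0
    linarith
  have hA : gg σ α (σ*(N:ℝ)^α - 2) ≤ gg σ α ((M:ℝ)-1) :=
    gg_mono hσ hα0 (by linarith) (by linarith)
  have hB : gg σ α ((k0:ℝ)-1) ≤ 1 := by
    rw [← hg1]
    have h9 : (1:ℝ) ≤ (k0:ℝ) := by exact_mod_cast hk0pos
    exact gg_mono hσ hα0 (by linarith) (by linarith)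
  have hdc : 0 ≤ d - c := by linarith
  have p1 := mul_le_mul_of_nonneg_left hA hdc
  have p2 := mul_le_mul_of_nonneg_left hB hdc
  linarith [hfinal, hMk0, p1, p2]

lemma idlem {σ α : ℝ} (hσ : 0 < σ) (hα0 : 0 < α) (u : ℝ) (N : ℕ) (hN : 1 ≤ N)
    (hu : 0 ≤ σ * (N:ℝ)^α + u) :
    gg σ α (σ*(N:ℝ)^α + u) / (N:ℝ) = (1 + (u/σ) * (N:ℝ)^(-α))^(1/α) := by
  have hN0 : (0:ℝ) < (N:ℝ) := by exact_mod_cast hN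
  have hNα : (0:ℝ) < (N:ℝ)^α := Real.rpow_pos_of_pos hN0 _
  have h1 : gg σ α (σ*(N:ℝ)^α + u) = ((σ*(N:ℝ)^α + u)/σ)^(1/α) := by
    rw [gg, Real.div_rpow hu hσ.le]
  have h2 : (σ*(N:ℝ)^α + u)/σ = (N:ℝ)^α + u/σ := by field_simp
  have h3 : (N:ℝ) = ((N:ℝ)^α)^(1/α) := by
    rw [← Real.rpow_mul hN0.le, mul_one_div, div_self hα0.ne', Real.rpow_one]
  have h4 : (N:ℝ)^α + u/σ = (1 + (u/σ) * (N:ℝ)^(-α)) * (N:ℝ)^α := by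
    rw [Real.rpow_neg hN0.le]
    field_simp
  have h5 : (0:ℝ) ≤ 1 + (u/σ) * (N:ℝ)^(-α) := by
    have : (0:ℝ) ≤ (N:ℝ)^α + u/σ := by
      rw [← h2]; positivity
    rw [h4] at this
    nlinarith
  rw [h1, h2, h4, Real.mul_rpow h5 hNα.le, ← h3, mul_div_assoc, div_self hN0.ne', mul_one]

lemma lim_rpow_nat {α : ℝ} (hα0 : 0 < α) :
    Filter.Tendsto (fun N : ℕ => (N:ℝ)^(-α)) atTop (nhds 0) :=
  (tendsto_rpow_neg_atTop hα0).comp tendsto_natCast_atTop_atTop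

lemma lim_one {σ α u : ℝ} (hα0 : 0 < α) :
    Filter.Tendsto (fun N : ℕ => (1 + (u/σ) * (N:ℝ)^(-α))^(1/α)) atTop (nhds 1) := by
  have h1 : Filter.Tendsto (fun N : ℕ => 1 + (u/σ) * (N:ℝ)^(-α)) atTop (nhds 1) := by
    have := ((lim_rpow_nat hα0).const_mul (u/σ)).const_add 1
    simpa using this
  have h2 := (Real.continuousAt_rpow_const 1 (1/α) (Or.inl one_ne_zero)).tendsto.comp h1
  simpa [Function.comp_def] using h2

lemma lim_ratio {σ α : ℝ} (hα0 : 0 < α) (hα1 : α < 1) :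
    Filter.Tendsto (fun N : ℕ => σ * (N:ℝ)^α / (N:ℝ)) atTop (nhds 0) := by
  have h1 : Filter.Tendsto (fun N : ℕ => σ * (N:ℝ)^(α-1)) atTop (nhds 0) := by
    have h2 : Filter.Tendsto (fun N : ℕ => (N:ℝ)^(-(1-α))) atTop (nhds 0) :=
      (tendsto_rpow_neg_atTop (by linarith)).comp tendsto_natCast_atTop_atTop
    have h3 := h2.const_mul σ
    simp only [mul_zero] at h3
    convert h3 using 3
    ring_nf
  apply h1.congr'
  filter_upwards [eventually_ge_atTop 1] with N hN
  have hN0 : (0:ℝ) < (N:ℝ) := by exact_mod_cast hN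
  rw [Real.rpow_sub hN0, Real.rpow_one, mul_div_assoc]

lemma lim_inv_nat : Filter.Tendsto (fun N : ℕ => 1/(N:ℝ)) atTop (nhds 0) :=
  tendsto_one_div_atTop_nhds_zero_nat

lemma main_pos {σ α c d : ℝ} (hσ : 0 < σ) (hα0 : 0 < α) (hα1 : α < 1)
    (hc : 0 ≤ c) (hcd : c ≤ d) (hd : d ≤ 1) :
    Filter.Tendsto
      (fun N : ℕ =>
        (((Finset.Icc 1 N).filter
          (fun n : ℕ => Int.fract (σ * (n : ℝ) ^ α) ∈ Set.Icc c d)).card : ℝ) / (N : ℝ))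
      Filter.atTop (nhds (d - c)) := by
  set A : ℕ → ℝ := fun N => (((Finset.Icc 1 N).filter
    (fun n : ℕ => Int.fract (σ * (n : ℝ) ^ α) ∈ Set.Icc c d)).card : ℝ) with hA
  set L : ℕ → ℝ := fun N =>
    (d-c) * ((1 + (-2/σ) * (N:ℝ)^(-α))^(1/α) - 1/(N:ℝ)) - σ*(N:ℝ)^α/(N:ℝ) with hL
  set U : ℕ → ℝ := fun N =>
    (d-c) * (1 + (3/σ) * (N:ℝ)^(-α))^(1/α) + (σ*(N:ℝ)^α/(N:ℝ) + 2/(N:ℝ)) with hU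
  have TL : Filter.Tendsto L atTop (nhds (d-c)) := by
    have h1 := ((lim_one (σ := σ) (u := -2) hα0).sub lim_inv_nat).const_mul (d-c)
    have h2 := h1.sub (lim_ratio (σ := σ) hα0 hα1)
    have hval : (d-c) * ((1:ℝ) - 0) - 0 = d - c := by ring
    rw [← hval]
    exact h2
  have TU : Filter.Tendsto U atTop (nhds (d-c)) := by
    have h3 : Filter.Tendsto (fun N : ℕ => 2/(N:ℝ)) atTop (nhds 0) := by
      have := lim_inv_nat.const_mul (2:ℝ)
      simpa [div_eq_mul_inv, mul_comm] using this
    have h1 := ((lim_one (σ := σ) (u := 3) hα0).const_mul (d-c)).add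
      ((lim_ratio (σ := σ) hα0 hα1).add h3)
    have hval : (d-c) * (1:ℝ) + ((0:ℝ) + 0) = d - c := by ring
    rw [← hval]
    exact h1
  have hevN : ∀ᶠ N : ℕ in atTop, σ + 4 ≤ σ * (N:ℝ)^α := by
    have h := ((tendsto_rpow_atTop hα0).comp tendsto_natCast_atTop_atTop).eventually_ge_atTop
      ((σ+4)/σ)
    filter_upwards [h] with N hN
    have h2 : σ * ((σ+4)/σ) ≤ σ * (N:ℝ)^α := by
      apply mul_le_mul_of_nonneg_left _ hσ.le
      exact hN
    rwa [mul_div_cancel₀ _ hσ.ne'] at h2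
  refine tendsto_of_tendsto_of_tendsto_of_le_of_le' TL TU ?_ ?_
  · -- L ≤ A / N eventually
    filter_upwards [eventually_ge_atTop 1, hevN] with N hN1 hN2
    have hN0 : (0:ℝ) < (N:ℝ) := by exact_mod_cast hN1
    have hcore := core_low hσ hα0 hα1 hc hcd hd N hN2
    have hdiv : ((d-c) * (gg σ α (σ*(N:ℝ)^α - 2) - 1) - σ*(N:ℝ)^α) / (N:ℝ) ≤ A N / (N:ℝ) := by
      apply div_le_div_of_nonneg_right hcore hN0.le
    have hid : gg σ α (σ*(N:ℝ)^α - 2) / (N:ℝ) = (1 + (-2/σ) * (N:ℝ)^(-α))^(1/α) := by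
      have e : σ*(N:ℝ)^α - 2 = σ*(N:ℝ)^α + (-2) := by ring
      rw [e, idlem hσ hα0 (-2) N hN1 (by linarith)]
    calc L N = ((d-c) * (gg σ α (σ*(N:ℝ)^α - 2) - 1) - σ*(N:ℝ)^α) / (N:ℝ) := by
          rw [hL]
          simp only
          rw [← hid]
          field_simp
          try ring
      _ ≤ A N / (N:ℝ) := hdiv
  · -- A / N ≤ U eventually
    filter_upwards [eventually_ge_atTop 1] with N hN1
    have hN0 : (0:ℝ) < (N:ℝ) := by exact_mod_cast hN1
    have hfN : (0:ℝ) ≤ σ * (N:ℝ)^α := by positivity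
    have hcore := core_up hσ hα0 hα1 hc hcd hd N
    have hK : ((⌈σ * (N:ℝ)^α⌉₊ : ℝ)) ≤ σ * (N:ℝ)^α + 1 := (Nat.ceil_lt_add_one hfN).le
    have hmono : gg σ α ((⌈σ * (N:ℝ)^α⌉₊ : ℝ) + 2) ≤ gg σ α (σ*(N:ℝ)^α + 3) :=
      gg_mono hσ hα0 (by positivity) (by linarith)
    have hstep : A N ≤ (d-c) * gg σ α (σ*(N:ℝ)^α + 3) + (σ*(N:ℝ)^α + 2) := by
      have := mul_le_mul_of_nonneg_left hmono (by linarith : (0:ℝ) ≤ d - c)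
      linarith
    have hid : gg σ α (σ*(N:ℝ)^α + 3) / (N:ℝ) = (1 + (3/σ) * (N:ℝ)^(-α))^(1/α) :=
      idlem hσ hα0 3 N hN1 (by linarith)
    calc A N / (N:ℝ) ≤ ((d-c) * gg σ α (σ*(N:ℝ)^α + 3) + (σ*(N:ℝ)^α + 2)) / (N:ℝ) := by
          apply div_le_div_of_nonneg_right hstep hN0.le
      _ = U N := by
          rw [hU]
          simp only
          rw [← hid]
          field_simp
          try ring

lemma card_int_hits {τ α : ℝ} (hτ : 0 < τ) (hα0 : 0 < α) (N : ℕ) :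
    (((Finset.Icc 1 N).filter (fun n : ℕ => Int.fract (τ * (n:ℝ)^α) = 0)).card : ℝ)
      ≤ τ * (N:ℝ)^α + 1 := by
  classical
  set E := (Finset.Icc 1 N).filter (fun n : ℕ => Int.fract (τ * (n:ℝ)^α) = 0) with hE
  have key : ∀ n ∈ E, τ * (n:ℝ)^α = ((⌊τ * (n:ℝ)^α⌋₊ : ℕ) : ℝ) := by
    intro n hn
    rw [hE, Finset.mem_filter] at hn
    have h0 : (0:ℝ) ≤ τ * (n:ℝ)^α := by positivity
    have h1 : τ * (n:ℝ)^α = (⌊τ * (n:ℝ)^α⌋ : ℝ) := by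
      have := hn.2
      unfold Int.fract at this
      linarith
    rw [natCast_floor_eq_intCast_floor h0]
    exact h1
  have hcard : E.card ≤ ⌊τ * (N:ℝ)^α⌋₊ + 1 := by
    have := Finset.card_le_card_of_injOn (s := E) (f := fun n : ℕ => ⌊τ * (n:ℝ)^α⌋₊)
      (t := Finset.range (⌊τ * (N:ℝ)^α⌋₊ + 1)) ?_ ?_
    · simpa using this
    · intro n hn
      rw [Finset.mem_coe, hE, Finset.mem_filter, Finset.mem_Icc] at hn
      rw [Finset.mem_coe, Finset.mem_range, Nat.lt_succ_iff]
      apply Nat.floor_mono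
      have : (n:ℝ) ≤ (N:ℝ) := by exact_mod_cast hn.1.2
      have := Real.rpow_le_rpow (Nat.cast_nonneg n) this hα0.le
      nlinarith
    · intro n hn m hm hnm
      have e1 := key n (Finset.mem_coe.mp hn)
      have e2 := key m (Finset.mem_coe.mp hm)
      simp only at hnm
      rw [hnm] at e1
      have : τ * (n:ℝ)^α = τ * (m:ℝ)^α := e1.trans e2.symm
      have h2 : (n:ℝ)^α = (m:ℝ)^α := by
        exact mul_left_cancel₀ hτ.ne' this
      by_contra hne
      rcases Nat.lt_or_ge n m with h | h
      · have := Real.rpow_lt_rpow (Nat.cast_nonneg n) (Nat.cast_lt.mpr h) hα0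
        linarith
      · have h3 : m < n := by omega
        have := Real.rpow_lt_rpow (Nat.cast_nonneg m) (Nat.cast_lt.mpr h3) hα0
        linarith
  calc (E.card : ℝ) ≤ (⌊τ * (N:ℝ)^α⌋₊ : ℝ) + 1 := by exact_mod_cast hcard
    _ ≤ τ * (N:ℝ)^α + 1 := by
        have : (⌊τ * (N:ℝ)^α⌋₊ : ℝ) ≤ τ * (N:ℝ)^α := Nat.floor_le (by positivity)
        linarith

lemma lim_hits {τ α : ℝ} (hτ : 0 < τ) (hα0 : 0 < α) (hα1 : α < 1) :
    Filter.Tendsto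
      (fun N : ℕ => (((Finset.Icc 1 N).filter
        (fun n : ℕ => Int.fract (τ * (n:ℝ)^α) = 0)).card : ℝ) / (N:ℝ))
      Filter.atTop (nhds 0) := by
  have TU : Filter.Tendsto (fun N : ℕ => τ * (N:ℝ)^α/(N:ℝ) + 1/(N:ℝ)) atTop (nhds 0) := by
    have := (lim_ratio (σ := τ) hα0 hα1).add lim_inv_nat
    simpa using this
  have T0 : Filter.Tendsto (fun _ : ℕ => (0:ℝ)) atTop (nhds 0) := tendsto_const_nhds
  refine tendsto_of_tendsto_of_tendsto_of_le_of_le' T0 TU ?_ ?_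
  · filter_upwards with N
    positivity
  · filter_upwards [eventually_ge_atTop 1] with N hN1
    have hN0 : (0:ℝ) < (N:ℝ) := by exact_mod_cast hN1
    have h := card_int_hits hτ hα0 N
    calc (((Finset.Icc 1 N).filter
        (fun n : ℕ => Int.fract (τ * (n:ℝ)^α) = 0)).card : ℝ) / (N:ℝ)
        ≤ (τ * (N:ℝ)^α + 1)/(N:ℝ) := div_le_div_of_nonneg_right h hN0.le
      _ = τ * (N:ℝ)^α/(N:ℝ) + 1/(N:ℝ) := by ring

lemma main_neg {σ α c d : ℝ} (hneg : σ < 0) (hα0 : 0 < α) (hα1 : α < 1)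
    (hc : 0 ≤ c) (hcd : c ≤ d) (hd : d ≤ 1) :
    Filter.Tendsto
      (fun N : ℕ =>
        (((Finset.Icc 1 N).filter
          (fun n : ℕ => Int.fract (σ * (n : ℝ) ^ α) ∈ Set.Icc c d)).card : ℝ) / (N : ℝ))
      Filter.atTop (nhds (d - c)) := by
  classical
  set τ : ℝ := -σ with hτdef
  have hτ : 0 < τ := by simp [hτdef]; linarith
  have hB := main_pos (σ := τ) (c := 1-d) (d := 1-c) hτ hα0 hα1
    (by linarith) (by linarith) (by linarith)
  have hE := lim_hits hτ hα0 hα1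
  set A : ℕ → ℝ := fun N => (((Finset.Icc 1 N).filter
    (fun n : ℕ => Int.fract (σ * (n : ℝ) ^ α) ∈ Set.Icc c d)).card : ℝ) with hA
  set B : ℕ → ℝ := fun N => (((Finset.Icc 1 N).filter
    (fun n : ℕ => Int.fract (τ * (n : ℝ) ^ α) ∈ Set.Icc (1-d) (1-c))).card : ℝ) with hB'
  set E : ℕ → ℝ := fun N => (((Finset.Icc 1 N).filter
    (fun n : ℕ => Int.fract (τ * (n:ℝ)^α) = 0)).card : ℝ) with hE'
  have hcomp : ∀ N : ℕ, |A N - B N| ≤ E N := by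
    intro N
    have hsub1 : (Finset.Icc 1 N).filter
        (fun n : ℕ => Int.fract (σ * (n : ℝ) ^ α) ∈ Set.Icc c d)
        ⊆ ((Finset.Icc 1 N).filter
          (fun n : ℕ => Int.fract (τ * (n : ℝ) ^ α) ∈ Set.Icc (1-d) (1-c)))
          ∪ ((Finset.Icc 1 N).filter (fun n : ℕ => Int.fract (τ * (n:ℝ)^α) = 0)) := by
      intro n hn
      rw [Finset.mem_filter] at hn
      rw [Finset.mem_union, Finset.mem_filter, Finset.mem_filter]
      by_cases hz : Int.fract (τ * (n:ℝ)^α) = 0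
      · exact Or.inr ⟨hn.1, hz⟩
      · left
        refine ⟨hn.1, ?_⟩
        have hneg' : σ * (n:ℝ)^α = -(τ * (n:ℝ)^α) := by rw [hτdef]; ring
        have := Int.fract_neg hz
        rw [hneg', this] at hn
        rw [Set.mem_Icc] at *
        obtain ⟨h1, h2⟩ := hn.2
        constructor <;> linarith
    have hsub2 : (Finset.Icc 1 N).filter
        (fun n : ℕ => Int.fract (τ * (n : ℝ) ^ α) ∈ Set.Icc (1-d) (1-c))
        ⊆ ((Finset.Icc 1 N).filter
          (fun n : ℕ => Int.fract (σ * (n : ℝ) ^ α) ∈ Set.Icc c d))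
          ∪ ((Finset.Icc 1 N).filter (fun n : ℕ => Int.fract (τ * (n:ℝ)^α) = 0)) := by
      intro n hn
      rw [Finset.mem_filter] at hn
      rw [Finset.mem_union, Finset.mem_filter, Finset.mem_filter]
      by_cases hz : Int.fract (τ * (n:ℝ)^α) = 0
      · exact Or.inr ⟨hn.1, hz⟩
      · left
        refine ⟨hn.1, ?_⟩
        have hneg' : σ * (n:ℝ)^α = -(τ * (n:ℝ)^α) := by rw [hτdef]; ring
        have hfr := Int.fract_neg hz
        rw [hneg', hfr]
        rw [Set.mem_Icc] at *
        obtain ⟨h1, h2⟩ := hn.2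
        constructor <;> linarith
    have c1 : A N ≤ B N + E N := by
      have := Finset.card_le_card hsub1
      have h2 := Finset.card_union_le ((Finset.Icc 1 N).filter
          (fun n : ℕ => Int.fract (τ * (n : ℝ) ^ α) ∈ Set.Icc (1-d) (1-c)))
        ((Finset.Icc 1 N).filter (fun n : ℕ => Int.fract (τ * (n:ℝ)^α) = 0))
      rw [hA, hB', hE']
      push_cast
      exact_mod_cast le_trans this h2
    have c2 : B N ≤ A N + E N := by
      have := Finset.card_le_card hsub2
      have h2 := Finset.card_union_le ((Finset.Icc 1 N).filter
          (fun n : ℕ => Int.fract (σ * (n : ℝ) ^ α) ∈ Set.Icc c d))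
        ((Finset.Icc 1 N).filter (fun n : ℕ => Int.fract (τ * (n:ℝ)^α) = 0))
      rw [hA, hB', hE']
      push_cast
      exact_mod_cast le_trans this h2
    rw [abs_sub_le_iff]
    constructor <;> linarith
  have hBlim : Filter.Tendsto (fun N => B N / N) atTop (nhds (d - c)) := by
    have : (1-c) - (1-d) = d - c := by ring
    rw [← this]
    exact hB
  refine tendsto_of_tendsto_of_tendsto_of_le_of_le'
    (f := fun N : ℕ => A N / (N:ℝ))
    (g := fun N : ℕ => B N / N - E N / N)
    (h := fun N : ℕ => B N / N + E N / N) ?_ ?_ ?_ ?_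
  · have := hBlim.sub hE
    simpa using this
  · have := hBlim.add hE
    simpa using this
  · filter_upwards [eventually_ge_atTop 1] with N hN1
    have hN0 : (0:ℝ) < (N:ℝ) := by exact_mod_cast hN1
    have := hcomp N
    rw [abs_sub_le_iff] at this
    have h1 : B N - E N ≤ A N := by linarith [this.2]
    calc B N / N - E N / N = (B N - E N)/(N:ℝ) := by ring
      _ ≤ A N / N := div_le_div_of_nonneg_right h1 hN0.le
  · filter_upwards [eventually_ge_atTop 1] with N hN1
    have hN0 : (0:ℝ) < (N:ℝ) := by exact_mod_cast hN1
    have := hcomp N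
    rw [abs_sub_le_iff] at this
    have h1 : A N ≤ B N + E N := by linarith [this.1]
    calc A N / N ≤ (B N + E N)/(N:ℝ) := div_le_div_of_nonneg_right h1 hN0.le
      _ = B N / N + E N / N := by ring

open scoped Classical in
lemma coe_filter_card (P : ℝ → Prop) [DecidablePred P] (N : ℕ) :
    (Finset.filter P (do
        let a ← Finset.Icc 1 N
        pure ((a : ℕ) : ℝ))).card
      = (Finset.filter (fun n : ℕ => P ((n : ℕ) : ℝ)) (Finset.Icc 1 N)).card := by
  have h1 : (do
        let a ← Finset.Icc 1 N
        pure ((a : ℕ) : ℝ)) = (Finset.Icc 1 N).image (fun a : ℕ => (a : ℝ)) := by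
    show (Finset.Icc 1 N).sup (fun a : ℕ => pure ((a:ℕ):ℝ)) = _
    rw [Finset.sup_eq_biUnion]
    ext x
    simp only [Finset.mem_biUnion, Finset.mem_image, Finset.mem_Icc, Finset.pure_def,
      Finset.mem_singleton]
    constructor
    · rintro ⟨a, ha, rfl⟩; exact ⟨a, ha, rfl⟩
    · rintro ⟨a, ha, rfl⟩; exact ⟨a, ha, rfl⟩
  rw [h1, Finset.filter_image,
    Finset.card_image_of_injective _ (fun a b h => by exact_mod_cast h)]

open scoped Classical in
theorem stmt11 (σ α : ℝ) (hσ : σ ≠ 0) (hα : α ∈ Set.Ioo (0:ℝ) 1) :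
    ∀ c d : ℝ, 0 ≤ c → c ≤ d → d ≤ 1 →
      Filter.Tendsto
        (fun N : ℕ =>
          ((Finset.Icc 1 N).filter
            (fun n => Int.fract (σ * (n : ℝ) ^ α) ∈ Set.Icc c d)).card / (N : ℝ))
        Filter.atTop (nhds (d - c)) := by
  obtain ⟨hα0, hα1⟩ := hα
  intro c d hc hcd hd
  rcases lt_or_gt_of_ne hσ with hneg | hpos
  · refine (main_neg hneg hα0 hα1 hc hcd hd).congr fun N => ?_
    rw [coe_filter_card (P := fun x : ℝ => Int.fract (σ * x ^ α) ∈ Set.Icc c d) (N := N)]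
  · refine (main_pos hpos hα0 hα1 hc hcd hd).congr fun N => ?_
    rw [coe_filter_card (P := fun x : ℝ => Int.fract (σ * x ^ α) ∈ Set.Icc c d) (N := N)]
end
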